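/- arXiv:2401.03861 — 8 statements merged into one kernel-verified Lean document; each statement's English description precedes it below -/
import Mathlib

section
/- Every matroid satisfies the simultaneous exchange property: for any two bases S and S' of the matroid and any element e ∈ S \ S', there exists an element f ∈ S' \ S such that both (S \ {e}) ∪ {f} and (S' \ {f}) ∪ {e} are bases of the matroid. -/
open Set

/-- Symmetric (simultaneous) base exchange for a finite matroid, at the `Set` level. -/
lemma Matroid.base_symm_exchange {α : Type*} (M : Matroid α) [M.Finite]
    {A B : Set α} (hA : M.IsBase A) (hB : M.IsBase B) {e : α} (heA : e ∈ A) (heB : e ∉ B) :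
    ∃ f, f ∈ B ∧ f ∉ A ∧ M.IsBase (insert f (A \ {e})) ∧ M.IsBase (insert e (B \ {f})) := by
  classical
  set K : Set α := {x ∈ B | M.IsBase (insert e (B \ {x}))} with hKdef
  have hKB : K ⊆ B := fun x hx => hx.1
  have heE : e ∈ M.E := hA.subset_ground heA
  -- Key claim: `e` lies in the closure of `K`.
  have heK : e ∈ M.closure K := by
    by_contra hcl
    have hKind : M.Indep K := hB.indep.subset hKB
    have hIeK : M.Indep (insert e K) := by
      rw [hKind.insert_indep_iff_of_notMem (fun h => heB (hKB h))]
      exact ⟨heE, hcl⟩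
    obtain ⟨I, hI, hsub⟩ := hIeK.subset_isBasis_of_subset
      (insert_subset_insert hKB) (insert_subset heE hB.subset_ground)
    have hdep : ¬ M.Indep (insert e B) := (hB.insert_dep ⟨heE, heB⟩).not_indep
    have hne : I ≠ insert e B := fun h => hdep (h ▸ hI.indep)
    obtain ⟨x, hxB, hxI⟩ : ∃ x, x ∈ insert e B ∧ x ∉ I := by
      by_contra h
      push_neg at h
      exact hne (hI.subset.antisymm h)
    have heI : e ∈ I := hsub (mem_insert _ _)
    have hxe : x ≠ e := fun h => hxI (h ▸ heI)
    have hxB' : x ∈ B := by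
      rcases hxB with h | h
      · exact absurd h hxe
      · exact h
    set D : Set α := insert e (B \ {x}) with hDdef
    have hID : I ⊆ D := by
      intro y hy
      have hy' : y ∈ insert e B := hI.subset hy
      have hyx : y ≠ x := fun h => hxI (h ▸ hy)
      rcases hy' with h | h
      · exact h ▸ mem_insert _ _
      · exact mem_insert_of_mem _ ⟨h, hyx⟩
    have hDE : D ⊆ M.E := insert_subset heE (diff_subset.trans hB.subset_ground)
    have hBclD : B ⊆ M.closure D :=
      fun y hy => M.closure_subset_closure hID (hI.subset_closure (mem_insert_of_mem _ hy))
    have hDspan : M.Spanning D := by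
      refine ⟨?_, hDE⟩
      refine (M.closure_subset_ground D).antisymm ?_
      rw [← hB.closure_eq]
      exact M.closure_subset_closure_of_subset_closure hBclD
    obtain ⟨B₀, hB₀, hB₀D⟩ := hDspan.exists_isBase_subset
    have hDfin : D.Finite := M.ground_finite.subset hDE
    have hcard : D.encard ≤ B₀.encard := by
      have h1 : D.encard = B.encard := by
        rw [hDdef, encard_insert_of_notMem (fun h => heB h.1),
          encard_diff_singleton_add_one hxB']
      rw [h1, hB.encard_eq_encard_of_isBase hB₀]
    have hB₀eq : B₀ = D := hDfin.eq_of_subset_of_encard_le' hB₀D hcard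
    have hxK : x ∈ K := ⟨hxB', by rwa [hB₀eq] at hB₀⟩
    exact hxI (hsub (mem_insert_of_mem _ hxK))
  -- Now pick `f ∈ K` outside the closure of `A \ {e}`.
  have heA' : e ∉ M.closure (A \ {e}) := hA.indep.notMem_closure_diff_of_mem heA
  have hnsub : ¬ K ⊆ M.closure (A \ {e}) := fun h =>
    heA' (M.closure_subset_closure_of_subset_closure h heK)
  obtain ⟨f, hfK, hfcl⟩ := not_subset.1 hnsub
  have hfB : f ∈ B := hfK.1
  have hfe : f ≠ e := fun h => heB (h ▸ hfB)
  have hfE : f ∈ M.E := hB.subset_ground hfB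
  have hfA : f ∉ A := by
    intro h
    exact hfcl (M.mem_closure_of_mem ⟨h, hfe⟩ (diff_subset.trans hA.subset_ground))
  have hindep : M.Indep (insert f (A \ {e})) := by
    rw [(hA.indep.subset diff_subset).insert_indep_iff_of_notMem (fun h => hfA h.1)]
    exact ⟨hfE, hfcl⟩
  have hbase1 : M.IsBase (insert f (A \ {e})) := by
    have := hA.exchange_isBase_of_indep' heA hfA (by rwa [← insert_diff_singleton_comm hfe])
    rwa [← insert_diff_singleton_comm hfe] at this
  exact ⟨f, hfB, hfA, hbase1, hfK.2⟩

/-- A matroid on the (finite) ground set `E`, given by its base family `B`: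
a nonempty family of finite subsets of `E` satisfying the exchange axiom (EX). -/
def IsBaseFamily {E : Type*} [DecidableEq E] (B : Finset (Finset E)) : Prop :=
  B.Nonempty ∧
    ∀ S ∈ B, ∀ S' ∈ B, ∀ e ∈ S \ S',
      ∃ f ∈ S' \ S, insert f (S.erase e) ∈ B

/-- Every matroid satisfies the simultaneous exchange property (EX±):
for bases `S, S'` and `e ∈ S \ S'` there is `f ∈ S' \ S` such that both
`(S \ {e}) ∪ {f}` and `(S' \ {f}) ∪ {e}` are bases. -/
theorem matroid_simultaneous_exchange {E : Type*} [Fintype E] [DecidableEq E]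
    (B : Finset (Finset E)) (hB : IsBaseFamily B)
    {S S' : Finset E} (hS : S ∈ B) (hS' : S' ∈ B)
    {e : E} (he : e ∈ S \ S') :
    ∃ f ∈ S' \ S, insert f (S.erase e) ∈ B ∧ insert e (S'.erase f) ∈ B := by
  classical
  obtain ⟨hne, hex⟩ := hB
  -- Build the mathlib matroid whose bases are the coercions of members of `B`.
  have hexch : Matroid.ExchangeProperty (fun X : Set E => ∃ T ∈ B, (T : Set E) = X) := by
    rintro X Y ⟨T, hT, rfl⟩ ⟨T', hT', rfl⟩ a ha
    obtain ⟨f, hf, hf'⟩ := hex T hT T' hT' a (by simpa using ha)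
    refine ⟨f, by simpa using hf, insert f (T.erase a), hf', ?_⟩
    push_cast
    rfl
  obtain ⟨T₀, hT₀⟩ := hne
  set M : Matroid E := Matroid.ofIsBaseOfFinite (Set.finite_univ)
    (fun X : Set E => ∃ T ∈ B, (T : Set E) = X)
    ⟨(T₀ : Set E), T₀, hT₀, rfl⟩ hexch (fun _ _ => Set.subset_univ _) with hM
  haveI : M.Finite := Matroid.ofBaseOfFinite_finite _ _ _ _ _
  have hbase : ∀ T : Finset E, M.IsBase (T : Set E) ↔ T ∈ B := by
    intro T
    rw [hM, Matroid.ofIsBaseOfFinite_isBase]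
    constructor
    · rintro ⟨T', hT', hTT'⟩
      rwa [Finset.coe_injective hTT'] at hT'
    · exact fun h => ⟨T, h, rfl⟩
  rw [Finset.mem_sdiff] at he
  obtain ⟨f, hfS', hfS, h1, h2⟩ := M.base_symm_exchange ((hbase S).2 hS) ((hbase S').2 hS')
    (by exact_mod_cast he.1) (by exact_mod_cast he.2)
  refine ⟨f, Finset.mem_sdiff.2 ⟨by exact_mod_cast hfS', by exact_mod_cast hfS⟩, ?_, ?_⟩
  · rw [← hbase]
    convert h1 using 1
    push_cast
    rfl
  · rw [← hbase]
    convert h2 using 1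
    push_cast
    rfl
end

section
/- Let (E, 𝒮) be a matroid and let c_e ∈ ℝ be a cost for each element e ∈ E. Then any base S ∈ 𝒮 that minimizes the total cost Σ_{e∈S} c_e among all bases in 𝒮 also minimizes the maximum cost max_{e∈S} c_e among all bases in 𝒮. -/
/-- In a matroid with element costs `c`, a base minimizing the total cost
`∑ e ∈ S, c e` among all bases also minimizes the maximum cost
`max_{e ∈ S} c e` among all bases. -/
theorem min_total_cost_base_minimizes_max_cost {E : Type*} [Fintype E] [DecidableEq E]
    (B : Finset (Finset E)) (hB : IsBaseFamily B) (c : E → ℝ)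
    {S : Finset E} (hS : S ∈ B)
    (hmin : ∀ T ∈ B, ∑ e ∈ S, c e ≤ ∑ e ∈ T, c e) :
    ∀ T ∈ B, S.sup (fun e => (c e : WithBot ℝ)) ≤ T.sup (fun e => (c e : WithBot ℝ)) := by
  intro T hT
  by_contra hlt
  push_neg at hlt
  rcases S.eq_empty_or_nonempty with rfl | hne
  · simp at hlt
  obtain ⟨e, heS, hesup⟩ := Finset.exists_mem_eq_sup S hne (fun e => (c e : WithBot ℝ))
  have heT : e ∉ T := by
    intro heT
    have h := Finset.le_sup (f := fun x => (c x : WithBot ℝ)) heT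
    rw [← hesup] at h
    exact absurd h (not_le_of_gt hlt)
  obtain ⟨f, hf, hS'⟩ := hB.2 S hS T hT e (Finset.mem_sdiff.mpr ⟨heS, heT⟩)
  rw [Finset.mem_sdiff] at hf
  have hcf : c f < c e := by
    have h1 : (c f : WithBot ℝ) ≤ T.sup (fun e => (c e : WithBot ℝ)) :=
      Finset.le_sup (f := fun x => (c x : WithBot ℝ)) hf.1
    have h2 : (c f : WithBot ℝ) < (c e : WithBot ℝ) :=
      lt_of_le_of_lt h1 (hesup ▸ hlt)
    exact_mod_cast h2
  have hsum : ∑ x ∈ insert f (S.erase e), c x = c f + (∑ x ∈ S, c x - c e) := by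
    rw [Finset.sum_insert (by simp [hf.2]), Finset.sum_erase_eq_sub heS]
  have := hmin _ hS'
  rw [hsum] at this
  linarith
end

section
/- Every weighted matroid congestion game possesses a pure Nash equilibrium. -/
open Finset

/-- The set `N_e(σ)` of players choosing resource `e` in the strategy profile `σ`. -/
def playersOn {N E : Type*} [Fintype N] [DecidableEq E]
    (σ : N → Finset E) (e : E) : Finset N :=
  Finset.univ.filter (fun i => e ∈ σ i)

/-- The cost `γ_i(σ) = ∑_{e ∈ σ i} c_e(w(N_e(σ)))` imposed on player `i`
in a weighted congestion game. -/
noncomputable def weightedCost {N E : Type*} [Fintype N] [DecidableEq E]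
    (w : N → NNReal) (c : E → NNReal → NNReal)
    (σ : N → Finset E) (i : N) : NNReal :=
  ∑ e ∈ σ i, c e (∑ j ∈ playersOn σ e, w j)


lemma exists_improving_swap {E : Type*} [DecidableEq E]
    {B : Finset (Finset E)} (hB : IsBaseFamily B) (d : E → NNReal)
    {S S' : Finset E} (hS : S ∈ B) (hS' : S' ∈ B)
    (hlt : ∑ g ∈ S', d g < ∑ g ∈ S, d g) :
    ∃ e ∈ S, ∃ f ∉ S, insert f (S.erase e) ∈ B ∧ d f < d e := by
  classical
  by_contra hcon
  push_neg at hcon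
  -- hcon : ∀ e ∈ S, ∀ f ∉ S, insert f (S.erase e) ∈ B → d e ≤ d f
  obtain ⟨B0, hB0, hB0min⟩ := Finset.exists_min_image B (fun X => ∑ g ∈ X, d g) hB.1
  set M : Finset (Finset E) := B.filter (fun X => ∀ Y ∈ B, ∑ g ∈ X, d g ≤ ∑ g ∈ Y, d g) with hM
  have hB0M : B0 ∈ M := by
    simp only [hM, Finset.mem_filter]; exact ⟨hB0, hB0min⟩
  obtain ⟨Bs, hBsM, hBsmin⟩ := Finset.exists_min_image M (fun X => (X \ S).card) ⟨B0, hB0M⟩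
  rw [hM, Finset.mem_filter] at hBsM
  obtain ⟨hBsB, hBsw⟩ := hBsM
  by_cases hne : Bs = S
  · subst hne
    exact absurd (hBsw S' hS') (not_le.2 hlt)
  · -- Bs ≠ S
    have hdiffne : (Bs \ S).Nonempty := by
      rw [Finset.sdiff_nonempty]
      intro hsub
      -- Bs ⊆ S, Bs ≠ S, so S \ Bs nonempty; exchange gives contradiction
      obtain ⟨x, hx⟩ : (S \ Bs).Nonempty := by
        rw [Finset.sdiff_nonempty]
        intro hsub'
        exact hne (Finset.Subset.antisymm hsub (by intro y hy; exact hsub' hy))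
      obtain ⟨f, hf, -⟩ := hB.2 S hS Bs hBsB x hx
      rw [Finset.mem_sdiff] at hf
      exact hf.2 (hsub hf.1)
    obtain ⟨es, hes, hesmax⟩ := Finset.exists_max_image (Bs \ S) d hdiffne
    obtain ⟨f, hf, hBs2⟩ := hB.2 Bs hBsB S hS es hes
    rw [Finset.mem_sdiff] at hes hf
    have hfBs : f ∉ Bs.erase es := fun h => hf.2 (Finset.mem_of_mem_erase h)
    have hsum2 : ∑ g ∈ insert f (Bs.erase es), d g = d f + ∑ g ∈ Bs.erase es, d g :=
      Finset.sum_insert hfBs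
    have hsumBs : d es + ∑ g ∈ Bs.erase es, d g = ∑ g ∈ Bs, d g :=
      Finset.add_sum_erase Bs d hes.1
    have hle : d es ≤ d f := by
      have := hBsw _ hBs2
      rw [hsum2, ← hsumBs] at this
      exact le_of_add_le_add_right this
    have hlt' : d es < d f := by
      rcases lt_or_eq_of_le hle with h | h
      · exact h
      · exfalso
        have hMmem : insert f (Bs.erase es) ∈ M := by
          rw [hM, Finset.mem_filter]
          refine ⟨hBs2, fun Y hY => ?_⟩
          rw [hsum2, ← h, hsumBs]
          exact hBsw Y hY
        have hcard := hBsmin _ hMmem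
        have hset : insert f (Bs.erase es) \ S = (Bs \ S).erase es := by
          ext g
          simp only [Finset.mem_sdiff, Finset.mem_insert, Finset.mem_erase]
          constructor
          · rintro ⟨hg1 | hg2, hg3⟩
            · exact absurd (hg1 ▸ hf.1) hg3
            · exact ⟨hg2.1, hg2.2, hg3⟩
          · rintro ⟨hg1, hg2, hg3⟩
            exact ⟨Or.inr ⟨hg1, hg2⟩, hg3⟩
        rw [hset, Finset.card_erase_of_mem (Finset.mem_sdiff.2 hes)] at hcard
        have hpos : 0 < (Bs \ S).card := Finset.card_pos.2 hdiffne
        omega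
    -- now use local optimality on S with f ∈ S \ Bs
    obtain ⟨y, hy, hS3⟩ := hB.2 S hS Bs hBsB f (Finset.mem_sdiff.2 hf)
    rw [Finset.mem_sdiff] at hy
    have h1 : d f ≤ d y := hcon f hf.1 y hy.2 hS3
    have h2 : d y ≤ d es := hesmax y (Finset.mem_sdiff.2 hy)
    exact absurd (h1.trans h2) (not_le.2 hlt')

section Aux

variable {N E : Type*} [Fintype N] [DecidableEq N] [Fintype E] [DecidableEq E]

open scoped Classical in
/-- All possible resource-cost values in the game. -/
noncomputable def valsOf (w : N → NNReal) (c : E → NNReal → NNReal) : Finset NNReal :=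
  Finset.image (fun p : E × Finset N => c p.1 (∑ j ∈ p.2, w j)) Finset.univ

open scoped Classical in
/-- Rank of a value among all possible values. -/
noncomputable def rkOf (w : N → NNReal) (c : E → NNReal → NNReal) (v : NNReal) : ℕ :=
  ((valsOf w c).filter (fun x => x < v)).card

open scoped Classical in
lemma rkOf_mono (w : N → NNReal) (c : E → NNReal → NNReal) {u v : NNReal} (h : u ≤ v) :
    rkOf w c u ≤ rkOf w c v := by
  unfold rkOf
  apply Finset.card_le_card
  intro x hx
  rw [Finset.mem_filter] at hx ⊢
  exact ⟨hx.1, lt_of_lt_of_le hx.2 h⟩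

open scoped Classical in
lemma rkOf_strict (w : N → NNReal) (c : E → NNReal → NNReal) {u v : NNReal}
    (hu : u ∈ valsOf w c) (h : u < v) : rkOf w c u + 1 ≤ rkOf w c v := by
  have : rkOf w c u < rkOf w c v := by
    unfold rkOf
    apply Finset.card_lt_card
    rw [Finset.ssubset_iff_of_subset]
    · exact ⟨u, by rw [Finset.mem_filter]; exact ⟨hu, h⟩,
        by rw [Finset.mem_filter]; exact fun hx => lt_irrefl u hx.2⟩
    · intro x hx
      rw [Finset.mem_filter] at hx ⊢
      exact ⟨hx.1, lt_trans hx.2 h⟩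
  omega

/-- The potential function. -/
noncomputable def potOf (w : N → NNReal) (c : E → NNReal → NNReal) (σ : N → Finset E) : ℕ :=
  ∑ g : E, (playersOn σ g).card *
    (Fintype.card N + 2) ^ rkOf w c (c g (∑ j ∈ playersOn σ g, w j))

end Aux

/-- Every weighted matroid congestion game possesses a pure Nash equilibrium. -/
theorem weighted_matroid_congestion_game_has_PNE
    {N E : Type*} [Fintype N] [DecidableEq N] [Fintype E] [DecidableEq E]
    (𝒮 : N → Finset (Finset E)) (hmatroid : ∀ i, IsBaseFamily (𝒮 i))
    (w : N → NNReal) (c : E → NNReal → NNReal)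
    (hc : ∀ e, Monotone (c e)) :
    ∃ σ : N → Finset E, (∀ i, σ i ∈ 𝒮 i) ∧
      ∀ i : N, ∀ S' ∈ 𝒮 i,
        weightedCost w c σ i ≤ weightedCost w c (Function.update σ i S') i := by
  classical
  obtain ⟨σ, hσmem, hσmin⟩ := Finset.exists_min_image (Fintype.piFinset 𝒮) (potOf w c)
    ⟨fun i => (hmatroid i).1.choose, Fintype.mem_piFinset.2 fun i => (hmatroid i).1.choose_spec⟩
  have hσ : ∀ i, σ i ∈ 𝒮 i := Fintype.mem_piFinset.1 hσmem
  refine ⟨σ, hσ, fun i S' hS' => ?_⟩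
  by_contra hltc
  push_neg at hltc
  set d : E → NNReal := fun g => c g ((∑ j ∈ (playersOn σ g).erase i, w j) + w i) with hd
  have hupdate : ∀ S : Finset E,
      weightedCost w c (Function.update σ i S) i = ∑ g ∈ S, d g := by
    intro S
    unfold weightedCost
    rw [Function.update_self]
    refine Finset.sum_congr rfl fun g hg => ?_
    have hig : i ∈ playersOn (Function.update σ i S) g := by
      simp [playersOn, hg]
    have herase : (playersOn (Function.update σ i S) g).erase i = (playersOn σ g).erase i := by
      ext j
      simp only [playersOn, Finset.mem_erase, Finset.mem_filter, Finset.mem_univ, true_and]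
      constructor
      · rintro ⟨hj, hj2⟩
        rw [Function.update_of_ne hj] at hj2
        exact ⟨hj, hj2⟩
      · rintro ⟨hj, hj2⟩
        exact ⟨hj, by rw [Function.update_of_ne hj]; exact hj2⟩
    rw [← Finset.add_sum_erase _ w hig, herase, hd]
    simp [add_comm]
  have hself : weightedCost w c σ i = ∑ g ∈ σ i, d g := by
    have h := hupdate (σ i)
    rwa [Function.update_eq_self] at h
  rw [hself, hupdate] at hltc
  obtain ⟨e, he, f, hf, hswap, hdfe⟩ := exists_improving_swap (hmatroid i) d (hσ i) hS' hltc
  set B2 := insert f ((σ i).erase e) with hB2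
  set σ' := Function.update σ i B2 with hσ'
  have hσ'mem : σ' ∈ Fintype.piFinset 𝒮 := Fintype.mem_piFinset.2 (fun j => by
    by_cases hj : j = i
    · subst hj; rw [hσ', Function.update_self]; exact hswap
    · rw [hσ', Function.update_of_ne hj]; exact hσ j)
  suffices hdec : potOf w c σ' < potOf w c σ by
    exact absurd (hσmin σ' hσ'mem) (not_le.2 hdec)
  have hef : e ≠ f := fun h => hf (h ▸ he)
  have hie : i ∈ playersOn σ e := by simp [playersOn, he]
  have hif : i ∉ playersOn σ f := by simp [playersOn, hf]
  have hP1 : ∀ g, g ≠ e → g ≠ f → playersOn σ' g = playersOn σ g := by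
    intro g hge hgf
    ext j
    simp only [playersOn, Finset.mem_filter, Finset.mem_univ, true_and]
    by_cases hj : j = i
    · subst hj
      rw [hσ', Function.update_self, hB2]
      simp [Finset.mem_insert, Finset.mem_erase, hge, hgf]
    · rw [hσ', Function.update_of_ne hj]
  have hP2 : playersOn σ' e = (playersOn σ e).erase i := by
    ext j
    simp only [playersOn, Finset.mem_erase, Finset.mem_filter, Finset.mem_univ, true_and]
    by_cases hj : j = i
    · subst hj
      rw [hσ', Function.update_self, hB2]
      simp [Finset.mem_insert, Finset.mem_erase, hef]
    · rw [hσ', Function.update_of_ne hj]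
      simp [hj]
  have hP3 : playersOn σ' f = insert i (playersOn σ f) := by
    ext j
    simp only [playersOn, Finset.mem_insert, Finset.mem_filter, Finset.mem_univ, true_and]
    by_cases hj : j = i
    · subst hj
      rw [hσ', Function.update_self, hB2]
      simp
    · rw [hσ', Function.update_of_ne hj]
      simp [hj]
  have hde : c e (∑ j ∈ playersOn σ e, w j) = d e := by
    rw [← Finset.add_sum_erase _ w hie, hd]
    simp [add_comm]
  have hvf : c f (∑ j ∈ playersOn σ' f, w j) = d f := by
    rw [hP3, Finset.sum_insert hif, hd]
    simp [Finset.erase_eq_of_notMem hif, add_comm]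
  have hve : c e (∑ j ∈ playersOn σ' e, w j) ≤ d e := by
    rw [hP2, hd]
    exact hc e (self_le_add_right _ _)
  have hdeV : d e ∈ valsOf w c := by
    rw [valsOf, Finset.mem_image]
    exact ⟨(e, playersOn σ e), Finset.mem_univ _, hde⟩
  have hdfV : d f ∈ valsOf w c := by
    rw [valsOf, Finset.mem_image]
    exact ⟨(f, playersOn σ' f), Finset.mem_univ _, hvf⟩
  have hrk : rkOf w c (d f) + 1 ≤ rkOf w c (d e) := rkOf_strict w c hdfV hdfe
  set K := Fintype.card N + 2 with hK
  have hKpos : 0 < K := by omega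
  -- card facts
  have hme : 1 ≤ (playersOn σ e).card := Finset.card_pos.2 ⟨i, hie⟩
  have hmf1 : (playersOn σ f).card + 1 ≤ Fintype.card N := by
    rw [← Finset.card_insert_of_notMem hif]
    exact Finset.card_le_univ _
  -- split the sums
  unfold potOf
  have hfe' : f ∈ Finset.univ.erase e := Finset.mem_erase.2 ⟨Ne.symm hef, Finset.mem_univ f⟩
  rw [← Finset.add_sum_erase Finset.univ _ (Finset.mem_univ e),
      ← Finset.add_sum_erase (Finset.univ.erase e) _ hfe',
      ← Finset.add_sum_erase Finset.univ
        (fun g => (playersOn σ g).card * K ^ rkOf w c (c g (∑ j ∈ playersOn σ g, w j)))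
        (Finset.mem_univ e),
      ← Finset.add_sum_erase (Finset.univ.erase e)
        (fun g => (playersOn σ g).card * K ^ rkOf w c (c g (∑ j ∈ playersOn σ g, w j))) hfe']
  have hrest :
      ∑ g ∈ (Finset.univ.erase e).erase f,
        (playersOn σ' g).card * K ^ rkOf w c (c g (∑ j ∈ playersOn σ' g, w j)) =
      ∑ g ∈ (Finset.univ.erase e).erase f,
        (playersOn σ g).card * K ^ rkOf w c (c g (∑ j ∈ playersOn σ g, w j)) := by
    refine Finset.sum_congr rfl fun g hg => ?_
    rw [Finset.mem_erase] at hg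
    have hg2 := Finset.mem_erase.1 hg.2
    rw [hP1 g hg2.1 hg.1]
  rw [hrest]
  -- remaining: term inequality
  set R := ∑ g ∈ (Finset.univ.erase e).erase f,
    (playersOn σ g).card * K ^ rkOf w c (c g (∑ j ∈ playersOn σ g, w j)) with hR
  set me := (playersOn σ e).card with hmeDef
  have hkey : (playersOn σ' e).card * K ^ rkOf w c (c e (∑ j ∈ playersOn σ' e, w j)) +
      (playersOn σ' f).card * K ^ rkOf w c (c f (∑ j ∈ playersOn σ' f, w j)) <
      me * K ^ rkOf w c (c e (∑ j ∈ playersOn σ e, w j)) := by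
    rw [hde]
    have h1 : (playersOn σ' e).card * K ^ rkOf w c (c e (∑ j ∈ playersOn σ' e, w j)) ≤
        (me - 1) * K ^ rkOf w c (d e) := by
      apply Nat.mul_le_mul
      · rw [hP2, Finset.card_erase_of_mem hie]
      · exact Nat.pow_le_pow_right hKpos (rkOf_mono w c hve)
    have h2 : (playersOn σ' f).card * K ^ rkOf w c (c f (∑ j ∈ playersOn σ' f, w j)) <
        K ^ rkOf w c (d e) := by
      rw [hvf]
      calc (playersOn σ' f).card * K ^ rkOf w c (d f)
          ≤ Fintype.card N * K ^ rkOf w c (d f) := by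
            apply Nat.mul_le_mul_right
            rw [hP3, Finset.card_insert_of_notMem hif]
            exact hmf1
        _ < K * K ^ rkOf w c (d f) := by
            exact (Nat.mul_lt_mul_right (Nat.pow_pos hKpos)).2 (by omega)
        _ = K ^ (rkOf w c (d f) + 1) := by rw [pow_succ, Nat.mul_comm]
        _ ≤ K ^ rkOf w c (d e) := Nat.pow_le_pow_right hKpos hrk
    calc (playersOn σ' e).card * K ^ rkOf w c (c e (∑ j ∈ playersOn σ' e, w j)) +
          (playersOn σ' f).card * K ^ rkOf w c (c f (∑ j ∈ playersOn σ' f, w j))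
        < (me - 1) * K ^ rkOf w c (d e) + K ^ rkOf w c (d e) :=
          Nat.add_lt_add_of_le_of_lt h1 h2
      _ = ((me - 1) + 1) * K ^ rkOf w c (d e) := by rw [Nat.succ_mul]
      _ = me * K ^ rkOf w c (d e) := by rw [Nat.sub_add_cancel hme]
  simp only [← hK]
  omega
end

section
/- Every matroid congestion game with set-functional costs has a pure Nash equilibrium. -/
open Finset

/-- The cost `γ_i(σ) = ∑_{e ∈ σ i} c_e(N_e(σ))` imposed on player `i`
in a congestion game with set-functional costs. -/
noncomputable def setCost {N E : Type*} [Fintype N] [DecidableEq E]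
    (c : E → Finset N → NNReal)
    (σ : N → Finset E) (i : N) : NNReal :=
  ∑ e ∈ σ i, c e (playersOn σ e)

/-- If a base is contained in another base, they are equal. -/
lemma base_subset_eq {E : Type*} [DecidableEq E] {B : Finset (Finset E)}
    (hB : IsBaseFamily B) {S T : Finset E} (hS : S ∈ B) (hT : T ∈ B) (h : T ⊆ S) :
    T = S := by
  by_contra hne
  obtain ⟨e, he⟩ : (S \ T).Nonempty := by
    rw [Finset.sdiff_nonempty]
    intro hST
    exact hne (Finset.Subset.antisymm h hST)
  obtain ⟨f, hf, -⟩ := hB.2 S hS T hT e he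
  rw [Finset.mem_sdiff] at hf
  exact hf.2 (h hf.1)

/-- If some base is cheaper than `S` (w.r.t. a fixed weight `w`), then there is an
improving single exchange from `S`. -/
lemma exists_improving_exchange {E : Type*} [DecidableEq E] {B : Finset (Finset E)}
    (hB : IsBaseFamily B) (w : E → NNReal) {S S' : Finset E} (hS : S ∈ B) (hS' : S' ∈ B)
    (hlt : ∑ g ∈ S', w g < ∑ g ∈ S, w g) :
    ∃ e ∈ S, ∃ f, f ∉ S ∧ insert f (S.erase e) ∈ B ∧ w f < w e := by
  classical
  set F := B.filter (fun T => ∑ g ∈ T, w g < ∑ g ∈ S, w g) with hF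
  have hFne : F.Nonempty := ⟨S', by simp [hF, hS', hlt]⟩
  obtain ⟨T, hTF, hTmax⟩ := F.exists_max_image (fun T => (S ∩ T).card) hFne
  rw [hF, Finset.mem_filter] at hTF
  obtain ⟨hT, hTsum⟩ := hTF
  have hTS : (T \ S).Nonempty := by
    rw [Finset.sdiff_nonempty]
    intro hsub
    rw [base_subset_eq hB hS hT hsub] at hTsum
    exact lt_irrefl _ hTsum
  obtain ⟨f, hfTS, hfmax⟩ := (T \ S).exists_max_image w hTS
  obtain ⟨e, heST, hT'⟩ := hB.2 T hT S hS f hfTS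
  have hfT : f ∈ T := (Finset.mem_sdiff.mp hfTS).1
  have hfS : f ∉ S := (Finset.mem_sdiff.mp hfTS).2
  have heS : e ∈ S := (Finset.mem_sdiff.mp heST).1
  have heT : e ∉ T := (Finset.mem_sdiff.mp heST).2
  have heT' : e ∉ T.erase f := fun h => heT (Finset.mem_of_mem_erase h)
  have hsumT' : ∑ g ∈ insert e (T.erase f), w g = w e + ∑ g ∈ T.erase f, w g :=
    Finset.sum_insert heT'
  have hsumT : w f + ∑ g ∈ T.erase f, w g = ∑ g ∈ T, w g :=
    Finset.add_sum_erase T w hfT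
  have hge : ∑ g ∈ S, w g ≤ ∑ g ∈ insert e (T.erase f), w g := by
    by_contra hcon
    push_neg at hcon
    have hmem : insert e (T.erase f) ∈ F := by
      rw [hF, Finset.mem_filter]; exact ⟨hT', hcon⟩
    have h1 : S ∩ insert e (T.erase f) = insert e (S ∩ T) := by
      ext x
      simp only [Finset.mem_inter, Finset.mem_insert, Finset.mem_erase]
      constructor
      · rintro ⟨hxS, hx | ⟨hxf, hxT⟩⟩
        · exact Or.inl hx
        · exact Or.inr ⟨hxS, hxT⟩
      · rintro (rfl | ⟨hxS, hxT⟩)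
        · exact ⟨heS, Or.inl rfl⟩
        · refine ⟨hxS, Or.inr ⟨?_, hxT⟩⟩
          rintro rfl; exact hfS hxS
    have hcard : (S ∩ T).card < (S ∩ insert e (T.erase f)).card := by
      rw [h1, Finset.card_insert_of_notMem (fun h => heT (Finset.mem_inter.mp h).2)]
      omega
    exact absurd (hTmax _ hmem) (not_le.mpr hcard)
  have hwfe : w f < w e := by
    have h1 : w f + ∑ g ∈ T.erase f, w g < w e + ∑ g ∈ T.erase f, w g := by
      rw [hsumT]
      exact lt_of_lt_of_le hTsum (hsumT' ▸ hge)
    exact lt_of_add_lt_add_right h1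
  obtain ⟨f', hf', hnew⟩ := hB.2 S hS T hT e heST
  refine ⟨e, heS, f', (Finset.mem_sdiff.mp hf').2, hnew, ?_⟩
  exact lt_of_le_of_lt (hfmax f' hf') hwfe

lemma playersOn_update {N E : Type*} [Fintype N] [DecidableEq N] [DecidableEq E]
    (σ : N → Finset E) (i : N) (T : Finset E) (g : E) :
    playersOn (Function.update σ i T) g =
      if g ∈ T then insert i ((playersOn σ g).erase i)
      else (playersOn σ g).erase i := by
  ext j
  by_cases hj : j = i
  · subst hj
    by_cases hg : g ∈ T <;>
      simp [playersOn, Function.update_self, hg]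
  · by_cases hg : g ∈ T <;>
      simp [playersOn, Function.update_of_ne hj, hg, hj]

lemma setCost_update {N E : Type*} [Fintype N] [DecidableEq N] [DecidableEq E]
    (c : E → Finset N → NNReal) (σ : N → Finset E) (i : N) (T : Finset E) :
    setCost c (Function.update σ i T) i =
      ∑ g ∈ T, c g (insert i ((playersOn σ g).erase i)) := by
  unfold setCost
  rw [Function.update_self]
  refine Finset.sum_congr rfl fun g hg => ?_
  rw [playersOn_update, if_pos hg]

lemma key_arith (M k m ra ra' rb rb' : ℕ) (hk : 1 ≤ k) (hm : m + 1 < M)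
    (h1 : ra' ≤ ra) (h2 : rb' < ra) :
    (k - 1) * M ^ ra' + (m + 1) * M ^ rb' < k * M ^ ra + m * M ^ rb := by
  have hM1 : 1 ≤ M := by omega
  have hA : (k - 1) * M ^ ra' ≤ (k - 1) * M ^ ra :=
    Nat.mul_le_mul_left _ (Nat.pow_le_pow_right hM1 h1)
  have hB : (m + 1) * M ^ rb' < M ^ ra := by
    have h3 : rb' ≤ ra - 1 := by omega
    have h4 : (m + 1) * M ^ rb' ≤ (m + 1) * M ^ (ra - 1) :=
      Nat.mul_le_mul_left _ (Nat.pow_le_pow_right hM1 h3)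
    have hpos : 0 < M ^ (ra - 1) := Nat.pow_pos (by omega)
    have h5 : (m + 1) * M ^ (ra - 1) < M * M ^ (ra - 1) :=
      Nat.mul_lt_mul_of_pos_right hm hpos
    have h6 : M * M ^ (ra - 1) = M ^ ra := by
      rw [← pow_succ']
      congr 1
      omega
    omega
  have h7 : (k - 1) * M ^ ra + M ^ ra = k * M ^ ra := by
    have hkk : k - 1 + 1 = k := by omega
    calc (k - 1) * M ^ ra + M ^ ra = (k - 1 + 1) * M ^ ra := (Nat.succ_mul _ _).symm
      _ = k * M ^ ra := by rw [hkk]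
  have h8 : 0 ≤ m * M ^ rb := Nat.zero_le _
  linarith

/-- Every matroid congestion game with set-functional costs has a pure Nash
equilibrium. -/
theorem matroid_congestion_game_set_functional_costs_has_PNE
    {N E : Type*} [Fintype N] [DecidableEq N] [Fintype E] [DecidableEq E]
    (𝒮 : N → Finset (Finset E)) (hmatroid : ∀ i, IsBaseFamily (𝒮 i))
    (c : E → Finset N → NNReal)
    (hc : ∀ e, ∀ X Y : Finset N, X ⊆ Y → c e X ≤ c e Y) :
    ∃ σ : N → Finset E, (∀ i, σ i ∈ 𝒮 i) ∧
      ∀ i : N, ∀ S' ∈ 𝒮 i,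
        setCost c σ i ≤ setCost c (Function.update σ i S') i := by
  classical
  set M : ℕ := Fintype.card N + 2 with hM
  set V : Finset NNReal :=
    (Finset.univ : Finset E).biUnion
      (fun e => ((Finset.univ : Finset N).powerset).image (c e)) with hV
  have hmemV : ∀ (e : E) (X : Finset N), c e X ∈ V := by
    intro e X
    simp only [hV, Finset.mem_biUnion, Finset.mem_image, Finset.mem_powerset]
    exact ⟨e, Finset.mem_univ e, X, Finset.subset_univ X, rfl⟩
  set r : NNReal → ℕ := fun v => (V.filter (fun u => u < v)).card with hr
  have hrmono : ∀ {x y : NNReal}, x ≤ y → r x ≤ r y := by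
    intro x y hxy
    apply Finset.card_le_card
    intro u hu
    rw [Finset.mem_filter] at hu ⊢
    exact ⟨hu.1, lt_of_lt_of_le hu.2 hxy⟩
  have hrstrict : ∀ {x y : NNReal}, x ∈ V → x < y → r x < r y := by
    intro x y hxV hxy
    apply Finset.card_lt_card
    rw [Finset.ssubset_iff_of_subset]
    · exact ⟨x, Finset.mem_filter.mpr ⟨hxV, hxy⟩,
        fun h => lt_irrefl x (Finset.mem_filter.mp h).2⟩
    · intro u hu
      rw [Finset.mem_filter] at hu ⊢
      exact ⟨hu.1, lt_trans hu.2 hxy⟩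
  set Φ : (N → Finset E) → ℕ :=
    fun τ => ∑ g : E, (playersOn τ g).card * M ^ (r (c g (playersOn τ g))) with hΦ
  set F : Finset (N → Finset E) :=
    Finset.univ.filter (fun τ => ∀ i, τ i ∈ 𝒮 i) with hF
  have hFne : F.Nonempty := by
    refine ⟨fun i => (hmatroid i).1.choose, ?_⟩
    simp only [hF, Finset.mem_filter, Finset.mem_univ, true_and]
    exact fun i => (hmatroid i).1.choose_spec
  obtain ⟨σ, hσF, hσmin⟩ := F.exists_min_image Φ hFne
  have hσ : ∀ i, σ i ∈ 𝒮 i := by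
    rw [hF, Finset.mem_filter] at hσF
    exact hσF.2
  refine ⟨σ, hσ, ?_⟩
  intro i S' hS'
  by_contra hcon
  push_neg at hcon
  set w : E → NNReal := fun g => c g (insert i ((playersOn σ g).erase i)) with hw
  have hcosts : ∀ T, setCost c (Function.update σ i T) i = ∑ g ∈ T, w g :=
    fun T => setCost_update c σ i T
  have hself : setCost c σ i = ∑ g ∈ σ i, w g := by
    conv_lhs => rw [← Function.update_eq_self i σ]
    exact hcosts (σ i)
  rw [hcosts S', hself] at hcon
  obtain ⟨e, heS, f, hfS, hnewB, hwfe⟩ :=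
    exists_improving_exchange (hmatroid i) w (hσ i) hS' hcon
  -- the improving deviation profile
  set Snew : Finset E := insert f ((σ i).erase e) with hSnew
  set σ' : N → Finset E := Function.update σ i Snew with hσ'
  have hσ'F : σ' ∈ F := by
    rw [hF, Finset.mem_filter]
    refine ⟨Finset.mem_univ _, fun j => ?_⟩
    by_cases hj : j = i
    · subst hj; rw [hσ', Function.update_self]; exact hnewB
    · rw [hσ', Function.update_of_ne hj]; exact hσ j
  have hef : e ≠ f := fun h => hfS (h ▸ heS)
  have hie : i ∈ playersOn σ e := by simp [playersOn, heS]
  have hif : i ∉ playersOn σ f := by simp [playersOn, hfS]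
  have heSnew : e ∉ Snew := by
    rw [hSnew]
    simp [hef, Finset.mem_erase]
  have hfSnew : f ∈ Snew := Finset.mem_insert_self _ _
  have hpe : playersOn σ' e = (playersOn σ e).erase i := by
    rw [hσ', playersOn_update, if_neg heSnew]
  have hpf : playersOn σ' f = insert i (playersOn σ f) := by
    rw [hσ', playersOn_update, if_pos hfSnew, Finset.erase_eq_of_notMem hif]
  have hpg : ∀ g, g ≠ e → g ≠ f → playersOn σ' g = playersOn σ g := by
    intro g hge hgf
    rw [hσ', playersOn_update]
    by_cases hg : g ∈ σ i
    · have : g ∈ Snew := by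
        rw [hSnew]
        exact Finset.mem_insert_of_mem (Finset.mem_erase.mpr ⟨hge, hg⟩)
      rw [if_pos this, Finset.insert_erase (by simp [playersOn, hg])]
    · have : g ∉ Snew := by
        rw [hSnew]
        simp only [Finset.mem_insert, Finset.mem_erase]
        rintro (rfl | ⟨-, h⟩)
        · exact hgf rfl
        · exact hg h
      rw [if_neg this, Finset.erase_eq_of_notMem (by simp [playersOn, hg])]
  -- value abbreviations
  have hwe : w e = c e (playersOn σ e) := by
    rw [hw]
    simp only
    rw [Finset.insert_erase hie]
  have hwf : w f = c f (insert i (playersOn σ f)) := by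
    rw [hw]
    simp only
    rw [Finset.erase_eq_of_notMem hif]
  -- splitting the potential
  have hsplit : ∀ τ : N → Finset E,
      Φ τ = (playersOn τ e).card * M ^ (r (c e (playersOn τ e)))
          + ((playersOn τ f).card * M ^ (r (c f (playersOn τ f)))
          + ∑ g ∈ (Finset.univ.erase e).erase f,
              (playersOn τ g).card * M ^ (r (c g (playersOn τ g)))) := by
    intro τ
    simp only [hΦ]
    rw [← Finset.add_sum_erase _ _ (Finset.mem_univ e),
        ← Finset.add_sum_erase _ _ (Finset.mem_erase.mpr ⟨hef.symm, Finset.mem_univ f⟩)]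
  have hrest :
      ∑ g ∈ (Finset.univ.erase e).erase f,
          (playersOn σ' g).card * M ^ (r (c g (playersOn σ' g)))
      = ∑ g ∈ (Finset.univ.erase e).erase f,
          (playersOn σ g).card * M ^ (r (c g (playersOn σ g))) := by
    refine Finset.sum_congr rfl fun g hg => ?_
    rw [Finset.mem_erase, Finset.mem_erase] at hg
    rw [hpg g hg.2.1 hg.1]
  have hΦlt : Φ σ' < Φ σ := by
    rw [hsplit σ, hsplit σ', hrest, hpe, hpf]
    have hcard_e : ((playersOn σ e).erase i).card = (playersOn σ e).card - 1 :=
      Finset.card_erase_of_mem hie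
    have hcard_f : (insert i (playersOn σ f)).card = (playersOn σ f).card + 1 :=
      Finset.card_insert_of_notMem hif
    rw [hcard_e, hcard_f]
    have hk : 1 ≤ (playersOn σ e).card := Finset.card_pos.mpr ⟨i, hie⟩
    have hm : (playersOn σ f).card + 1 < M := by
      rw [hM]
      have := Finset.card_le_univ (playersOn σ f)
      omega
    have h1 : r (c e ((playersOn σ e).erase i)) ≤ r (c e (playersOn σ e)) :=
      hrmono (hc e _ _ (Finset.erase_subset _ _))
    have h2 : r (c f (insert i (playersOn σ f))) < r (c e (playersOn σ e)) := by
      apply hrstrict (hmemV f _)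
      rw [← hwf, ← hwe]
      exact hwfe
    have := key_arith M (playersOn σ e).card (playersOn σ f).card
      (r (c e (playersOn σ e))) (r (c e ((playersOn σ e).erase i)))
      (r (c f (playersOn σ f))) (r (c f (insert i (playersOn σ f))))
      hk hm h1 h2
    omega
  exact absurd (hσmin σ' hσ'F) (not_le.mpr hΦlt)
end

section
/- Every player-specific matroid congestion game possesses a pure Nash equilibrium. -/
open Finset

/-- The number `n_e(σ)` of players choosing resource `e` in the strategy profile `σ`. -/
def numPlayersOn {N E : Type*} [Fintype N] [DecidableEq E]
    (σ : N → Finset E) (e : E) : ℕ :=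
  (Finset.univ.filter (fun i => e ∈ σ i)).card

/-- The cost `γ_i(σ) = ∑_{e ∈ σ i} c_{i,e}(n_e(σ))` imposed on player `i`
in a player-specific congestion game. -/
noncomputable def psCost {N E : Type*} [Fintype N] [DecidableEq E]
    (c : N → E → ℕ → NNReal)
    (σ : N → Finset E) (i : N) : NNReal :=
  ∑ e ∈ σ i, c i e (numPlayersOn σ e)

set_option linter.unusedSectionVars false
set_option linter.unusedVariables false
set_option maxHeartbeats 1000000

section MatroidAux
variable {E : Type*} [DecidableEq E] {B : Finset (Finset E)}


variable {E : Type*} [DecidableEq E] {B : Finset (Finset E)}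

/-- Independence: subsets of bases. -/
def Ind (B : Finset (Finset E)) (A : Finset E) : Prop := ∃ S ∈ B, A ⊆ S

lemma ind_of_mem {S : Finset E} (hS : S ∈ B) : Ind B S := ⟨S, hS, Finset.Subset.rfl⟩

lemma Ind.mono {A A' : Finset E} (hA : Ind B A) (h : A' ⊆ A) : Ind B A' := by
  obtain ⟨S, hS, hsub⟩ := hA; exact ⟨S, hS, h.trans hsub⟩

lemma IsBaseFamily.eq_of_subset (hB : IsBaseFamily B) {S S' : Finset E}
    (hS : S ∈ B) (hS' : S' ∈ B) (hss : S ⊆ S') : S = S' := by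
  by_contra h
  have hne : (S' \ S).Nonempty := by
    rw [sdiff_nonempty]; intro h2; exact h (Finset.Subset.antisymm hss h2)
  obtain ⟨e, he⟩ := hne
  obtain ⟨f, hf, -⟩ := hB.2 S' hS' S hS e he
  rw [mem_sdiff] at hf
  exact hf.2 (hss hf.1)

lemma IsBaseFamily.card_eq (hB : IsBaseFamily B) {S S' : Finset E}
    (hS : S ∈ B) (hS' : S' ∈ B) : S.card = S'.card := by
  suffices H : ∀ n (S S' : Finset E), S ∈ B → S' ∈ B → (S \ S').card ≤ n → S.card = S'.card from
    H _ S S' hS hS' le_rfl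
  intro n
  induction n with
  | zero =>
    intro S S' hS hS' h
    have h0 : S \ S' = ∅ := card_eq_zero.mp (Nat.le_zero.mp h)
    rw [hB.eq_of_subset hS hS' (sdiff_eq_empty_iff_subset.mp h0)]
  | succ n ih =>
    intro S S' hS hS' h
    by_cases hne : (S \ S').Nonempty
    · obtain ⟨e, he⟩ := hne
      obtain ⟨f, hf, hS2⟩ := hB.2 S hS S' hS' e he
      rw [mem_sdiff] at hf he
      have hfe : f ∉ S.erase e := fun hx => hf.2 (mem_of_mem_erase hx)
      have hcard : (insert f (S.erase e)).card = S.card := by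
        rw [card_insert_of_notMem hfe, card_erase_of_mem he.1]
        have : 1 ≤ S.card := card_pos.mpr ⟨e, he.1⟩
        omega
      have hdiff : insert f (S.erase e) \ S' = (S \ S').erase e := by
        ext g
        simp only [mem_sdiff, mem_insert, mem_erase]
        constructor
        · rintro ⟨(rfl | ⟨hge, hgS⟩), hgS'⟩
          · exact absurd hf.1 hgS'
          · exact ⟨hge, hgS, hgS'⟩
        · rintro ⟨hge, hgS, hgS'⟩
          exact ⟨Or.inr ⟨hge, hgS⟩, hgS'⟩
      have hle : ((S \ S').erase e).card ≤ n := by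
        rw [card_erase_of_mem (mem_sdiff.mpr he)]
        omega
      have := ih (insert f (S.erase e)) S' hS2 hS' (by rw [hdiff]; exact hle)
      omega
    · rw [not_nonempty_iff_eq_empty] at hne
      rw [hB.eq_of_subset hS hS' (sdiff_eq_empty_iff_subset.mp hne)]

lemma base_of_ind_card (hB : IsBaseFamily B) {A T : Finset E} (hA : Ind B A)
    (hT : T ∈ B) (hc : T.card ≤ A.card) : A ∈ B := by
  obtain ⟨S₀, hS₀, hsub⟩ := hA
  have : A = S₀ := eq_of_subset_of_card_le hsub (by rw [hB.card_eq hS₀ hT]; exact hc)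
  rw [this]; exact hS₀

lemma aug (hB : IsBaseFamily B) {A A' : Finset E} (hA : Ind B A) (hA' : Ind B A')
    (hcard : A.card < A'.card) : ∃ f ∈ A', f ∉ A ∧ Ind B (insert f A) := by
  obtain ⟨S', hS', hsubA'⟩ := hA'
  have hne : (B.filter (fun S => A ⊆ S)).Nonempty := by
    obtain ⟨S₀, h1, h2⟩ := hA; exact ⟨S₀, mem_filter.mpr ⟨h1, h2⟩⟩
  obtain ⟨S, hSmem, hSmin⟩ := exists_min_image _ (fun S => (S \ S').card) hne
  rw [mem_filter] at hSmem
  obtain ⟨hSB, hAS⟩ := hSmem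
  have hkey : S \ S' ⊆ A := by
    intro e he
    by_contra heA
    obtain ⟨f, hf, hS2⟩ := hB.2 S hSB S' hS' e he
    rw [mem_sdiff] at hf he
    have h1 : A ⊆ insert f (S.erase e) := fun a ha =>
      mem_insert.mpr (Or.inr (mem_erase.mpr ⟨fun h => heA (h ▸ ha), hAS ha⟩))
    have h2 : insert f (S.erase e) \ S' = (S \ S').erase e := by
      ext g
      simp only [mem_sdiff, mem_insert, mem_erase]
      constructor
      · rintro ⟨(rfl | ⟨hge, hgS⟩), hgS'⟩
        · exact absurd hf.1 hgS'
        · exact ⟨hge, hgS, hgS'⟩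
      · rintro ⟨hge, hgS, hgS'⟩
        exact ⟨Or.inr ⟨hge, hgS⟩, hgS'⟩
    have hmin := hSmin _ (mem_filter.mpr ⟨hS2, h1⟩)
    rw [h2, card_erase_of_mem (mem_sdiff.mpr he)] at hmin
    have : 1 ≤ (S \ S').card := card_pos.mpr ⟨e, mem_sdiff.mpr he⟩
    omega
  by_cases hcase : ∃ f ∈ A', f ∉ A ∧ f ∈ S
  · obtain ⟨f, h1, h2, h3⟩ := hcase
    exact ⟨f, h1, h2, S, hSB, insert_subset h3 hAS⟩
  · exfalso
    push_neg at hcase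
    have h3 : A' \ A ⊆ S' \ S := by
      intro f hf
      rw [mem_sdiff] at hf ⊢
      exact ⟨hsubA' hf.1, hcase f hf.1 hf.2⟩
    have h4 : S \ S' ⊆ A \ A' := by
      intro g hg
      exact mem_sdiff.mpr ⟨hkey hg, fun hga' => (mem_sdiff.mp hg).2 (hsubA' hga')⟩
    have h5 : S.card = S'.card := hB.card_eq hSB hS'
    have e1 := card_inter_add_card_sdiff S S'
    have e2 := card_inter_add_card_sdiff S' S
    rw [inter_comm] at e2
    have e3 := card_inter_add_card_sdiff A A'
    have e4 := card_inter_add_card_sdiff A' A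
    rw [inter_comm] at e4
    have l1 := card_le_card h3
    have l2 := card_le_card h4
    omega

lemma exists_base_between (hB : IsBaseFamily B) {A T : Finset E} (hA : Ind B A)
    (hT : T ∈ B) : ∃ S ∈ B, A ⊆ S ∧ S ⊆ A ∪ T := by
  suffices H : ∀ n (A : Finset E), Ind B A → T.card - A.card ≤ n →
      ∃ S ∈ B, A ⊆ S ∧ S ⊆ A ∪ T from H _ A hA le_rfl
  intro n
  induction n with
  | zero =>
    intro A hA h
    have : A ∈ B := base_of_ind_card hB hA hT (by omega)
    exact ⟨A, this, Finset.Subset.rfl, subset_union_left⟩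
  | succ n ih =>
    intro A hA h
    by_cases hc : T.card ≤ A.card
    · exact ⟨A, base_of_ind_card hB hA hT hc, Finset.Subset.rfl, subset_union_left⟩
    · obtain ⟨f, hfT, hfA, hind⟩ := aug hB hA (ind_of_mem hT) (by omega)
      obtain ⟨S, hSB, h1, h2⟩ := ih (insert f A) hind
        (by rw [card_insert_of_notMem hfA]; omega)
      refine ⟨S, hSB, (subset_insert f A).trans h1, h2.trans ?_⟩
      intro x hx
      rw [mem_union, mem_insert] at hx
      rcases hx with (rfl | hxA) | hxT
      · exact mem_union_right _ hfT
      · exact mem_union_left _ hxA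
      · exact mem_union_right _ hxT


lemma pairing (hB : IsBaseFamily B) {S T : Finset E} (hS : S ∈ B) (hT : T ∈ B) :
    ∃ φ : E → E, Set.InjOn φ ↑(S \ T) ∧
      ∀ x ∈ S \ T, φ x ∈ T \ S ∧ insert (φ x) (S.erase x) ∈ B := by
  classical
  set t' : {x // x ∈ S \ T} → Finset E :=
    fun x => (T \ S).filter (fun y => insert y (S.erase x.1) ∈ B) with ht'
  have hall : ∀ s : Finset {x // x ∈ S \ T}, s.card ≤ (s.biUnion t').card := by
    intro s
    set X : Finset E := s.image Subtype.val with hX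
    have hXcard : X.card = s.card := card_image_of_injective s Subtype.val_injective
    have hXsub : X ⊆ S \ T := by
      intro x hx; obtain ⟨⟨x', hx'⟩, _, rfl⟩ := mem_image.mp hx; exact hx'
    have hXS : X ⊆ S := hXsub.trans sdiff_subset
    have hAind : Ind B (S \ X) := (ind_of_mem hS).mono sdiff_subset
    obtain ⟨S₁, hS₁B, hAS₁, hS₁sub⟩ := exists_base_between hB hAind hT
    have hYsub : S₁ \ (S \ X) ⊆ T \ S := by
      intro y hy
      rw [mem_sdiff] at hy
      have hyX : y ∉ X ∨ y ∉ S := by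
        by_contra hcon
        push_neg at hcon
        exact (mem_sdiff.mp (hXsub hcon.1)).2 (by
          rcases mem_union.mp (hS₁sub hy.1) with h | h
          · exact absurd h hy.2
          · exact h)
      have hyT : y ∈ T := by
        rcases mem_union.mp (hS₁sub hy.1) with h | h
        · exact absurd h hy.2
        · exact h
      refine mem_sdiff.mpr ⟨hyT, fun hyS => ?_⟩
      have hyX' : y ∈ X := by
        by_contra hyX'
        exact hy.2 (mem_sdiff.mpr ⟨hyS, hyX'⟩)
      exact (mem_sdiff.mp (hXsub hyX')).2 hyT
    have hYcard : (S₁ \ (S \ X)).card = X.card := by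
      have h1 := card_sdiff_add_card_eq_card hAS₁
      have h2 : (S \ X).card = S.card - X.card := card_sdiff_of_subset hXS
      have h3 := hB.card_eq hS₁B hS
      have h4 := card_le_card hXS
      omega
    have hmain : S₁ \ (S \ X) ⊆ s.biUnion t' := by
      intro y hy
      have hyTS : y ∈ T \ S := hYsub hy
      have hyS₁ : y ∈ S₁ := (mem_sdiff.mp hy).1
      have hyS : y ∉ S := (mem_sdiff.mp hyTS).2
      have hindy : Ind B (insert y (S \ X)) :=
        (ind_of_mem hS₁B).mono (insert_subset hyS₁ hAS₁)
      obtain ⟨S₂, hS₂B, h1, h2⟩ := exists_base_between hB hindy hS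
      have h2' : S₂ ⊆ insert y S := by
        refine h2.trans ?_
        intro z hz
        rcases mem_union.mp hz with h | h
        · rcases mem_insert.mp h with rfl | h'
          · exact mem_insert_self _ _
          · exact mem_insert_of_mem (sdiff_subset h')
        · exact mem_insert_of_mem h
      have hcard12 : S₂.card = S.card := hB.card_eq hS₂B hS
      have hyS₂ : y ∈ S₂ := h1 (mem_insert_self y _)
      have hinter : S ∩ S₂ = S₂.erase y := by
        ext z
        simp only [mem_inter, mem_erase]
        constructor
        · rintro ⟨hzS, hzS₂⟩
          exact ⟨fun h => hyS (h ▸ hzS), hzS₂⟩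
        · rintro ⟨hzy, hzS₂⟩
          refine ⟨?_, hzS₂⟩
          rcases mem_insert.mp (h2' hzS₂) with rfl | h
          · exact absurd rfl hzy
          · exact h
      have hSS₂ : (S \ S₂).card = 1 := by
        have hc := card_inter_add_card_sdiff S S₂
        rw [hinter, card_erase_of_mem hyS₂] at hc
        have : 1 ≤ S₂.card := card_pos.mpr ⟨y, hyS₂⟩
        omega
      obtain ⟨x, hx⟩ := card_eq_one.mp hSS₂
      have hxS : x ∈ S ∧ x ∉ S₂ := mem_sdiff.mp (hx ▸ mem_singleton_self x)
      have hAsub₂ : S \ X ⊆ S₂ := (subset_insert y _).trans h1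
      have hxX : x ∈ X := by
        by_contra hxX
        exact hxS.2 (hAsub₂ (mem_sdiff.mpr ⟨hxS.1, hxX⟩))
      have hS₂eq : S₂ = insert y (S.erase x) := by
        apply Finset.Subset.antisymm
        · intro z hz
          rcases mem_insert.mp (h2' hz) with rfl | hzS
          · exact mem_insert_self _ _
          · refine mem_insert_of_mem (mem_erase.mpr ⟨?_, hzS⟩)
            intro hzx
            exact hxS.2 (hzx ▸ hz)
        · intro z hz
          rcases mem_insert.mp hz with rfl | hz'
          · exact hyS₂
          · obtain ⟨hzx, hzS⟩ := mem_erase.mp hz'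
            by_contra hzS₂
            have : z ∈ S \ S₂ := mem_sdiff.mpr ⟨hzS, hzS₂⟩
            rw [hx, mem_singleton] at this
            exact hzx this
      obtain ⟨xi, hxi, hxival⟩ := mem_image.mp hxX
      refine mem_biUnion.mpr ⟨xi, hxi, ?_⟩
      rw [ht']
      refine mem_filter.mpr ⟨hyTS, ?_⟩
      rw [hxival, ← hS₂eq]
      exact hS₂B
    calc s.card = X.card := hXcard.symm
      _ = (S₁ \ (S \ X)).card := hYcard.symm
      _ ≤ (s.biUnion t').card := card_le_card hmain
  obtain ⟨f, hfinj, hfmem⟩ := (Finset.all_card_le_biUnion_card_iff_exists_injective t').mp hall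
  refine ⟨fun x => if h : x ∈ S \ T then f ⟨x, h⟩ else x, ?_, ?_⟩
  · intro a ha b hb hab
    rw [mem_coe] at ha hb
    simp only [dif_pos ha, dif_pos hb] at hab
    exact congrArg Subtype.val (hfinj hab)
  · intro x hx
    simp only [dif_pos hx]
    have := hfmem ⟨x, hx⟩
    rw [ht', mem_filter] at this
    exact ⟨this.1, this.2⟩

lemma sum_pairing_le {S T : Finset E} {φ : E → E} (w : E → NNReal)
    (hinj : Set.InjOn φ ↑(S \ T)) (hmem : ∀ x ∈ S \ T, φ x ∈ T \ S) :
    ∑ x ∈ S \ T, w (φ x) ≤ ∑ y ∈ T \ S, w y := by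
  have he : ∑ x ∈ S \ T, w (φ x) = ∑ y ∈ (S \ T).image φ, w y :=
    (Finset.sum_image (fun x hx y hy h => hinj hx hy h)).symm
  rw [he]
  apply sum_le_sum_of_subset
  intro y hy
  obtain ⟨x, hx, rfl⟩ := mem_image.mp hy
  exact hmem x hx


-- helper: single swap sdiffs
lemma swap_sdiff_left {S : Finset E} {x y : E} (hxS : x ∈ S) (hyS : y ∉ S) :
    S \ insert y (S.erase x) = {x} := by
  ext g
  simp only [mem_sdiff, mem_insert, mem_erase, mem_singleton]
  constructor
  · rintro ⟨hgS, hg⟩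
    push_neg at hg
    by_contra hgx
    exact (hg.2 hgx) hgS
  · rintro rfl
    refine ⟨hxS, ?_⟩
    push_neg
    exact ⟨fun h => hyS (h ▸ hxS), fun h => absurd rfl h⟩

lemma swap_sdiff_right {S : Finset E} {x y : E} (hxS : x ∈ S) (hyS : y ∉ S) :
    insert y (S.erase x) \ S = {y} := by
  ext g
  simp only [mem_sdiff, mem_insert, mem_erase, mem_singleton]
  constructor
  · rintro ⟨(rfl | ⟨hgx, hgS⟩), hgS'⟩
    · rfl
    · exact absurd hgS hgS'
  · rintro rfl
    exact ⟨Or.inl rfl, hyS⟩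

/-- star condition gives pointwise comparisons on single swaps -/
lemma star_swap {S : Finset E} {p q : E → NNReal}
    (hstar : ∀ T ∈ B, ∑ g ∈ S \ T, p g ≤ ∑ g ∈ T \ S, q g)
    {x y : E} (hxS : x ∈ S) (hyS : y ∉ S) (hmem : insert y (S.erase x) ∈ B) :
    p x ≤ q y := by
  have := hstar _ hmem
  rw [swap_sdiff_left hxS hyS, swap_sdiff_right hxS hyS, sum_singleton, sum_singleton] at this
  exact this

lemma phase_swap [Fintype E] (hB : IsBaseFamily B)
    {S : Finset E} {t : E} (hS : S ∈ B) (ht : t ∈ S)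
    (p q u : E → NNReal) (hpq : ∀ g, p g ≤ q g)
    (hu : ∀ g, u g = if g ∈ S.erase t then p g else q g)
    (hstar : ∀ T ∈ B, ∑ g ∈ S \ T, p g ≤ ∑ g ∈ T \ S, q g)
    (himp : ∃ T₀ ∈ B, ∑ g ∈ T₀, u g < ∑ g ∈ S, u g) :
    ∃ f, f ∉ S ∧ insert f (S.erase t) ∈ B ∧ q f < q t ∧
      ∀ T ∈ B, ∑ g ∈ insert f (S.erase t), u g ≤ ∑ g ∈ T, u g := by
  classical
  set F : Finset E := univ.filter (fun f => insert f (S.erase t) ∈ B) with hF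
  have htF : t ∈ F := by
    rw [hF, mem_filter]
    exact ⟨mem_univ _, by rw [insert_erase ht]; exact hS⟩
  obtain ⟨f, hfF, hfmin⟩ := exists_min_image F q ⟨t, htF⟩
  have hfB : insert f (S.erase t) ∈ B := (mem_filter.mp hfF).2
  -- the key minimality property
  have hkey : ∀ T ∈ B, (∑ g ∈ S.erase t, p g) + q f ≤ ∑ g ∈ T, u g := by
    intro T hT
    obtain ⟨φ, hφinj, hφ⟩ := pairing hB hS hT
    have hTsplit : ∑ g ∈ T, u g = ∑ g ∈ T ∩ S, u g + ∑ g ∈ T \ S, q g := by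
      rw [← sum_inter_add_sum_sdiff T S u]
      congr 1
      refine sum_congr rfl fun g hg => ?_
      rw [hu]
      exact if_neg (fun h => (mem_sdiff.mp hg).2 (mem_of_mem_erase h))
    by_cases htT : t ∈ T
    · have h1 : ∑ g ∈ T ∩ S, u g = q t + ∑ g ∈ (T ∩ S).erase t, p g := by
        rw [← Finset.add_sum_erase _ u (mem_inter.mpr ⟨htT, ht⟩)]
        congr 1
        · rw [hu]; exact if_neg (notMem_erase t S)
        · refine sum_congr rfl fun g hg => ?_
          rw [hu, if_pos]
          obtain ⟨hgt, hgTS⟩ := mem_erase.mp hg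
          exact mem_erase.mpr ⟨hgt, (mem_inter.mp hgTS).2⟩
      have h2 : ∑ g ∈ S.erase t, p g = ∑ g ∈ (T ∩ S).erase t, p g + ∑ g ∈ S \ T, p g := by
        rw [← sum_inter_add_sum_sdiff (S.erase t) T p]
        congr 1
        · apply sum_congr _ fun _ _ => rfl
          ext g
          simp only [mem_inter, mem_erase]
          tauto
        · apply sum_congr _ fun _ _ => rfl
          ext g
          simp only [mem_sdiff, mem_erase]
          constructor
          · rintro ⟨⟨hgt, hgS⟩, hgT⟩; exact ⟨hgS, hgT⟩
          · rintro ⟨hgS, hgT⟩; exact ⟨⟨fun h => hgT (h ▸ htT), hgS⟩, hgT⟩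
      rw [hTsplit, h1, h2]
      have := hstar T hT
      have hqf : q f ≤ q t := hfmin t htF
      calc ∑ g ∈ (T ∩ S).erase t, p g + ∑ g ∈ S \ T, p g + q f
          ≤ ∑ g ∈ (T ∩ S).erase t, p g + ∑ g ∈ T \ S, q g + q t := by
            gcongr
        _ = q t + ∑ g ∈ (T ∩ S).erase t, p g + ∑ g ∈ T \ S, q g := by ring
    · have htST : t ∈ S \ T := mem_sdiff.mpr ⟨ht, htT⟩
      have hφt := hφ t htST
      have h3 : q f ≤ q (φ t) := hfmin _ (mem_filter.mpr ⟨mem_univ _, hφt.2⟩)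
      have hpoint : ∀ x ∈ (S \ T).erase t, p x ≤ q (φ x) := by
        intro x hx
        obtain ⟨hxt, hxST⟩ := mem_erase.mp hx
        obtain ⟨hφx1, hφx2⟩ := hφ x hxST
        exact star_swap hstar (mem_sdiff.mp hxST).1 (mem_sdiff.mp hφx1).2 hφx2
      have h5 : ∑ g ∈ S.erase t, p g = ∑ g ∈ T ∩ S, p g + ∑ x ∈ (S \ T).erase t, p x := by
        rw [← sum_inter_add_sum_sdiff (S.erase t) T p]
        congr 1
        · apply sum_congr _ fun _ _ => rfl
          ext g
          simp only [mem_inter, mem_erase]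
          constructor
          · rintro ⟨⟨hgt, hgS⟩, hgT⟩; exact ⟨hgT, hgS⟩
          · rintro ⟨hgT, hgS⟩; exact ⟨⟨fun h => htT (h ▸ hgT), hgS⟩, hgT⟩
        · apply sum_congr _ fun _ _ => rfl
          ext g
          simp only [mem_sdiff, mem_erase]
          tauto
      have h6 : ∑ x ∈ S \ T, q (φ x) = q (φ t) + ∑ x ∈ (S \ T).erase t, q (φ x) :=
        (Finset.add_sum_erase _ (fun x => q (φ x)) htST).symm
      have h7 : ∑ x ∈ S \ T, q (φ x) ≤ ∑ g ∈ T \ S, q g :=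
        sum_pairing_le q hφinj (fun x hx => (hφ x hx).1)
      have h8 : ∑ g ∈ T ∩ S, u g = ∑ g ∈ T ∩ S, p g := by
        refine sum_congr rfl fun g hg => ?_
        rw [hu, if_pos]
        obtain ⟨hgT, hgS⟩ := mem_inter.mp hg
        exact mem_erase.mpr ⟨fun h => htT (h ▸ hgT), hgS⟩
      rw [hTsplit, h5, h8]
      calc ∑ g ∈ T ∩ S, p g + ∑ x ∈ (S \ T).erase t, p x + q f
          ≤ ∑ g ∈ T ∩ S, p g + ∑ x ∈ (S \ T).erase t, q (φ x) + q (φ t) := by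
            gcongr with x hx
            exact hpoint x hx
        _ = ∑ g ∈ T ∩ S, p g + ∑ x ∈ S \ T, q (φ x) := by rw [h6]; ring
        _ ≤ ∑ g ∈ T ∩ S, p g + ∑ g ∈ T \ S, q g := by gcongr
  -- conclude
  obtain ⟨T₀, hT₀, himp'⟩ := himp
  have hSu : ∑ g ∈ S, u g = q t + ∑ g ∈ S.erase t, p g := by
    rw [← Finset.add_sum_erase _ u ht]
    congr 1
    · rw [hu]; exact if_neg (notMem_erase t S)
    · exact sum_congr rfl fun g hg => by rw [hu, if_pos hg]
  have hlt : q f < q t := by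
    have h9 := hkey T₀ hT₀
    have h10 : (∑ g ∈ S.erase t, p g) + q f < (∑ g ∈ S.erase t, p g) + q t := by
      calc (∑ g ∈ S.erase t, p g) + q f ≤ ∑ g ∈ T₀, u g := h9
        _ < ∑ g ∈ S, u g := himp'
        _ = (∑ g ∈ S.erase t, p g) + q t := by rw [hSu]; ring
    exact lt_of_add_lt_add_left h10
  have hfS : f ∉ S := by
    intro hfS
    have hft : f ≠ t := fun h => absurd hlt (by rw [h]; exact lt_irrefl _)
    have heq : insert f (S.erase t) = S.erase t :=
      insert_eq_self.mpr (mem_erase.mpr ⟨hft, hfS⟩)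
    have hcc := hB.card_eq hfB hS
    rw [heq, card_erase_of_mem ht] at hcc
    have : 1 ≤ S.card := card_pos.mpr ⟨t, ht⟩
    omega
  refine ⟨f, hfS, hfB, hlt, ?_⟩
  intro T hT
  have hsum : ∑ g ∈ insert f (S.erase t), u g = (∑ g ∈ S.erase t, p g) + q f := by
    rw [sum_insert (fun h => hfS (mem_of_mem_erase h))]
    rw [hu, if_neg (fun h => hfS (mem_of_mem_erase h))]
    rw [add_comm]
    congr 1
    exact sum_congr rfl fun g hg => by rw [hu, if_pos hg]
  rw [hsum]
  exact hkey T hT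

lemma greedy_step {B0 B1 : Finset (Finset E)} (hB1 : IsBaseFamily B1)
    (h01 : ∀ A ∈ B1, ∀ x ∈ A, A.erase x ∈ B0)
    {S : Finset E} {fs : E} (hfS : fs ∉ S)
    (hS1 : insert fs S ∈ B1)
    (p q : E → NNReal) (hpq : ∀ g, p g ≤ q g)
    (hstar0 : ∀ T ∈ B0, ∑ g ∈ S \ T, p g ≤ ∑ g ∈ T \ S, q g)
    (hmin : ∀ f, f ∉ S → insert f S ∈ B1 → q fs ≤ q f) :
    ∀ T ∈ B1, ∑ g ∈ insert fs S \ T, p g ≤ ∑ g ∈ T \ insert fs S, q g := by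
  intro T hT
  obtain ⟨φ, hφinj, hφ⟩ := pairing hB1 hS1 hT
  have hpoint : ∀ x ∈ insert fs S \ T, p x ≤ q (φ x) := by
    intro x hx
    obtain ⟨hφ1, hφ2⟩ := hφ x hx
    have hφxS' : φ x ∉ insert fs S := (mem_sdiff.mp hφ1).2
    have hφxS : φ x ∉ S := fun h => hφxS' (mem_insert_of_mem h)
    have hxS' : x ∈ insert fs S := (mem_sdiff.mp hx).1
    by_cases hxf : x = fs
    · subst hxf
      rw [erase_insert hfS] at hφ2
      exact (hpq x).trans (hmin _ hφxS hφ2)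
    · have hxS : x ∈ S := by
        rcases mem_insert.mp hxS' with h | h
        · exact absurd h hxf
        · exact h
      have hfx' : φ x ≠ fs := fun h => hφxS' (h ▸ mem_insert_self fs S)
      have hfsmem : fs ∈ insert (φ x) ((insert fs S).erase x) :=
        mem_insert_of_mem (mem_erase.mpr ⟨fun h => hxf h.symm, mem_insert_self fs S⟩)
      have hT2 := h01 _ hφ2 fs hfsmem
      have heq : (insert (φ x) ((insert fs S).erase x)).erase fs = insert (φ x) (S.erase x) := by
        ext g
        simp only [mem_erase, mem_insert]
        constructor
        · rintro ⟨hgfs, (rfl | ⟨hgx, (rfl | hgS)⟩)⟩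
          · exact Or.inl rfl
          · exact absurd rfl hgfs
          · exact Or.inr ⟨hgx, hgS⟩
        · rintro (rfl | ⟨hgx, hgS⟩)
          · exact ⟨hfx', Or.inl rfl⟩
          · exact ⟨fun h => hfS (h ▸ hgS), Or.inr ⟨hgx, Or.inr hgS⟩⟩
      rw [heq] at hT2
      exact star_swap hstar0 hxS hφxS hT2
  calc ∑ g ∈ insert fs S \ T, p g ≤ ∑ x ∈ insert fs S \ T, q (φ x) := sum_le_sum hpoint
    _ ≤ ∑ y ∈ T \ insert fs S, q y := sum_pairing_le q hφinj (fun x hx => (hφ x hx).1)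

-- truncations
variable [Fintype E]

def trunc (B : Finset (Finset E)) (k : ℕ) : Finset (Finset E) :=
  univ.filter (fun A => A.card = k ∧ ∃ S ∈ B, A ⊆ S)

lemma mem_trunc {A : Finset E} {k : ℕ} : A ∈ trunc B k ↔ A.card = k ∧ Ind B A := by
  simp only [trunc, mem_filter, mem_univ, true_and, Ind]

lemma trunc_isBaseFamily (hB : IsBaseFamily B) {k : ℕ} (hk : ∃ S ∈ B, k ≤ S.card) :
    IsBaseFamily (trunc B k) := by
  constructor
  · obtain ⟨S, hS, hkS⟩ := hk
    obtain ⟨A, hAS, hAc⟩ := exists_subset_card_eq hkS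
    exact ⟨A, mem_trunc.mpr ⟨hAc, S, hS, hAS⟩⟩
  · intro A hA A' hA' e he
    rw [mem_trunc] at hA hA'
    obtain ⟨heA, heA'⟩ := mem_sdiff.mp he
    have h1 : Ind B (A.erase e) := hA.2.mono (erase_subset e A)
    have hcard : (A.erase e).card < A'.card := by
      rw [card_erase_of_mem heA, hA.1, hA'.1]
      have : 1 ≤ k := by rw [← hA.1]; exact card_pos.mpr ⟨e, heA⟩
      omega
    obtain ⟨f, hfA', hfnotin, hind⟩ := aug hB h1 hA'.2 hcard
    have hfe : f ≠ e := fun h => heA' (h ▸ hfA')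
    have hfA : f ∉ A := fun h => hfnotin (mem_erase.mpr ⟨hfe, h⟩)
    refine ⟨f, mem_sdiff.mpr ⟨hfA', hfA⟩, mem_trunc.mpr ⟨?_, hind⟩⟩
    rw [card_insert_of_notMem hfnotin, card_erase_of_mem heA, hA.1]
    have : 1 ≤ k := by rw [← hA.1]; exact card_pos.mpr ⟨e, heA⟩
    omega

lemma trunc_rank (hB : IsBaseFamily B) {S₀ : Finset E} (hS₀ : S₀ ∈ B) :
    trunc B S₀.card = B := by
  ext A
  rw [mem_trunc]
  constructor
  · rintro ⟨hc, S, hS, hsub⟩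
    have : A = S := eq_of_subset_of_card_le hsub (by rw [hB.card_eq hS hS₀, ← hc])
    rw [this]; exact hS
  · intro hA
    exact ⟨hB.card_eq hA hS₀, A, hA, Finset.Subset.rfl⟩

lemma trunc_erase {A : Finset E} {k : ℕ} (hA : A ∈ trunc B (k + 1)) {x : E} (hx : x ∈ A) :
    A.erase x ∈ trunc B k := by
  rw [mem_trunc] at hA ⊢
  refine ⟨by rw [card_erase_of_mem hx, hA.1]; omega, hA.2.mono (erase_subset x A)⟩


end MatroidAux

section GameAux
variable {N E : Type*} [Fintype N] [DecidableEq N] [Fintype E] [DecidableEq E]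

variable {N E : Type*} [Fintype N] [DecidableEq N] [Fintype E] [DecidableEq E]

def others (σ : N → Finset E) (i : N) (e : E) : ℕ :=
  ((Finset.univ.erase i).filter (fun k => e ∈ σ k)).card

lemma numPlayersOn_eq_others (σ : N → Finset E) (i : N) (e : E) :
    numPlayersOn σ e = others σ i e + (if e ∈ σ i then 1 else 0) := by
  unfold numPlayersOn others
  conv_lhs => rw [show (univ : Finset N) = insert i (univ.erase i) from
    (insert_erase (mem_univ i)).symm]
  rw [filter_insert]
  split_ifs with hei
  · rw [card_insert_of_notMem (fun hmem => (mem_erase.mp (mem_filter.mp hmem).1).1 rfl)]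
  · rfl

lemma others_update (σ : N → Finset E) (i : N) (A : Finset E) (e : E) :
    others (Function.update σ i A) i e = others σ i e := by
  unfold others
  congr 1
  apply filter_congr
  intro k hk
  rw [Function.update_of_ne (mem_erase.mp hk).1]

lemma numPlayersOn_update (σ : N → Finset E) (i : N) (A : Finset E) (e : E) :
    numPlayersOn (Function.update σ i A) e = others σ i e + (if e ∈ A then 1 else 0) := by
  rw [numPlayersOn_eq_others _ i e, others_update, Function.update_self]

lemma psCost_eq (c : N → E → ℕ → NNReal) (σ : N → Finset E) (i : N) :
    psCost c σ i = ∑ g ∈ σ i, c i g (others σ i g + 1) := by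
  unfold psCost
  exact sum_congr rfl fun g hg => by rw [numPlayersOn_eq_others σ i g, if_pos hg]

lemma psCost_update_eq (c : N → E → ℕ → NNReal) (σ : N → Finset E) (i : N) (T : Finset E) :
    psCost c (Function.update σ i T) i = ∑ g ∈ T, c i g (others σ i g + 1) := by
  unfold psCost
  rw [Function.update_self]
  exact sum_congr rfl fun g hg => by rw [numPlayersOn_update, if_pos hg]

lemma nash_iff_star (c : N → E → ℕ → NNReal) (σ : N → Finset E) (i : N) (T : Finset E) :
    (psCost c σ i ≤ psCost c (Function.update σ i T) i) ↔
      ∑ g ∈ σ i \ T, c i g (others σ i g + 1) ≤ ∑ g ∈ T \ σ i, c i g (others σ i g + 1) := by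
  rw [psCost_eq, psCost_update_eq,
    ← sum_inter_add_sum_sdiff (σ i) T (fun g => c i g (others σ i g + 1)),
    ← sum_inter_add_sum_sdiff T (σ i) (fun g => c i g (others σ i g + 1)),
    inter_comm T (σ i)]
  exact add_le_add_iff_left _

/-- potential: sum over chosen pairs of the rank of their q-value -/
noncomputable def pot (c : N → E → ℕ → NNReal) (b : E → ℕ) (σ : N → Finset E) : ℕ :=
  ∑ i : N, ∑ g ∈ σ i,
    ((Finset.univ : Finset (N × E)).filter
      (fun pr => c pr.1 pr.2 (b pr.2 + 1) < c i g (b g + 1))).card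

lemma phase_step (𝒮fam : N → Finset (Finset E)) (hfam : ∀ i, IsBaseFamily (𝒮fam i))
    (c : N → E → ℕ → NNReal) (hc : ∀ i e, Monotone (c i e)) (b : E → ℕ)
    (σ : N → Finset E) (t : E) (hmem : ∀ i, σ i ∈ 𝒮fam i)
    (hcount : ∀ e, numPlayersOn σ e = b e + if e = t then 1 else 0)
    (hstar : ∀ i, ∀ T ∈ 𝒮fam i, ∑ g ∈ σ i \ T, c i g (b g) ≤ ∑ g ∈ T \ σ i, c i g (b g + 1))
    (hN : ¬ ∀ i, ∀ T ∈ 𝒮fam i, psCost c σ i ≤ psCost c (Function.update σ i T) i) :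
    ∃ σ' t', (∀ i, σ' i ∈ 𝒮fam i) ∧
      (∀ e, numPlayersOn σ' e = b e + if e = t' then 1 else 0) ∧
      (∀ i, ∀ T ∈ 𝒮fam i, ∑ g ∈ σ' i \ T, c i g (b g) ≤ ∑ g ∈ T \ σ' i, c i g (b g + 1)) ∧
      pot c b σ' < pot c b σ := by
  push_neg at hN
  obtain ⟨j, T₀, hT₀, hlt⟩ := hN
  have hoth : ∀ g, others σ j g + (if g ∈ σ j then 1 else 0) = b g + (if g = t then 1 else 0) :=
    fun g => by rw [← numPlayersOn_eq_others]; exact hcount g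
  have hpq : ∀ g, c j g (b g) ≤ c j g (b g + 1) := fun g => hc j g (Nat.le_succ _)
  -- the improving player must use the token resource
  have htj : t ∈ σ j := by
    by_contra htj
    refine absurd hlt (not_lt.mpr ?_)
    rw [psCost_eq, psCost_update_eq]
    have hw1 : ∀ g ∈ σ j, c j g (others σ j g + 1) = c j g (b g) := by
      intro g hg
      have h := hoth g
      rw [if_pos hg, if_neg (fun h' : g = t => htj (h' ▸ hg))] at h
      have h2 : others σ j g + 1 = b g := by omega
      rw [h2]
    have hw2 : ∀ g, g ∉ σ j → c j g (b g + 1) ≤ c j g (others σ j g + 1) := by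
      intro g hg
      have h := hoth g
      rw [if_neg hg] at h
      exact hc j g (by omega)
    calc ∑ g ∈ σ j, c j g (others σ j g + 1) = ∑ g ∈ σ j, c j g (b g) :=
          sum_congr rfl hw1
      _ = ∑ g ∈ σ j ∩ T₀, c j g (b g) + ∑ g ∈ σ j \ T₀, c j g (b g) :=
          (sum_inter_add_sum_sdiff _ _ _).symm
      _ ≤ ∑ g ∈ σ j ∩ T₀, c j g (b g) + ∑ g ∈ T₀ \ σ j, c j g (b g + 1) :=
          add_le_add_right (hstar j T₀ hT₀) _
      _ ≤ ∑ g ∈ T₀ ∩ σ j, c j g (others σ j g + 1) + ∑ g ∈ T₀ \ σ j, c j g (others σ j g + 1) := by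
          rw [inter_comm]
          refine add_le_add (le_of_eq (sum_congr rfl fun g hg =>
            (hw1 g (mem_inter.mp hg).2).symm)) (sum_le_sum fun g hg =>
            hw2 g (mem_sdiff.mp hg).2)
      _ = ∑ g ∈ T₀, c j g (others σ j g + 1) := sum_inter_add_sum_sdiff _ _ _
  -- actual deviation weights coincide with the token-weight function u
  have hueq : ∀ g, c j g (others σ j g + 1) =
      (if g ∈ (σ j).erase t then c j g (b g) else c j g (b g + 1)) := by
    intro g
    by_cases hg : g ∈ σ j
    · have h := hoth g
      rw [if_pos hg] at h
      by_cases hgt : g = t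
      · subst hgt
        rw [if_neg (notMem_erase g _), if_pos rfl] at *
        have h2 : others σ j g + 1 = b g + 1 := by omega
        rw [h2]
      · rw [if_pos (mem_erase.mpr ⟨hgt, hg⟩)]
        rw [if_neg hgt] at h
        have h2 : others σ j g + 1 = b g := by omega
        rw [h2]
    · have h := hoth g
      have hgt : g ≠ t := fun h' => hg (h' ▸ htj)
      rw [if_neg hg, if_neg hgt] at h
      rw [if_neg (fun h' => hg (mem_of_mem_erase h'))]
      have h2 : others σ j g + 1 = b g + 1 := by omega
      rw [h2]
  have himp : ∃ T' ∈ 𝒮fam j,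
      ∑ g ∈ T', (if g ∈ (σ j).erase t then c j g (b g) else c j g (b g + 1)) <
      ∑ g ∈ σ j, (if g ∈ (σ j).erase t then c j g (b g) else c j g (b g + 1)) := by
    refine ⟨T₀, hT₀, ?_⟩
    have e1 : psCost c σ j =
        ∑ g ∈ σ j, (if g ∈ (σ j).erase t then c j g (b g) else c j g (b g + 1)) := by
      rw [psCost_eq]; exact sum_congr rfl fun g _ => hueq g
    have e2 : psCost c (Function.update σ j T₀) j =
        ∑ g ∈ T₀, (if g ∈ (σ j).erase t then c j g (b g) else c j g (b g + 1)) := by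
      rw [psCost_update_eq]; exact sum_congr rfl fun g _ => hueq g
    rw [← e1, ← e2]; exact hlt
  obtain ⟨f, hfS, hfB, hqlt, humin⟩ := phase_swap (hfam j) (hmem j) htj
    (fun g => c j g (b g)) (fun g => c j g (b g + 1))
    (fun g => if g ∈ (σ j).erase t then c j g (b g) else c j g (b g + 1))
    hpq (fun g => rfl) (hstar j) himp
  have hft : f ≠ t := fun h => absurd hqlt (by rw [h]; exact lt_irrefl _)
  refine ⟨Function.update σ j (insert f ((σ j).erase t)), f, ?_, ?_, ?_, ?_⟩
  · intro i
    by_cases hij : i = j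
    · subst hij; rw [Function.update_self]; exact hfB
    · rw [Function.update_of_ne hij]; exact hmem i
  · intro e
    rw [numPlayersOn_update]
    have h1 := hoth e
    by_cases hef : e = f
    · subst hef
      rw [if_pos (mem_insert_self _ _), if_pos rfl]
      rw [if_neg hfS, if_neg hft] at h1
      omega
    · rw [if_neg hef]
      by_cases het : e = t
      · have hnot : e ∉ insert f ((σ j).erase t) := by
          intro h
          rcases mem_insert.mp h with h' | h'
          · exact hef h'
          · exact (mem_erase.mp h').1 het
        rw [if_neg hnot]
        rw [if_pos (show e ∈ σ j from het ▸ htj), if_pos het] at h1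
        omega
      · have hiff : e ∈ insert f ((σ j).erase t) ↔ e ∈ σ j := by
          constructor
          · intro h
            rcases mem_insert.mp h with h' | h'
            · exact absurd h' hef
            · exact (mem_erase.mp h').2
          · intro h
            exact mem_insert_of_mem (mem_erase.mpr ⟨het, h⟩)
        rw [if_neg het] at h1
        by_cases heσ : e ∈ σ j
        · rw [if_pos (hiff.mpr heσ)]
          rw [if_pos heσ] at h1
          omega
        · rw [if_neg (fun h => heσ (hiff.mp h))]
          rw [if_neg heσ] at h1
          omega
  · intro i T hT
    by_cases hij : i = j
    · subst hij
      rw [Function.update_self]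
      have hmin := humin T hT
      have h2 : ∑ g ∈ insert f ((σ i).erase t) \ T,
            (if g ∈ (σ i).erase t then c i g (b g) else c i g (b g + 1)) ≤
          ∑ g ∈ T \ insert f ((σ i).erase t),
            (if g ∈ (σ i).erase t then c i g (b g) else c i g (b g + 1)) := by
        rw [← sum_inter_add_sum_sdiff (insert f ((σ i).erase t)) T _,
          ← sum_inter_add_sum_sdiff T (insert f ((σ i).erase t)) _,
          inter_comm T (insert f ((σ i).erase t))] at hmin
        exact le_of_add_le_add_left hmin
      calc ∑ g ∈ insert f ((σ i).erase t) \ T, c i g (b g)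
          ≤ ∑ g ∈ insert f ((σ i).erase t) \ T,
              (if g ∈ (σ i).erase t then c i g (b g) else c i g (b g + 1)) := by
            refine sum_le_sum fun g _ => ?_
            split_ifs
            · exact le_rfl
            · exact hpq g
        _ ≤ ∑ g ∈ T \ insert f ((σ i).erase t),
              (if g ∈ (σ i).erase t then c i g (b g) else c i g (b g + 1)) := h2
        _ ≤ ∑ g ∈ T \ insert f ((σ i).erase t), c i g (b g + 1) := by
            refine sum_le_sum fun g _ => ?_
            split_ifs
            · exact hpq g
            · exact le_rfl
    · rw [Function.update_of_ne hij]
      exact hstar i T hT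
  · unfold pot
    have hrk : ((Finset.univ : Finset (N × E)).filter
          (fun pr => c pr.1 pr.2 (b pr.2 + 1) < c j f (b f + 1))).card <
        ((Finset.univ : Finset (N × E)).filter
          (fun pr => c pr.1 pr.2 (b pr.2 + 1) < c j t (b t + 1))).card := by
      apply card_lt_card
      constructor
      · intro pr hpr
        rw [mem_filter] at hpr ⊢
        exact ⟨hpr.1, lt_trans hpr.2 hqlt⟩
      · intro hsup
        have hmem2 : (⟨j, f⟩ : N × E) ∈ (Finset.univ : Finset (N × E)).filter
            (fun pr => c pr.1 pr.2 (b pr.2 + 1) < c j t (b t + 1)) :=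
          mem_filter.mpr ⟨mem_univ _, hqlt⟩
        have := mem_filter.mp (hsup hmem2)
        exact lt_irrefl _ this.2
    have hj : ∑ g ∈ insert f ((σ j).erase t),
          ((Finset.univ : Finset (N × E)).filter
            (fun pr => c pr.1 pr.2 (b pr.2 + 1) < c j g (b g + 1))).card <
        ∑ g ∈ σ j, ((Finset.univ : Finset (N × E)).filter
            (fun pr => c pr.1 pr.2 (b pr.2 + 1) < c j g (b g + 1))).card := by
      rw [sum_insert (fun h => hfS (mem_of_mem_erase h))]
      rw [← Finset.add_sum_erase (σ j) _ htj]
      exact Nat.add_lt_add_right hrk _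
    apply sum_lt_sum
    · intro i _
      by_cases hij : i = j
      · subst hij
        rw [Function.update_self]
        exact le_of_lt hj
      · rw [Function.update_of_ne hij]
    · refine ⟨j, mem_univ j, ?_⟩
      rw [Function.update_self]
      exact hj

lemma phase (𝒮fam : N → Finset (Finset E)) (hfam : ∀ i, IsBaseFamily (𝒮fam i))
    (c : N → E → ℕ → NNReal) (hc : ∀ i e, Monotone (c i e)) (b : E → ℕ) :
    ∀ (M : ℕ) (σ : N → Finset E) (t : E), (∀ i, σ i ∈ 𝒮fam i) →
      (∀ e, numPlayersOn σ e = b e + if e = t then 1 else 0) →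
      (∀ i, ∀ T ∈ 𝒮fam i, ∑ g ∈ σ i \ T, c i g (b g) ≤ ∑ g ∈ T \ σ i, c i g (b g + 1)) →
      pot c b σ ≤ M →
      ∃ σ', (∀ i, σ' i ∈ 𝒮fam i) ∧
        ∀ i, ∀ T ∈ 𝒮fam i, psCost c σ' i ≤ psCost c (Function.update σ' i T) i := by
  intro M
  induction M with
  | zero =>
    intro σ t h1 h2 h3 h4
    by_cases hN : ∀ i, ∀ T ∈ 𝒮fam i, psCost c σ i ≤ psCost c (Function.update σ i T) i
    · exact ⟨σ, h1, hN⟩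
    · obtain ⟨σ', t', _, _, _, hpot⟩ := phase_step 𝒮fam hfam c hc b σ t h1 h2 h3 hN
      omega
  | succ M ih =>
    intro σ t h1 h2 h3 h4
    by_cases hN : ∀ i, ∀ T ∈ 𝒮fam i, psCost c σ i ≤ psCost c (Function.update σ i T) i
    · exact ⟨σ, h1, hN⟩
    · obtain ⟨σ', t', m1, m2, m3, hpot⟩ := phase_step 𝒮fam hfam c hc b σ t h1 h2 h3 hN
      exact ih σ' t' m1 m2 m3 (by omega)


lemma outer (𝒮 : N → Finset (Finset E)) (hmatroid : ∀ i, IsBaseFamily (𝒮 i))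
    (c : N → E → ℕ → NNReal) (hc : ∀ i e, Monotone (c i e)) :
    ∀ (m : ℕ) (k : N → ℕ), (∀ i, ∃ S ∈ 𝒮 i, k i ≤ S.card) → (∑ i, k i = m) →
    ∃ σ : N → Finset E, (∀ i, σ i ∈ trunc (𝒮 i) (k i)) ∧
      ∀ i, ∀ T ∈ trunc (𝒮 i) (k i), psCost c σ i ≤ psCost c (Function.update σ i T) i := by
  intro m
  induction m with
  | zero =>
    intro k hk hsum
    have hk0 : ∀ i, k i = 0 := by
      intro i
      have := Finset.sum_eq_zero_iff.mp hsum i (mem_univ i)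
      exact this
    refine ⟨fun _ => ∅, fun i => ?_, fun i T hT => ?_⟩
    · refine mem_trunc.mpr ⟨by rw [card_empty, hk0 i], ?_⟩
      obtain ⟨S, hS⟩ := (hmatroid i).1
      exact ⟨S, hS, empty_subset S⟩
    · have hT0 : T = ∅ := by
        have := (mem_trunc.mp hT).1
        rw [hk0 i] at this
        exact card_eq_zero.mp this
      rw [hT0]
      rw [show (∅ : Finset E) = (fun (_ : N) => (∅ : Finset E)) i from rfl,
        Function.update_eq_self]
  | succ m ih =>
    intro k hk hsum
    have hj : ∃ j, k j ≠ 0 := by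
      by_contra h
      push_neg at h
      rw [Finset.sum_eq_zero (fun i _ => h i)] at hsum
      omega
    obtain ⟨j, hj⟩ := hj
    set k' : N → ℕ := Function.update k j (k j - 1) with hk'def
    have hsum' : ∑ i, k' i = m := by
      rw [hk'def, Finset.sum_update_of_mem (mem_univ j)]
      have hdecomp : ∑ i, k i = k j + ∑ i ∈ univ.erase j, k i :=
        (Finset.add_sum_erase univ k (mem_univ j)).symm
      rw [Finset.erase_eq] at hdecomp
      omega
    have hk'h : ∀ i, ∃ S ∈ 𝒮 i, k' i ≤ S.card := by
      intro i
      obtain ⟨S, hS, h⟩ := hk i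
      by_cases hij : i = j
      · subst hij
        rw [hk'def, Function.update_self]
        exact ⟨S, hS, le_trans (Nat.sub_le _ _) h⟩
      · rw [hk'def, Function.update_of_ne hij]
        exact ⟨S, hS, h⟩
    obtain ⟨σ, hmem, hnash⟩ := ih k' hk'h hsum'
    -- star property w.r.t. the current congestion values
    have hstar0 : ∀ i, ∀ T ∈ trunc (𝒮 i) (k' i),
        ∑ g ∈ σ i \ T, c i g (numPlayersOn σ g) ≤
        ∑ g ∈ T \ σ i, c i g (numPlayersOn σ g + 1) := by
      intro i T hT
      have h := (nash_iff_star c σ i T).mp (hnash i T hT)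
      calc ∑ g ∈ σ i \ T, c i g (numPlayersOn σ g)
          = ∑ g ∈ σ i \ T, c i g (others σ i g + 1) := by
            refine sum_congr rfl fun g hg => ?_
            rw [numPlayersOn_eq_others σ i g, if_pos (mem_sdiff.mp hg).1]
        _ ≤ ∑ g ∈ T \ σ i, c i g (others σ i g + 1) := h
        _ = ∑ g ∈ T \ σ i, c i g (numPlayersOn σ g + 1) := by
            refine sum_congr rfl fun g hg => ?_
            rw [numPlayersOn_eq_others σ i g, if_neg (mem_sdiff.mp hg).2]
    -- extend player j's strategy by a cheapest feasible element
    have hSj : σ j ∈ trunc (𝒮 j) (k j - 1) := by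
      have := hmem j
      rwa [hk'def, Function.update_self] at this
    have hSjcard : (σ j).card = k j - 1 := (mem_trunc.mp hSj).1
    have hSjind : Ind (𝒮 j) (σ j) := (mem_trunc.mp hSj).2
    obtain ⟨S₀, hS₀, hS₀c⟩ := hk j
    obtain ⟨f₀, hf₀S₀, hf₀S, hf₀ind⟩ := aug (hmatroid j) hSjind (ind_of_mem hS₀) (by omega)
    have hkj1 : k j - 1 + 1 = k j := by omega
    have hf₀mem : insert f₀ (σ j) ∈ trunc (𝒮 j) (k j) :=
      mem_trunc.mpr ⟨by rw [card_insert_of_notMem hf₀S, hSjcard, hkj1], hf₀ind⟩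
    have hF₀ne : (univ.filter
        (fun f => f ∉ σ j ∧ insert f (σ j) ∈ trunc (𝒮 j) (k j))).Nonempty :=
      ⟨f₀, mem_filter.mpr ⟨mem_univ _, hf₀S, hf₀mem⟩⟩
    obtain ⟨fs, hfsF, hfsmin⟩ := exists_min_image _
      (fun f => c j f (numPlayersOn σ f + 1)) hF₀ne
    obtain ⟨-, hfsS, hfsB1⟩ :
        fs ∈ univ ∧ fs ∉ σ j ∧ insert fs (σ j) ∈ trunc (𝒮 j) (k j) := by
      have := mem_filter.mp hfsF
      exact ⟨this.1, this.2.1, this.2.2⟩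
    have hB1 : IsBaseFamily (trunc (𝒮 j) (k j)) := trunc_isBaseFamily (hmatroid j) (hk j)
    have h01 : ∀ A ∈ trunc (𝒮 j) (k j), ∀ x ∈ A, A.erase x ∈ trunc (𝒮 j) (k j - 1) := by
      intro A hA x hx
      rw [← hkj1] at hA
      exact trunc_erase hA hx
    have hstarj : ∀ T ∈ trunc (𝒮 j) (k j),
        ∑ g ∈ insert fs (σ j) \ T, c j g (numPlayersOn σ g) ≤
        ∑ g ∈ T \ insert fs (σ j), c j g (numPlayersOn σ g + 1) := by
      refine greedy_step hB1 h01 hfsS hfsB1 _ _ (fun g => hc j g (Nat.le_succ _)) ?_ ?_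
      · have := hstar0 j
        rw [hk'def] at this
        intro T hT
        exact this T (by rwa [Function.update_self])
      · intro f hf1 hf2
        exact hfsmin f (mem_filter.mpr ⟨mem_univ _, hf1, hf2⟩)
    -- run the token phase
    have hmem1 : ∀ i, Function.update σ j (insert fs (σ j)) i ∈ trunc (𝒮 i) (k i) := by
      intro i
      by_cases hij : i = j
      · subst hij; rw [Function.update_self]; exact hfsB1
      · rw [Function.update_of_ne hij]
        have := hmem i
        rwa [hk'def, Function.update_of_ne hij] at this
    have hcount1 : ∀ e, numPlayersOn (Function.update σ j (insert fs (σ j))) e =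
        numPlayersOn σ e + if e = fs then 1 else 0 := by
      intro e
      rw [numPlayersOn_update]
      have h1 := numPlayersOn_eq_others σ j e
      by_cases hef : e = fs
      · subst hef
        rw [if_pos (mem_insert_self _ _), if_pos rfl]
        rw [if_neg hfsS] at h1
        omega
      · rw [if_neg hef]
        by_cases heσ : e ∈ σ j
        · rw [if_pos (mem_insert_of_mem heσ)]
          rw [if_pos heσ] at h1
          omega
        · rw [if_neg (fun h => by
            rcases mem_insert.mp h with h' | h'
            · exact hef h'
            · exact heσ h')]
          rw [if_neg heσ] at h1
          omega
    have hstar1 : ∀ i, ∀ T ∈ trunc (𝒮 i) (k i),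
        ∑ g ∈ Function.update σ j (insert fs (σ j)) i \ T, c i g (numPlayersOn σ g) ≤
        ∑ g ∈ T \ Function.update σ j (insert fs (σ j)) i, c i g (numPlayersOn σ g + 1) := by
      intro i T hT
      by_cases hij : i = j
      · subst hij
        rw [Function.update_self]
        exact hstarj T hT
      · rw [Function.update_of_ne hij]
        have := hstar0 i
        rw [hk'def] at this
        exact this T (by rwa [Function.update_of_ne hij])
    exact phase (fun i => trunc (𝒮 i) (k i))
      (fun i => trunc_isBaseFamily (hmatroid i) (hk i)) c hc
      (fun e => numPlayersOn σ e)
      (pot c (fun e => numPlayersOn σ e) (Function.update σ j (insert fs (σ j))))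
      (Function.update σ j (insert fs (σ j))) fs hmem1 hcount1 hstar1 le_rfl


end GameAux

/-- Every player-specific matroid congestion game possesses a pure Nash
equilibrium. -/
theorem player_specific_matroid_congestion_game_has_PNE
    {N E : Type*} [Fintype N] [DecidableEq N] [Fintype E] [DecidableEq E]
    (𝒮 : N → Finset (Finset E)) (hmatroid : ∀ i, IsBaseFamily (𝒮 i))
    (c : N → E → ℕ → NNReal)
    (hc : ∀ i e, Monotone (c i e)) :
    ∃ σ : N → Finset E, (∀ i, σ i ∈ 𝒮 i) ∧
      ∀ i : N, ∀ S' ∈ 𝒮 i,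
        psCost c σ i ≤ psCost c (Function.update σ i S') i := by
  classical
  obtain ⟨σ, hmem, hnash⟩ := outer 𝒮 hmatroid c hc
    (∑ i, ((hmatroid i).1.choose).card) (fun i => ((hmatroid i).1.choose).card)
    (fun i => ⟨_, (hmatroid i).1.choose_spec, le_rfl⟩) rfl
  have htr : ∀ i, trunc (𝒮 i) ((hmatroid i).1.choose).card = 𝒮 i :=
    fun i => trunc_rank (hmatroid i) (hmatroid i).1.choose_spec
  exact ⟨σ, fun i => by rw [← htr i]; exact hmem i,
    fun i T hT => hnash i T (by rw [htr i]; exact hT)⟩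
end

section
/- Every singleton congestion game with mixed costs has a pure Nash equilibrium. -/
open Finset

/-- The cost `γ_i(σ) = α_i · ∑_{e ∈ σ i} ℓ_e(n_e(σ)) + (1 - α_i) · max_{e ∈ σ i} b_e(n_e(σ))`
imposed on player `i` in a congestion game with mixed costs. -/
noncomputable def mixedCost {N E : Type*} [Fintype N] [DecidableEq E]
    (ℓ b : E → ℕ → NNReal) (α : N → NNReal)
    (σ : N → Finset E) (i : N) : NNReal :=
  α i * (∑ e ∈ σ i, ℓ e (numPlayersOn σ e)) +
    (1 - α i) * (σ i).sup (fun e => b e (numPlayersOn σ e))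

section Aux

variable {N E : Type*} [DecidableEq N] [DecidableEq E]

/-- Load of resource `e` counting only players in `P`. -/
def pload (P : Finset N) (τ : N → E) (e : E) : ℕ :=
  (P.filter (fun i => τ i = e)).card

lemma pload_eq_erase (P : Finset N) (τ : N → E) (i : N) (hi : i ∈ P) (e : E) :
    pload P τ e = pload (P.erase i) τ e + (if τ i = e then 1 else 0) := by
  unfold pload
  conv_lhs => rw [← Finset.insert_erase hi]
  rw [Finset.filter_insert]
  by_cases h : τ i = e
  · rw [if_pos h, if_pos h, Finset.card_insert_of_notMem]
    simp
  · rw [if_neg h, if_neg h, Nat.add_zero]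

lemma pload_update_eq_erase (P : Finset N) (τ : N → E) (i : N) (hi : i ∈ P) (a e : E) :
    pload P (Function.update τ i a) e
      = pload (P.erase i) τ e + (if a = e then 1 else 0) := by
  rw [pload_eq_erase P _ i hi e, Function.update_self]
  unfold pload
  congr 2
  apply Finset.filter_congr
  intro x hx
  rw [Function.update_of_ne (Finset.ne_of_mem_erase hx)]

/-- The inner "improvement path" lemma: from a state satisfying the invariants,
an equilibrium for the player set `insert j Q` exists. -/
lemma inner_lemma (T : N → Finset E) (c : N → E → ℕ → NNReal)
    (hc : ∀ i e, Monotone (c i e))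
    (Q : Finset N) (j : N) (hj : j ∉ Q) (L : E → ℕ) (τstar : N → E)
    (hQeq : ∀ i ∈ Q, ∀ f ∈ T i, c i (τstar i) (L (τstar i)) ≤ c i f (L f + 1)) :
    ∀ (k : ℕ) (M : Finset N) (τ : N → E) (m : E),
      ((insert j Q) \ M).card ≤ k →
      (∀ i, τ i ∈ T i) →
      (∀ e, pload (insert j Q) τ e = L e + (if e = m then 1 else 0)) →
      j ∈ M → M ⊆ insert j Q →
      (∀ i ∈ M, ∀ f ∈ T i, c i (τ i) (L (τ i) + 1) ≤ c i f (L f + 1)) →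
      (∀ i ∈ Q, i ∉ M → τ i = τstar i) →
      ∃ τ' : N → E, (∀ i, τ' i ∈ T i) ∧
        ∀ i ∈ insert j Q, ∀ f ∈ T i,
          c i (τ' i) (pload (insert j Q) τ' (τ' i))
            ≤ c i f (pload (insert j Q) τ' f + 1) := by
  intro k
  induction k with
  | zero =>
    intro M τ m hcard hA hB hjM hMP hE hF
    -- card (P \ M) = 0 : P ⊆ M
    have hPM : insert j Q ⊆ M := by
      intro x hx
      by_contra hxM
      have : x ∈ (insert j Q) \ M := Finset.mem_sdiff.mpr ⟨hx, hxM⟩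
      have := Finset.card_pos.mpr ⟨x, this⟩
      omega
    refine ⟨τ, hA, ?_⟩
    intro i hi f hf
    have hEi := hE i (hPM hi) f hf
    calc c i (τ i) (pload (insert j Q) τ (τ i))
        ≤ c i (τ i) (L (τ i) + 1) := by
          apply hc; rw [hB]; split <;> omega
      _ ≤ c i f (L f + 1) := hEi
      _ ≤ c i f (pload (insert j Q) τ f + 1) := by
          apply hc; rw [hB]; split <;> omega
  | succ k ih =>
    intro M τ m hcard hA hB hjM hMP hE hF
    by_cases hsat : ∀ i ∈ insert j Q, τ i = m →
        ∀ f ∈ T i, c i m (L m + 1) ≤ c i f (L f + 1)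
    · -- everyone satisfied: τ is an equilibrium
      refine ⟨τ, hA, ?_⟩
      intro i hi f hf
      have hub : c i f (L f + 1) ≤ c i f (pload (insert j Q) τ f + 1) := by
        apply hc; rw [hB]; split <;> omega
      by_cases him : τ i = m
      · calc c i (τ i) (pload (insert j Q) τ (τ i))
            = c i m (L m + 1) := by rw [him, hB, if_pos rfl]
          _ ≤ c i f (L f + 1) := hsat i hi him f hf
          _ ≤ _ := hub
      · have hload : pload (insert j Q) τ (τ i) = L (τ i) := by
          rw [hB, if_neg him, Nat.add_zero]
        rw [hload]
        by_cases hiM : i ∈ M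
        · calc c i (τ i) (L (τ i)) ≤ c i (τ i) (L (τ i) + 1) := hc _ _ (Nat.le_succ _)
            _ ≤ c i f (L f + 1) := hE i hiM f hf
            _ ≤ _ := hub
        · have hiQ : i ∈ Q := by
            rcases Finset.mem_insert.mp hi with h | h
            · exact absurd (h ▸ hjM) hiM
            · exact h
          have := hF i hiQ hiM
          calc c i (τ i) (L (τ i)) = c i (τstar i) (L (τstar i)) := by rw [this]
            _ ≤ c i f (L f + 1) := hQeq i hiQ f hf
            _ ≤ _ := hub
    · -- some player on `m` wants to move
      push_neg at hsat
      obtain ⟨i, hiP, him, f, hf, hlt⟩ := hsat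
      have hiM : i ∉ M := by
        intro hiM
        exact absurd (him ▸ hE i hiM f hf) (not_le.mpr hlt)
      obtain ⟨f0, hf0, hmin⟩ :=
        Finset.exists_min_image (T i) (fun g => c i g (L g + 1)) ⟨f, hf⟩
      have hlt0 : c i f0 (L f0 + 1) < c i m (L m + 1) :=
        lt_of_le_of_lt (hmin f hf) hlt
      have hf0m : f0 ≠ m := fun h => absurd hlt0 (by rw [h]; exact lt_irrefl _)
      set τ' := Function.update τ i f0 with hτ'
      have hτ'i : τ' i = f0 := Function.update_self i f0 τ
      have hτ'ne : ∀ x ≠ i, τ' x = τ x := fun x hx => Function.update_of_ne hx f0 τ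
      have hB' : ∀ e, pload (insert j Q) τ' e = L e + (if e = f0 then 1 else 0) := by
        intro e
        have h1 := pload_eq_erase (insert j Q) τ i hiP e
        have h2 := pload_update_eq_erase (insert j Q) τ i hiP f0 e
        have h3 := hB e
        rw [him] at h1
        rw [h2]
        by_cases he1 : e = f0
        · subst he1
          rw [if_pos rfl]
          rw [if_neg (fun h : m = e => hf0m h.symm), Nat.add_zero] at h1
          rw [if_neg (fun h : e = m => hf0m h), Nat.add_zero] at h3
          omega
        · rw [if_neg (fun h : f0 = e => he1 h.symm), if_neg he1]
          by_cases he2 : e = m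
          · subst he2
            rw [if_pos rfl] at h1
            rw [if_pos rfl] at h3
            omega
          · rw [if_neg (fun h : m = e => he2 h.symm), Nat.add_zero] at h1
            rw [if_neg he2, Nat.add_zero] at h3
            omega
      refine ih (insert i M) τ' f0 ?_ ?_ hB' (Finset.mem_insert_of_mem hjM)
        (Finset.insert_subset hiP hMP) ?_ ?_
      · -- card decreases
        have hmem : i ∈ (insert j Q) \ M := Finset.mem_sdiff.mpr ⟨hiP, hiM⟩
        have : (insert j Q) \ (insert i M) = ((insert j Q) \ M).erase i := by
          ext x
          simp only [Finset.mem_sdiff, Finset.mem_insert, Finset.mem_erase, not_or]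
          tauto
        rw [this, Finset.card_erase_of_mem hmem]
        have := Finset.card_pos.mpr ⟨i, hmem⟩
        omega
      · intro x
        by_cases hx : x = i
        · rw [hx, hτ'i]; exact hf0
        · rw [hτ'ne x hx]; exact hA x
      · intro x hx g hg
        rcases Finset.mem_insert.mp hx with h | h
        · subst h; rw [hτ'i]; exact hmin g hg
        · have hxi : x ≠ i := fun hxi => hiM (hxi ▸ h)
          rw [hτ'ne x hxi]; exact hE x h g hg
      · intro x hxQ hxM
        have hxi : x ≠ i := fun h => hxM (h ▸ Finset.mem_insert_self i M)
        have hxM' : x ∉ M := fun h => hxM (Finset.mem_insert_of_mem h)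
        rw [hτ'ne x hxi]; exact hF x hxQ hxM'

/-- The key combinatorial lemma: singleton congestion games with player-specific
monotone costs have a pure Nash equilibrium (stated for the players in `P`). -/
lemma key_lemma (T : N → Finset E) (hT : ∀ i, (T i).Nonempty)
    (c : N → E → ℕ → NNReal) (hc : ∀ i e, Monotone (c i e)) (P : Finset N) :
    ∃ τ : N → E, (∀ i, τ i ∈ T i) ∧
      ∀ i ∈ P, ∀ f ∈ T i,
        c i (τ i) (pload P τ (τ i)) ≤ c i f (pload P τ f + 1) := by
  classical
  induction P using Finset.cons_induction with
  | empty =>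
    exact ⟨fun i => (hT i).choose, fun i => (hT i).choose_spec, by simp⟩
  | cons j Q hj ihQ =>
    obtain ⟨τs, hτs, heq⟩ := ihQ
    rw [Finset.cons_eq_insert]
    set L : E → ℕ := pload Q τs with hL
    have hQeq : ∀ i ∈ Q, ∀ f ∈ T i, c i (τs i) (L (τs i)) ≤ c i f (L f + 1) :=
      fun i hi f hf => heq i hi f hf
    obtain ⟨e0, he0, hmin⟩ :=
      Finset.exists_min_image (T j) (fun g => c j g (L g + 1)) (hT j)
    set τ0 := Function.update τs j e0 with hτ0
    have hτ0j : τ0 j = e0 := Function.update_self j e0 τs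
    have hτ0ne : ∀ x ≠ j, τ0 x = τs x := fun x hx => Function.update_of_ne hx e0 τs
    have herase : (insert j Q).erase j = Q := by
      rw [Finset.erase_insert hj]
    have hB : ∀ e, pload (insert j Q) τ0 e = L e + (if e = e0 then 1 else 0) := by
      intro e
      rw [pload_update_eq_erase (insert j Q) τs j (Finset.mem_insert_self j Q) e0 e,
        herase]
      by_cases he : e = e0
      · subst he; rw [if_pos rfl, hL]
      · rw [if_neg (fun h : e0 = e => he h.symm), if_neg he, hL]
    refine inner_lemma T c hc Q j hj L τs hQeq ((insert j Q \ {j}).card) {j} τ0 e0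
      le_rfl ?_ hB (Finset.mem_singleton_self j)
      (Finset.singleton_subset_iff.mpr (Finset.mem_insert_self j Q)) ?_ ?_
    · intro x
      by_cases hx : x = j
      · rw [hx, hτ0j]; exact he0
      · rw [hτ0ne x hx]; exact hτs x
    · intro x hx g hg
      rw [Finset.mem_singleton] at hx
      subst hx
      rw [hτ0j]
      exact hmin g hg
    · intro x hxQ hxM
      have hxj : x ≠ j := fun h => hj (h ▸ hxQ)
      exact hτ0ne x hxj

end Aux

/-- Every singleton congestion game with mixed costs has a pure Nash equilibrium. -/
theorem singleton_congestion_game_mixed_costs_has_PNE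
    {N E : Type*} [Fintype N] [DecidableEq N] [Fintype E] [DecidableEq E]
    (𝒮 : N → Finset (Finset E)) (hne : ∀ i, (𝒮 i).Nonempty)
    (hsingleton : ∀ i, ∀ S ∈ 𝒮 i, S.card = 1)
    (ℓ b : E → ℕ → NNReal) (hℓ : ∀ e, Monotone (ℓ e)) (hb : ∀ e, Monotone (b e))
    (α : N → NNReal) (hα : ∀ i, α i ≤ 1) :
    ∃ σ : N → Finset E, (∀ i, σ i ∈ 𝒮 i) ∧
      ∀ i : N, ∀ S' ∈ 𝒮 i,
        mixedCost ℓ b α σ i ≤ mixedCost ℓ b α (Function.update σ i S') i := by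
  classical
  -- the set of resources available to player `i`
  set T : N → Finset E := fun i => (𝒮 i).biUnion id with hTdef
  have hmemT : ∀ i e, e ∈ T i ↔ ({e} : Finset E) ∈ 𝒮 i := by
    intro i e
    constructor
    · intro he
      obtain ⟨S, hS, heS⟩ := Finset.mem_biUnion.mp he
      obtain ⟨a, ha⟩ := Finset.card_eq_one.mp (hsingleton i S hS)
      have : e = a := by rw [ha] at heS; exact Finset.mem_singleton.mp heS
      rw [this, ← ha]; exact hS
    · intro h
      exact Finset.mem_biUnion.mpr ⟨{e}, h, Finset.mem_singleton_self e⟩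
  have hT : ∀ i, (T i).Nonempty := by
    intro i
    obtain ⟨S, hS⟩ := hne i
    obtain ⟨a, ha⟩ := Finset.card_eq_one.mp (hsingleton i S hS)
    exact ⟨a, (hmemT i a).mpr (ha ▸ hS)⟩
  set c : N → E → ℕ → NNReal := fun i e k => α i * ℓ e k + (1 - α i) * b e k with hcdef
  have hc : ∀ i e, Monotone (c i e) := by
    intro i e k l hkl
    exact add_le_add (mul_le_mul_right (hℓ e hkl) _) (mul_le_mul_right (hb e hkl) _)
  obtain ⟨τ, hτ, heq⟩ := key_lemma T hT c hc Finset.univ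
  -- relate `numPlayersOn` for singleton profiles to `pload`
  have hnum : ∀ (ρ : N → E) (e : E),
      numPlayersOn (fun k => ({ρ k} : Finset E)) e = pload Finset.univ ρ e := by
    intro ρ e
    unfold numPlayersOn pload
    congr 1
    apply Finset.filter_congr
    intro x _
    simp [eq_comm]
  have hcost : ∀ (ρ : N → E) (i : N),
      mixedCost ℓ b α (fun k => ({ρ k} : Finset E)) i
        = c i (ρ i) (pload Finset.univ ρ (ρ i)) := by
    intro ρ i
    unfold mixedCost
    rw [Finset.sum_singleton, Finset.sup_singleton, hnum, hcdef]
  refine ⟨fun i => {τ i}, fun i => (hmemT i (τ i)).mp (hτ i), ?_⟩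
  intro i S' hS'
  obtain ⟨f, hfS'⟩ := Finset.card_eq_one.mp (hsingleton i S' hS')
  subst hfS'
  have hfT : f ∈ T i := (hmemT i f).mpr hS'
  have hupd : Function.update (fun k => ({τ k} : Finset E)) i {f}
      = fun k => ({(Function.update τ i f) k} : Finset E) := by
    funext k
    by_cases hk : k = i
    · subst hk; rw [Function.update_self, Function.update_self]
    · rw [Function.update_of_ne hk, Function.update_of_ne hk]
  rw [hupd, hcost, hcost, Function.update_self]
  by_cases hfτ : f = τ i
  · subst hfτ
    rw [Function.update_eq_self]
  · have hload : pload Finset.univ (Function.update τ i f) f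
        = pload Finset.univ τ f + 1 := by
      rw [pload_update_eq_erase Finset.univ τ i (Finset.mem_univ i) f f, if_pos rfl,
        pload_eq_erase Finset.univ τ i (Finset.mem_univ i) f,
        if_neg (fun h => hfτ h.symm)]
    rw [hload]
    exact heq i (Finset.mem_univ i) f hfT
end

section
/- Every matroid congestion game with mixed costs in which α_i ∈ {0,1} holds for each player i has a pure Nash equilibrium. -/
open Finset

namespace PNEProof

variable {E : Type*} [DecidableEq E]

/-- Independence: subsets of bases. -/
def Ind (ℬ : Finset (Finset E)) (I : Finset E) : Prop := ∃ S ∈ ℬ, I ⊆ S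

variable {ℬ : Finset (Finset E)}

lemma exch (hB : IsBaseFamily ℬ) {S T : Finset E} (hS : S ∈ ℬ) (hT : T ∈ ℬ) {e : E}
    (he : e ∈ S) (he' : e ∉ T) : ∃ f, f ∈ T ∧ f ∉ S ∧ insert f (S.erase e) ∈ ℬ := by
  obtain ⟨f, hf, hf'⟩ := hB.2 S hS T hT e (mem_sdiff.2 ⟨he, he'⟩)
  exact ⟨f, (mem_sdiff.1 hf).1, (mem_sdiff.1 hf).2, hf'⟩

lemma base_card_eq_aux (hB : IsBaseFamily ℬ) :
    ∀ k S T, S ∈ ℬ → T ∈ ℬ → (S \ T).card = k → S.card = T.card := by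
  intro k
  induction k with
  | zero =>
    intro S T hS hT h
    have hsub : S ⊆ T := by
      rw [← sdiff_eq_empty_iff_subset]
      exact card_eq_zero.1 h
    have : T ⊆ S := by
      intro x hx
      by_contra hxS
      obtain ⟨f, hf, hf', _⟩ := exch hB hT hS hx hxS
      exact hf' (hsub hf)
    rw [subset_antisymm hsub this]
  | succ n ih =>
    intro S T hS hT h
    have hne : (S \ T).Nonempty := by
      rw [← card_pos, h]; omega
    obtain ⟨e, he⟩ := hne
    rw [mem_sdiff] at he
    obtain ⟨f, hfT, hfS, hS2⟩ := exch hB hS hT he.1 he.2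
    have hcard : (insert f (S.erase e)).card = S.card := by
      rw [card_insert_of_notMem (fun hc => hfS (erase_subset _ _ hc)),
        card_erase_of_mem he.1]
      have : 1 ≤ S.card := card_pos.2 ⟨e, he.1⟩
      omega
    have hdiff : insert f (S.erase e) \ T = (S \ T).erase e := by
      ext x
      simp only [mem_sdiff, mem_insert, mem_erase]
      constructor
      · rintro ⟨hx1 | hx2, hxT⟩
        · exact absurd (hx1 ▸ hfT) hxT
        · exact ⟨hx2.1, hx2.2, hxT⟩
      · rintro ⟨hxe, hxS, hxT⟩
        exact ⟨Or.inr ⟨hxe, hxS⟩, hxT⟩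
    have := ih (insert f (S.erase e)) T hS2 hT
      (by rw [hdiff, card_erase_of_mem (mem_sdiff.2 he), h]; omega)
    omega

lemma base_card_eq (hB : IsBaseFamily ℬ) {S T : Finset E} (hS : S ∈ ℬ) (hT : T ∈ ℬ) :
    S.card = T.card :=
  base_card_eq_aux hB _ S T hS hT rfl

lemma ind_subset {I J : Finset E} (h : J ⊆ I) (hI : Ind ℬ I) : Ind ℬ J := by
  obtain ⟨S, hS, hIS⟩ := hI; exact ⟨S, hS, h.trans hIS⟩

lemma ind_card_le (hB : IsBaseFamily ℬ) {I S : Finset E} (hI : Ind ℬ I) (hS : S ∈ ℬ) :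
    I.card ≤ S.card := by
  obtain ⟨T, hT, hIT⟩ := hI
  calc I.card ≤ T.card := card_le_card hIT
  _ = S.card := base_card_eq hB hT hS

lemma base_of_ind_card (hB : IsBaseFamily ℬ) {I S : Finset E} (hI : Ind ℬ I) (hS : S ∈ ℬ)
    (hc : I.card = S.card) : I ∈ ℬ := by
  obtain ⟨T, hT, hIT⟩ := hI
  have : I = T := eq_of_subset_of_card_le hIT (by rw [hc, base_card_eq hB hT hS])
  exact this ▸ hT

/-- Augmentation property, derived from the base exchange axiom. -/
lemma ind_aug (hB : IsBaseFamily ℬ) {I J : Finset E} (hI : Ind ℬ I) (hJ : Ind ℬ J)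
    (hc : I.card < J.card) : ∃ x ∈ J, x ∉ I ∧ Ind ℬ (insert x I) := by
  by_contra hcon
  push_neg at hcon
  -- joint minimization
  classical
  set P := (ℬ.filter (fun S => I ⊆ S)) ×ˢ (ℬ.filter (fun T => J ⊆ T)) with hP
  have hPne : P.Nonempty := by
    obtain ⟨S, hS, hIS⟩ := hI
    obtain ⟨T, hT, hJT⟩ := hJ
    exact ⟨⟨S, T⟩, mem_product.2 ⟨mem_filter.2 ⟨hS, hIS⟩, mem_filter.2 ⟨hT, hJT⟩⟩⟩
  obtain ⟨⟨S, T⟩, hmem, hmin⟩ := P.exists_min_image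
    (fun p => (p.1 \ (I ∪ p.2)).card + (p.2 \ (J ∪ p.1)).card) hPne
  rw [mem_product, mem_filter, mem_filter] at hmem
  obtain ⟨⟨hS, hIS⟩, hT, hJT⟩ := hmem
  -- Claim 1 : S ⊆ I ∪ T
  have hSIT : S ⊆ I ∪ T := by
    by_contra hc1
    obtain ⟨x, hxS, hxIT⟩ := not_subset.1 hc1
    rw [mem_union] at hxIT
    push_neg at hxIT
    obtain ⟨f, hfT, hfS, hS2⟩ := exch hB hS hT hxS hxIT.2
    have h1 : insert f (S.erase x) \ (I ∪ T) ⊆ (S \ (I ∪ T)).erase x := by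
      intro y hy
      rw [mem_sdiff, mem_insert] at hy
      rcases hy.1 with rfl | hy1
      · exact absurd (mem_union_right _ hfT) hy.2
      · exact mem_erase.2 ⟨(mem_erase.1 hy1).1, mem_sdiff.2 ⟨(mem_erase.1 hy1).2, hy.2⟩⟩
    have h2 : T \ (J ∪ insert f (S.erase x)) ⊆ T \ (J ∪ S) := by
      intro y hy
      rw [mem_sdiff] at hy ⊢
      refine ⟨hy.1, fun hc2 => hy.2 ?_⟩
      rcases mem_union.1 hc2 with h | h
      · exact mem_union_left _ h
      · rcases eq_or_ne y x with rfl | hyx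
        · exact absurd hy.1 hxIT.2
        · exact mem_union_right _ (mem_insert_of_mem (mem_erase.2 ⟨hyx, h⟩))
    have hkey := hmin ⟨insert f (S.erase x), T⟩
      (mem_product.2 ⟨mem_filter.2 ⟨hS2, fun y hy => mem_insert_of_mem
        (mem_erase.2 ⟨fun hc3 => hxIT.1 (hc3 ▸ hy), hIS hy⟩)⟩, mem_filter.2 ⟨hT, hJT⟩⟩)
    dsimp only at hkey
    have hlt1 : (insert f (S.erase x) \ (I ∪ T)).card < (S \ (I ∪ T)).card := by
      calc (insert f (S.erase x) \ (I ∪ T)).card ≤ ((S \ (I ∪ T)).erase x).card :=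
            card_le_card h1
        _ < (S \ (I ∪ T)).card := by
            rw [card_erase_of_mem (mem_sdiff.2 ⟨hxS, by rw [mem_union]; push_neg; exact hxIT⟩)]
            have : 0 < (S \ (I ∪ T)).card := card_pos.2
              ⟨x, mem_sdiff.2 ⟨hxS, by rw [mem_union]; push_neg; exact hxIT⟩⟩
            omega
    have hle2 : (T \ (J ∪ insert f (S.erase x))).card ≤ (T \ (J ∪ S)).card := card_le_card h2
    omega
  -- Claim 2 : T ⊆ J ∪ S
  have hTJS : T ⊆ J ∪ S := by
    by_contra hc1
    obtain ⟨x, hxT, hxJS⟩ := not_subset.1 hc1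
    rw [mem_union] at hxJS
    push_neg at hxJS
    obtain ⟨f, hfS, hfT, hT2⟩ := exch hB hT hS hxT hxJS.2
    have h1 : T.erase x \ (J ∪ S) ⊆ (T \ (J ∪ S)).erase x ∧ True := ⟨by
      intro y hy
      rw [mem_sdiff, mem_erase] at hy
      exact mem_erase.2 ⟨hy.1.1, mem_sdiff.2 ⟨hy.1.2, hy.2⟩⟩, trivial⟩
    have h2 : insert f (T.erase x) \ (J ∪ S) ⊆ (T \ (J ∪ S)).erase x := by
      intro y hy
      rw [mem_sdiff, mem_insert] at hy
      rcases hy.1 with rfl | hy1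
      · exact absurd (mem_union_right _ hfS) hy.2
      · exact mem_erase.2 ⟨(mem_erase.1 hy1).1, mem_sdiff.2 ⟨(mem_erase.1 hy1).2, hy.2⟩⟩
    have h3 : S \ (I ∪ insert f (T.erase x)) ⊆ S \ (I ∪ T) := by
      intro y hy
      rw [mem_sdiff] at hy ⊢
      refine ⟨hy.1, fun hc2 => hy.2 ?_⟩
      rcases mem_union.1 hc2 with h | h
      · exact mem_union_left _ h
      · rcases eq_or_ne y x with rfl | hyx
        · exact absurd hy.1 hxJS.2
        · exact mem_union_right _ (mem_insert_of_mem (mem_erase.2 ⟨hyx, h⟩))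
    have hkey := hmin ⟨S, insert f (T.erase x)⟩
      (mem_product.2 ⟨mem_filter.2 ⟨hS, hIS⟩, mem_filter.2 ⟨hT2, fun y hy => mem_insert_of_mem
        (mem_erase.2 ⟨fun hc3 => hxJS.1 (hc3 ▸ hy), hJT hy⟩)⟩⟩)
    dsimp only at hkey
    have hlt1 : (insert f (T.erase x) \ (J ∪ S)).card < (T \ (J ∪ S)).card := by
      calc (insert f (T.erase x) \ (J ∪ S)).card ≤ ((T \ (J ∪ S)).erase x).card :=
            card_le_card h2
        _ < (T \ (J ∪ S)).card := by
            rw [card_erase_of_mem (mem_sdiff.2 ⟨hxT, by rw [mem_union]; push_neg; exact hxJS⟩)]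
            have : 0 < (T \ (J ∪ S)).card := card_pos.2
              ⟨x, mem_sdiff.2 ⟨hxT, by rw [mem_union]; push_neg; exact hxJS⟩⟩
            omega
    have hle2 : (S \ (I ∪ insert f (T.erase x))).card ≤ (S \ (I ∪ T)).card := card_le_card h3
    omega
  -- Counting
  have hJS : ∀ x ∈ J, x ∈ S → x ∈ I := by
    intro x hxJ hxS
    by_contra hxI
    exact hcon x hxJ hxI ⟨S, hS, insert_subset hxS hIS⟩
  have hTS : T \ S = J \ I := by
    ext x
    rw [mem_sdiff, mem_sdiff]
    constructor
    · rintro ⟨hxT, hxS⟩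
      rcases mem_union.1 (hTJS hxT) with h | h
      · exact ⟨h, fun hxI => hxS (hIS hxI)⟩
      · exact absurd h hxS
    · rintro ⟨hxJ, hxI⟩
      exact ⟨hJT hxJ, fun hxS => hxI (hJS x hxJ hxS)⟩
  have hST : S \ T ⊆ I \ J := by
    intro x hx
    rw [mem_sdiff] at hx ⊢
    rcases mem_union.1 (hSIT hx.1) with h | h
    · exact ⟨h, fun hxJ => hx.2 (hJT hxJ)⟩
    · exact absurd h hx.2
  have hcards : S.card = T.card := base_card_eq hB hS hT
  have h1 : (S \ T).card = (T \ S).card := by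
    have a1 := card_sdiff_add_card_inter S T
    have a2 := card_sdiff_add_card_inter T S
    rw [inter_comm] at a2
    omega
  have h2 : (J \ I).card ≤ (I \ J).card := by
    rw [← hTS, ← h1]
    exact card_le_card hST
  have a1 := card_sdiff_add_card_inter J I
  have a2 := card_sdiff_add_card_inter I J
  rw [inter_comm] at a2
  omega

lemma ind_empty (hB : IsBaseFamily ℬ) : Ind ℬ (∅ : Finset E) := by
  obtain ⟨S, hS⟩ := hB.1
  exact ⟨S, hS, empty_subset S⟩

open Classical in
/-- Rank of a set: maximum cardinality of an independent subset. -/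
noncomputable def rk (ℬ : Finset (Finset E)) (X : Finset E) : ℕ :=
  (X.powerset.filter (fun I => Ind ℬ I)).sup Finset.card

lemma rk_exists (hB : IsBaseFamily ℬ) (X : Finset E) :
    ∃ I, I ⊆ X ∧ Ind ℬ I ∧ I.card = rk ℬ X := by
  classical
  have hne : (X.powerset.filter (fun I => Ind ℬ I)).Nonempty :=
    ⟨∅, mem_filter.2 ⟨mem_powerset.2 (empty_subset X), ind_empty hB⟩⟩
  obtain ⟨I, hI, hIc⟩ := exists_mem_eq_sup _ hne Finset.card
  rw [mem_filter, mem_powerset] at hI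
  refine ⟨I, hI.1, hI.2, ?_⟩
  rw [rk, ← hIc]

lemma le_rk {I X : Finset E} (hIX : I ⊆ X) (hI : Ind ℬ I) : I.card ≤ rk ℬ X := by
  classical
  rw [rk]
  refine le_sup (f := Finset.card) ?_
  rw [mem_filter, mem_powerset]
  exact ⟨hIX, hI⟩

lemma rk_le_card (X : Finset E) : rk ℬ X ≤ X.card := by
  classical
  rw [rk]
  refine Finset.sup_le ?_
  intro I hI
  rw [mem_filter, mem_powerset] at hI
  exact card_le_card hI.1

lemma rk_mono (hB : IsBaseFamily ℬ) {X Z : Finset E} (h : X ⊆ Z) : rk ℬ X ≤ rk ℬ Z := by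
  obtain ⟨I, hIX, hI, hIc⟩ := rk_exists hB X
  rw [← hIc]
  exact le_rk (hIX.trans h) hI

lemma extend_max (hB : IsBaseFamily ℬ) :
    ∀ (k : ℕ) (I : Finset E) (X : Finset E), rk ℬ X - I.card = k → Ind ℬ I → I ⊆ X →
    ∃ K, I ⊆ K ∧ K ⊆ X ∧ Ind ℬ K ∧ K.card = rk ℬ X := by
  intro k
  induction k with
  | zero =>
    intro I X hk hI hIX
    have := le_rk hIX hI
    exact ⟨I, Subset.rfl, hIX, hI, by omega⟩
  | succ n ih =>
    intro I X hk hI hIX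
    obtain ⟨J, hJX, hJ, hJc⟩ := rk_exists hB X
    have hlt : I.card < J.card := by omega
    obtain ⟨x, hxJ, hxI, hx⟩ := ind_aug hB hI hJ hlt
    obtain ⟨K, h1, h2, h3, h4⟩ := ih (insert x I) X
      (by rw [card_insert_of_notMem hxI]; omega) hx (insert_subset (hJX hxJ) hIX)
    exact ⟨K, (subset_insert x I).trans h1, h2, h3, h4⟩

lemma rk_insert_le (hB : IsBaseFamily ℬ) (X : Finset E) (y : E) :
    rk ℬ (insert y X) ≤ rk ℬ X + 1 := by
  obtain ⟨L, hLX, hL, hLc⟩ := rk_exists hB (insert y X)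
  have h1 : L.erase y ⊆ X := by
    intro z hz
    rw [mem_erase] at hz
    rcases mem_insert.1 (hLX hz.2) with h | h
    · exact absurd h hz.1
    · exact h
  have h2 := le_rk h1 (ind_subset (erase_subset _ _) hL)
  by_cases hy : y ∈ L
  · rw [card_erase_of_mem hy] at h2; omega
  · rw [erase_eq_of_notMem hy] at h2; omega

lemma rk_union (hB : IsBaseFamily ℬ) {X Y : Finset E}
    (h : ∀ y ∈ Y, rk ℬ (insert y X) = rk ℬ X) : rk ℬ (X ∪ Y) = rk ℬ X := by
  refine le_antisymm ?_ (rk_mono hB subset_union_left)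
  obtain ⟨I, hIX, hI, hIc⟩ := rk_exists hB X
  obtain ⟨J, hJXY, hJ, hJc⟩ := rk_exists hB (X ∪ Y)
  rw [← hJc]
  by_contra hcon
  push_neg at hcon
  have hlt : I.card < J.card := by omega
  obtain ⟨z, hzJ, hzI, hz⟩ := ind_aug hB hI hJ hlt
  rcases mem_union.1 (hJXY hzJ) with hzX | hzY
  · have := le_rk (insert_subset hzX hIX) hz
    rw [card_insert_of_notMem hzI] at this
    omega
  · have := le_rk (insert_subset_insert z hIX) hz
    rw [card_insert_of_notMem hzI, h z hzY] at this
    omega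

lemma rk_insert_of_subset (hB : IsBaseFamily ℬ) {X Z : Finset E} {y : E} (hXZ : X ⊆ Z)
    (h : rk ℬ (insert y X) = rk ℬ X) : rk ℬ (insert y Z) = rk ℬ Z := by
  by_cases hyZ : y ∈ Z
  · rw [insert_eq_self.2 hyZ]
  refine le_antisymm ?_ (rk_mono hB (subset_insert y Z))
  by_contra hcon
  push_neg at hcon
  have hyX : y ∉ X := fun hc => hyZ (hXZ hc)
  obtain ⟨I, hIX, hI, hIc⟩ := rk_exists hB X
  obtain ⟨K, hIK, hKZ, hK, hKc⟩ := extend_max hB _ I Z rfl hI (hIX.trans hXZ)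
  obtain ⟨L, hLZ, hL, hLc⟩ := rk_exists hB (insert y Z)
  have hlt : K.card < L.card := by omega
  obtain ⟨z, hzL, hzK, hz⟩ := ind_aug hB hK hL hlt
  rcases mem_insert.1 (hLZ hzL) with rfl | hzZ
  · have hyI : Ind ℬ (insert z I) := ind_subset (insert_subset_insert z hIK) hz
    have hle := le_rk (insert_subset_insert z hIX) hyI
    have hzI : z ∉ I := fun hc => hyX (hIX hc)
    rw [card_insert_of_notMem hzI, h] at hle
    omega
  · have := le_rk (insert_subset hzZ hKZ) hz
    rw [card_insert_of_notMem hzK] at this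
    omega

lemma base_between (hB : IsBaseFamily ℬ) :
    ∀ (k : ℕ) (I T : Finset E), T.card - I.card = k → Ind ℬ I → T ∈ ℬ →
    ∃ S ∈ ℬ, I ⊆ S ∧ S ⊆ I ∪ T := by
  intro k
  induction k with
  | zero =>
    intro I T hk hI hT
    have h1 := ind_card_le hB hI hT
    have : I ∈ ℬ := base_of_ind_card hB hI hT (by omega)
    exact ⟨I, this, Subset.rfl, subset_union_left⟩
  | succ n ih =>
    intro I T hk hI hT
    have hlt : I.card < T.card := by omega
    obtain ⟨x, hxT, hxI, hx⟩ := ind_aug hB hI ⟨T, hT, Subset.rfl⟩ hlt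
    obtain ⟨S, hS, h1, h2⟩ := ih (insert x I) T
      (by rw [card_insert_of_notMem hxI]; omega) hx hT
    refine ⟨S, hS, (subset_insert x I).trans h1, h2.trans ?_⟩
    intro z hz
    rcases mem_union.1 hz with h | h
    · rcases mem_insert.1 h with rfl | h'
      · exact mem_union_right _ hxT
      · exact mem_union_left _ h'
    · exact mem_union_right _ h

/-- Symmetric (strong) basis exchange. -/
lemma symexch (hB : IsBaseFamily ℬ) {A B : Finset E} (hA : A ∈ ℬ) (hBb : B ∈ ℬ) {x : E}
    (hxA : x ∈ A) (hxB : x ∉ B) :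
    ∃ y, y ∈ B ∧ y ∉ A ∧ insert y (A.erase x) ∈ ℬ ∧ insert x (B.erase y) ∈ ℬ := by
  classical
  set Y := B.filter (fun y => insert x (B.erase y) ∈ ℬ) with hY
  have hYB : Y ⊆ B := filter_subset _ _
  have hxY : x ∉ Y := fun hc => hxB (hYB hc)
  -- Step 1 : rk (insert x Y) = rk Y
  have hclaim : ∀ I, I ⊆ Y → Ind ℬ I → I.card = rk ℬ Y → ¬ Ind ℬ (insert x I) := by
    intro I hIY hI hIc hind
    obtain ⟨M, hM, h1, h2⟩ := base_between hB _ (insert x I) B rfl hind hBb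
    have hMB : M ⊆ insert x B := by
      intro z hz
      rcases mem_union.1 (h2 hz) with h | h
      · rcases mem_insert.1 h with rfl | h'
        · exact mem_insert_self _ _
        · exact mem_insert_of_mem (hYB (hIY h'))
      · exact mem_insert_of_mem h
    have hxM : x ∈ M := h1 (mem_insert_self x I)
    have hcards : M.card = B.card := base_card_eq hB hM hBb
    have hdiffcard : ((insert x B) \ M).card = 1 := by
      rw [card_sdiff_of_subset hMB, card_insert_of_notMem hxB]
      omega
    obtain ⟨y₀, hy₀⟩ := card_eq_one.1 hdiffcard
    have hy₀mem : y₀ ∈ insert x B ∧ y₀ ∉ M := by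
      have : y₀ ∈ insert x B \ M := hy₀ ▸ mem_singleton_self y₀
      exact ⟨(mem_sdiff.1 this).1, (mem_sdiff.1 this).2⟩
    have hy₀x : y₀ ≠ x := fun hc => hy₀mem.2 (hc ▸ hxM)
    have hy₀B : y₀ ∈ B := by
      rcases mem_insert.1 hy₀mem.1 with h | h
      · exact absurd h hy₀x
      · exact h
    have hMeq : M = insert x (B.erase y₀) := by
      ext z
      constructor
      · intro hz
        rcases mem_insert.1 (hMB hz) with rfl | h
        · exact mem_insert_self _ _
        · refine mem_insert_of_mem (mem_erase.2 ⟨fun hc => ?_, h⟩)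
          exact hy₀mem.2 (hc ▸ hz)
      · intro hz
        by_contra hzM
        have hz2 : z ∈ insert x B \ M := by
          rw [mem_sdiff]
          refine ⟨?_, hzM⟩
          rcases mem_insert.1 hz with rfl | h
          · exact mem_insert_self _ _
          · exact mem_insert_of_mem (mem_erase.1 h).2
        rw [hy₀, mem_singleton] at hz2
        subst hz2
        rcases mem_insert.1 hz with h | h
        · exact hy₀x h
        · exact (mem_erase.1 h).1 rfl
    have hy₀Y : y₀ ∈ Y := mem_filter.2 ⟨hy₀B, hMeq ▸ hM⟩
    have hy₀I : y₀ ∉ I := fun hc => hy₀mem.2 (h1 (mem_insert_of_mem hc))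
    have hind2 : Ind ℬ (insert y₀ I) := ⟨B, hBb, insert_subset hy₀B (hIY.trans hYB)⟩
    have := le_rk (insert_subset hy₀Y hIY) hind2
    rw [card_insert_of_notMem hy₀I] at this
    omega
  have hstep1 : rk ℬ (insert x Y) = rk ℬ Y := by
    refine le_antisymm ?_ (rk_mono hB (subset_insert x Y))
    obtain ⟨L, hL1, hL2, hL3⟩ := rk_exists hB (insert x Y)
    rw [← hL3]
    by_cases hxL : x ∈ L
    · by_contra hcon
      push_neg at hcon
      have hub := rk_insert_le hB Y x
      have hcard : L.card = rk ℬ Y + 1 := by omega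
      have hLY : L.erase x ⊆ Y := by
        intro z hz
        rw [mem_erase] at hz
        rcases mem_insert.1 (hL1 hz.2) with h | h
        · exact absurd h hz.1
        · exact h
      have hLex : (L.erase x).card = rk ℬ Y := by
        rw [card_erase_of_mem hxL]; omega
      have := hclaim (L.erase x) hLY (ind_subset (erase_subset _ _) hL2) hLex
      rw [insert_erase hxL] at this
      exact this hL2
    · refine le_rk ?_ hL2
      intro z hz
      rcases mem_insert.1 (hL1 hz) with rfl | h
      · exact absurd hz hxL
      · exact h
  -- Step 2 : rank of A.erase x
  have hAex : rk ℬ (A.erase x) = A.card - 1 := by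
    refine le_antisymm ?_ ?_
    · have := rk_le_card (ℬ := ℬ) (A.erase x)
      rw [card_erase_of_mem hxA] at this
      exact this
    · have := le_rk (subset_refl (A.erase x)) (ind_subset (erase_subset _ _) ⟨A, hA, Subset.rfl⟩)
      rw [card_erase_of_mem hxA] at this
      exact this
  -- Step 3
  by_contra hcon
  push_neg at hcon
  have hstep3 : ∀ y ∈ Y, rk ℬ (insert y (A.erase x)) = rk ℬ (A.erase x) := by
    intro y hyY
    by_cases hyA : y ∈ A.erase x
    · rw [insert_eq_self.2 hyA]
    have hyx : y ≠ x := fun hc => hxY (hc ▸ hyY)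
    have hynA : y ∉ A := by
      intro hc
      exact hyA (mem_erase.2 ⟨hyx, hc⟩)
    have hnind : ¬ Ind ℬ (insert y (A.erase x)) := by
      intro hind
      have hcard : (insert y (A.erase x)).card = A.card := by
        rw [card_insert_of_notMem hyA, card_erase_of_mem hxA]
        have : 0 < A.card := card_pos.2 ⟨x, hxA⟩
        omega
      have hbase : insert y (A.erase x) ∈ ℬ := base_of_ind_card hB hind hA hcard
      exact hcon y (hYB hyY) hynA hbase (mem_filter.1 hyY).2
    refine le_antisymm ?_ (rk_mono hB (subset_insert _ _))
    by_contra hc2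
    push_neg at hc2
    have hub := rk_insert_le hB (A.erase x) y
    obtain ⟨L, hL1, hL2, hL3⟩ := rk_exists hB (insert y (A.erase x))
    have hLcard : L.card = rk ℬ (A.erase x) + 1 := by omega
    have : L = insert y (A.erase x) := by
      refine eq_of_subset_of_card_le hL1 ?_
      rw [card_insert_of_notMem hyA, card_erase_of_mem hxA]
      omega
    exact hnind (this ▸ hL2)
  have hu : rk ℬ ((A.erase x) ∪ Y) = A.card - 1 := by
    rw [rk_union hB hstep3, hAex]
  have hfin := rk_insert_of_subset (Z := (A.erase x) ∪ Y) hB subset_union_right hstep1 (y := x)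
  have hsub : A ⊆ insert x ((A.erase x) ∪ Y) := by
    intro z hz
    rcases eq_or_ne z x with rfl | hzx
    · exact mem_insert_self _ _
    · exact mem_insert_of_mem (mem_union_left _ (mem_erase.2 ⟨hzx, hz⟩))
  have hle := le_rk hsub ⟨A, hA, Subset.rfl⟩
  rw [hfin, hu] at hle
  have : 0 < A.card := card_pos.2 ⟨x, hxA⟩
  omega

/-! ### Weight optimization lemmas -/

lemma sum_split {u w : E → NNReal} {s : E} (h : ∀ x ≠ s, w x = u x) (hle : u s ≤ w s)
    (X : Finset E) : ∑ x ∈ X, w x = ∑ x ∈ X, u x + (if s ∈ X then w s - u s else 0) := by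
  by_cases hs : s ∈ X
  · rw [if_pos hs, ← Finset.add_sum_erase _ w hs, ← Finset.add_sum_erase _ u hs]
    have h1 : ∑ x ∈ X.erase s, w x = ∑ x ∈ X.erase s, u x :=
      Finset.sum_congr rfl (fun x hx => h x (mem_erase.1 hx).1)
    rw [h1]
    have h2 : u s + (w s - u s) = w s := add_tsub_cancel_of_le hle
    rw [add_right_comm, h2]
  · rw [if_neg hs, add_zero]
    exact Finset.sum_congr rfl (fun x hx => h x (fun hc => hs (hc ▸ hx)))

/-- If `S` is a `w`-min basis, decreasing the weight of a member of `S` keeps it min. -/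
lemma min_dec_member {u w : E → NNReal} {S : Finset E} {f : E}
    (h : ∀ x ≠ f, u x = w x) (hf : u f ≤ w f) (hfS : f ∈ S)
    (hmin : ∀ T ∈ ℬ, ∑ x ∈ S, w x ≤ ∑ x ∈ T, w x) :
    ∀ T ∈ ℬ, ∑ x ∈ S, u x ≤ ∑ x ∈ T, u x := by
  intro T hT
  have h' : ∀ x ≠ f, w x = u x := fun x hx => (h x hx).symm
  have e1 := sum_split h' hf S
  have e2 := sum_split h' hf T
  rw [if_pos hfS] at e1
  by_cases hfT : f ∈ T
  · rw [if_pos hfT] at e2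
    have := hmin T hT
    rw [e1, e2] at this
    exact le_of_add_le_add_right this
  · rw [if_neg hfT, add_zero] at e2
    have := hmin T hT
    rw [e1, e2] at this
    exact le_trans (le_add_right le_rfl) this

/-- If `S` is a `u`-min basis, increasing the weight of a non-member keeps it min. -/
lemma min_inc_nonmember {u w : E → NNReal} {S : Finset E} {s : E}
    (h : ∀ x ≠ s, w x = u x) (hs : u s ≤ w s) (hsS : s ∉ S)
    (hmin : ∀ T ∈ ℬ, ∑ x ∈ S, u x ≤ ∑ x ∈ T, u x) :
    ∀ T ∈ ℬ, ∑ x ∈ S, w x ≤ ∑ x ∈ T, w x := by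
  intro T hT
  have e1 := sum_split h hs S
  have e2 := sum_split h hs T
  rw [if_neg hsS, add_zero] at e1
  rw [e1, e2]
  exact le_trans (hmin T hT) (le_add_right le_rfl)

/-- Key lemma: if `S` is `u`-min and `w` agrees with `u` except at `s ∈ S` where it is
larger, then either `S` is `w`-min, or a single swap replacing `s` is `w`-min. -/
lemma swap_to_min (hB : IsBaseFamily ℬ) {u w : E → NNReal} {S : Finset E} {s : E}
    (hS : S ∈ ℬ) (hmin : ∀ T ∈ ℬ, ∑ x ∈ S, u x ≤ ∑ x ∈ T, u x)
    (hsS : s ∈ S) (h : ∀ x ≠ s, w x = u x) (hle : u s ≤ w s) :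
    (∀ T ∈ ℬ, ∑ x ∈ S, w x ≤ ∑ x ∈ T, w x) ∨
    (∃ f, f ∉ S ∧ insert f (S.erase s) ∈ ℬ ∧
      ∀ T ∈ ℬ, ∑ x ∈ insert f (S.erase s), w x ≤ ∑ x ∈ T, w x) := by
  classical
  obtain ⟨Tm, hTm, hTmin⟩ := ℬ.exists_min_image (fun T => ∑ x ∈ T, w x) hB.1
  by_cases hsTm : s ∈ Tm
  · left
    intro T hT
    have e1 := sum_split h hle S
    have e2 := sum_split h hle Tm
    rw [if_pos hsS] at e1
    rw [if_pos hsTm] at e2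
    have h3 : ∑ x ∈ S, w x ≤ ∑ x ∈ Tm, w x := by
      rw [e1, e2]
      exact add_le_add_left (hmin Tm hTm) _
    exact h3.trans (hTmin T hT)
  · right
    obtain ⟨y, hyTm, hyS, hS', hT'⟩ := symexch hB hS hTm hsS hsTm
    refine ⟨y, hyS, hS', ?_⟩
    intro T hT
    refine le_trans ?_ (hTmin T hT)
    -- ∑_{S-s+y} w ≤ ∑_{Tm} w
    have hys : y ≠ s := fun hc => hsTm (hc ▸ hyTm)
    have hynotSe : y ∉ S.erase s := fun hc => hyS (erase_subset _ _ hc)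
    have hsnotS' : s ∉ insert y (S.erase s) := by
      intro hc
      rcases mem_insert.1 hc with hc1 | hc2
      · exact hys hc1.symm
      · exact (mem_erase.1 hc2).1 rfl
    have hwu1 : ∑ x ∈ insert y (S.erase s), w x = ∑ x ∈ insert y (S.erase s), u x := by
      refine Finset.sum_congr rfl (fun x hx => h x (fun hc => hsnotS' (hc ▸ hx)))
    have hwu2 : ∑ x ∈ Tm, w x = ∑ x ∈ Tm, u x :=
      Finset.sum_congr rfl (fun x hx => h x (fun hc => hsTm (hc ▸ hx)))
    rw [hwu1, hwu2]
    -- use u-minimality of S against T' = insert s (Tm.erase y)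
    have hmin' := hmin _ hT'
    have hsTm' : s ∉ Tm.erase y := fun hc => hsTm (erase_subset _ _ hc)
    have eT' : ∑ x ∈ insert s (Tm.erase y), u x = u s + ∑ x ∈ Tm.erase y, u x :=
      Finset.sum_insert hsTm'
    have eTm : u y + ∑ x ∈ Tm.erase y, u x = ∑ x ∈ Tm, u x := Finset.add_sum_erase _ u hyTm
    have eS : u s + ∑ x ∈ S.erase s, u x = ∑ x ∈ S, u x := Finset.add_sum_erase _ u hsS
    have eS' : ∑ x ∈ insert y (S.erase s), u x = u y + ∑ x ∈ S.erase s, u x :=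
      Finset.sum_insert hynotSe
    -- hmin' : ∑_S u ≤ u s + ∑_{Tm.erase y} u
    rw [eT'] at hmin'
    -- add u y to both sides
    have step : u y + ∑ x ∈ S, u x ≤ u y + (u s + ∑ x ∈ Tm.erase y, u x) :=
      add_le_add_right hmin' _
    rw [← eS] at step
    -- u y + (u s + ∑_{S.erase s}) ≤ u s + (u y + ∑_{Tm.erase y})
    rw [eS']
    have lhs_eq : u y + (u s + ∑ x ∈ S.erase s, u x) = u s + (u y + ∑ x ∈ S.erase s, u x) := by
      ring
    have rhs_eq : u y + (u s + ∑ x ∈ Tm.erase y, u x) = u s + (u y + ∑ x ∈ Tm.erase y, u x) := by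
      ring
    rw [lhs_eq, rhs_eq] at step
    have := le_of_add_le_add_left step
    rw [eTm] at this
    exact this

/-! ### Player-specific matroid congestion games -/

section Game

variable {N : Type*} [Fintype N] [DecidableEq N] [Fintype E]

/-- Number of players other than `i` using resource `x`. -/
def co (σ : N → Finset E) (i : N) (x : E) : ℕ :=
  (Finset.univ.filter (fun j => j ≠ i ∧ x ∈ σ j)).card

lemma numPlayersOn_eq (σ : N → Finset E) (i : N) (x : E) :
    numPlayersOn σ x = co σ i x + (if x ∈ σ i then 1 else 0) := by
  classical
  rw [numPlayersOn, co]
  have hsplit : univ.filter (fun j => x ∈ σ j)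
      = univ.filter (fun j => j ≠ i ∧ x ∈ σ j) ∪ univ.filter (fun j => j = i ∧ x ∈ σ j) := by
    ext j
    simp only [mem_filter, mem_univ, true_and, mem_union]
    by_cases hj : j = i <;> tauto
  rw [hsplit, card_union_of_disjoint]
  · congr 1
    by_cases hx : x ∈ σ i
    · rw [if_pos hx]
      have : univ.filter (fun j => j = i ∧ x ∈ σ j) = {i} := by
        ext j
        simp only [mem_filter, mem_univ, true_and, mem_singleton]
        constructor
        · exact fun h => h.1
        · rintro rfl; exact ⟨rfl, hx⟩
      rw [this, card_singleton]
    · rw [if_neg hx]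
      have : univ.filter (fun j => j = i ∧ x ∈ σ j) = ∅ := by
        ext j
        simp only [mem_filter, mem_univ, true_and, notMem_empty, iff_false, not_and]
        rintro rfl; exact hx
      rw [this, card_empty]
  · rw [disjoint_left]
    intro j hj1 hj2
    rw [mem_filter] at hj1 hj2
    exact hj1.2.1 hj2.2.1

lemma co_update_self (σ : N → Finset E) (i : N) (T : Finset E) (x : E) :
    co (Function.update σ i T) i x = co σ i x := by
  rw [co, co]
  congr 1
  ext j
  simp only [mem_filter, mem_univ, true_and]
  constructor
  · rintro ⟨hj, hmem⟩
    rw [Function.update_of_ne hj] at hmem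
    exact ⟨hj, hmem⟩
  · rintro ⟨hj, hmem⟩
    rw [Function.update_of_ne hj]
    exact ⟨hj, hmem⟩

lemma co_split (τ : N → Finset E) {j i : N} (hji : j ≠ i) (x : E) :
    co τ j x = (univ.filter (fun k => (k ≠ j ∧ k ≠ i) ∧ x ∈ τ k)).card
      + (if x ∈ τ i then 1 else 0) := by
  rw [co]
  have hsplit : univ.filter (fun k => k ≠ j ∧ x ∈ τ k)
      = univ.filter (fun k => (k ≠ j ∧ k ≠ i) ∧ x ∈ τ k)
        ∪ univ.filter (fun k => k = i ∧ x ∈ τ k) := by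
    ext k
    simp only [mem_filter, mem_univ, true_and, mem_union]
    by_cases hk : k = i
    · subst hk
      have : k ≠ j := fun hc => hji hc.symm
      tauto
    · tauto
  rw [hsplit, card_union_of_disjoint]
  · congr 1
    by_cases hx : x ∈ τ i
    · rw [if_pos hx]
      have : univ.filter (fun k => k = i ∧ x ∈ τ k) = {i} := by
        ext k
        simp only [mem_filter, mem_univ, true_and, mem_singleton]
        constructor
        · exact fun h => h.1
        · rintro rfl; exact ⟨rfl, hx⟩
      rw [this, card_singleton]
    · rw [if_neg hx]
      have : univ.filter (fun k => k = i ∧ x ∈ τ k) = ∅ := by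
        ext k
        simp only [mem_filter, mem_univ, true_and, notMem_empty, iff_false, not_and]
        rintro rfl; exact hx
      rw [this, card_empty]
  · rw [disjoint_left]
    intro k hk1 hk2
    rw [mem_filter] at hk1 hk2
    exact hk1.2.1.2 hk2.2.1

lemma co_update_other (σ : N → Finset E) (i : N) (T : Finset E) {j : N} (hji : j ≠ i) (x : E) :
    co (Function.update σ i T) j x + (if x ∈ σ i then 1 else 0)
      = co σ j x + (if x ∈ T then 1 else 0) := by
  rw [co_split (Function.update σ i T) hji x, co_split σ hji x]
  have h1 : univ.filter (fun k => (k ≠ j ∧ k ≠ i) ∧ x ∈ Function.update σ i T k)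
      = univ.filter (fun k => (k ≠ j ∧ k ≠ i) ∧ x ∈ σ k) := by
    ext k
    simp only [mem_filter, mem_univ, true_and]
    constructor
    · rintro ⟨hk, hmem⟩
      rw [Function.update_of_ne hk.2] at hmem
      exact ⟨hk, hmem⟩
    · rintro ⟨hk, hmem⟩
      rw [Function.update_of_ne hk.2]
      exact ⟨hk, hmem⟩
  rw [h1, Function.update_self]
  omega

variable (c : N → E → ℕ → NNReal)

/-- Fixed weights seen by player `i`: cost of resource `x` if `i` uses it. -/
noncomputable def Wt (σ : N → Finset E) (i : N) (x : E) : NNReal :=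
  c i x (co σ i x + 1)

/-- Reference weights with the token at `s` removed. -/
noncomputable def Ut (σ : N → Finset E) (s : E) (i : N) (x : E) : NNReal :=
  c i x (co σ i x + 1 - (if x = s then 1 else 0))

/-- The potential used to prove termination of the swap cascade. -/
noncomputable def Phi (σ : N → Finset E) (s : E) : NNReal :=
  ∑ j, ∑ x ∈ σ j, c j x (numPlayersOn σ x + 1 - (if x = s then 1 else 0))

open Classical in
noncomputable def meas (σ : N → Finset E) (s : E) : ℕ :=
  (univ.filter (fun st : (N → Finset E) × E => Phi c st.1 st.2 < Phi c σ s)).card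

lemma meas_lt {σ σ' : N → Finset E} {s s' : E} (h : Phi c σ' s' < Phi c σ s) :
    meas c σ' s' < meas c σ s := by
  classical
  rw [meas, meas]
  have hsubset : (univ.filter fun st : (N → Finset E) × E => Phi c st.1 st.2 < Phi c σ' s')
      ⊆ (univ.filter fun st : (N → Finset E) × E => Phi c st.1 st.2 < Phi c σ s) := by
    intro st hst
    simp only [mem_filter] at hst ⊢
    exact ⟨hst.1, hst.2.trans h⟩
  refine card_lt_card ((Finset.ssubset_iff_of_subset hsubset).2 ⟨(σ', s'), ?_, ?_⟩)
  · simp only [mem_filter]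
    exact ⟨mem_univ _, h⟩
  · simp only [mem_filter]
    intro hc
    exact absurd hc.2 (lt_irrefl _)

lemma cost_update_eq (σ : N → Finset E) (i : N) (T : Finset E) :
    ∑ x ∈ T, c i x (numPlayersOn (Function.update σ i T) x) = ∑ x ∈ T, Wt c σ i x := by
  refine Finset.sum_congr rfl (fun x hx => ?_)
  rw [Wt, numPlayersOn_eq (Function.update σ i T) i x, co_update_self,
    Function.update_self, if_pos hx]

lemma cost_self_eq (σ : N → Finset E) (i : N) :
    ∑ x ∈ σ i, c i x (numPlayersOn σ x) = ∑ x ∈ σ i, Wt c σ i x := by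
  refine Finset.sum_congr rfl (fun x hx => ?_)
  rw [Wt, numPlayersOn_eq σ i x, if_pos hx]

/-- The swap cascade: from a state satisfying the invariant, a pure Nash equilibrium
(in the fixed-weight sense) is reachable. -/
lemma cascade (hc : ∀ i e, Monotone (c i e)) (B : N → Finset (Finset E))
    (hB : ∀ i, IsBaseFamily (B i)) :
    ∀ (k : ℕ) (σ : N → Finset E) (s : E), meas c σ s = k →
    (∀ i, σ i ∈ B i) →
    (∀ i, ∀ T ∈ B i, ∑ x ∈ σ i, Ut c σ s i x ≤ ∑ x ∈ T, Ut c σ s i x) →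
    ∃ τ, (∀ i, τ i ∈ B i) ∧ ∀ i, ∀ T ∈ B i, ∑ x ∈ τ i, Wt c τ i x ≤ ∑ x ∈ T, Wt c τ i x := by
  intro k
  induction k using Nat.strong_induction_on with
  | _ k ih =>
  intro σ s hk hP1 hINV
  by_cases hhappy : ∀ i, ∀ T ∈ B i, ∑ x ∈ σ i, Wt c σ i x ≤ ∑ x ∈ T, Wt c σ i x
  · exact ⟨σ, hP1, hhappy⟩
  push_neg at hhappy
  obtain ⟨i, T, hT, hlt⟩ := hhappy
  have hUW : ∀ j x, x ≠ s → Ut c σ s j x = Wt c σ j x := by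
    intro j x hx
    rw [Ut, Wt, if_neg hx, Nat.sub_zero]
  have hUWle : ∀ j, Ut c σ s j s ≤ Wt c σ j s := by
    intro j
    rw [Ut, Wt, if_pos rfl]
    exact hc j s (by omega)
  have hsi : s ∈ σ i := by
    by_contra hs
    have := min_inc_nonmember (ℬ := B i) (u := Ut c σ s i) (w := Wt c σ i)
      (fun x hx => (hUW i x hx).symm) (hUWle i) hs (hINV i) T hT
    exact absurd this (not_le.2 hlt)
  rcases swap_to_min (hB i) (hP1 i) (hINV i) hsi (fun x hx => (hUW i x hx).symm) (hUWle i)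
    with hmin | ⟨f, hfS, hfB, hfmin⟩
  · exact absurd (hmin T hT) (not_le.2 hlt)
  have hfs : f ≠ s := fun hc' => hfS (hc' ▸ hsi)
  set S' := insert f ((σ i).erase s) with hS'def
  have hsS' : s ∉ S' := by
    intro hc'
    rcases mem_insert.1 hc' with h | h
    · exact hfs h.symm
    · exact (mem_erase.1 h).1 rfl
  have hfS' : f ∈ S' := mem_insert_self f _
  have hfSe : f ∉ (σ i).erase s := fun hc' => hfS (erase_subset _ _ hc')
  set σ' := Function.update σ i S' with hσ'def
  have hσ'i : σ' i = S' := Function.update_self i S' σ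
  have hσ'j : ∀ j, j ≠ i → σ' j = σ j := fun j hj => Function.update_of_ne hj S' σ
  -- new strategies are bases
  have hP1' : ∀ j, σ' j ∈ B j := by
    intro j
    rcases eq_or_ne j i with rfl | hj
    · rw [hσ'i]; exact hfB
    · rw [hσ'j j hj]; exact hP1 j
  -- weights of i are unchanged
  have hcoi : ∀ x, co σ' i x = co σ i x := co_update_self σ i S'
  -- new invariant for i
  have hINVi : ∀ T' ∈ B i, ∑ x ∈ σ' i, Ut c σ' f i x ≤ ∑ x ∈ T', Ut c σ' f i x := by
    have hU'W : ∀ x ≠ f, Ut c σ' f i x = Wt c σ i x := by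
      intro x hx
      rw [Ut, Wt, if_neg hx, Nat.sub_zero, hcoi]
    have hU'le : Ut c σ' f i f ≤ Wt c σ i f := by
      rw [Ut, Wt, if_pos rfl, hcoi]
      exact hc i f (by omega)
    have := min_dec_member (ℬ := B i) hU'W hU'le hfS' hfmin
    rw [hσ'i]
    exact this
  have hmemiff : ∀ x, x ≠ s → x ≠ f → (x ∈ σ i ↔ x ∈ S') := by
    intro x hxs hxf
    rw [hS'def]
    constructor
    · intro h
      exact mem_insert_of_mem (mem_erase.2 ⟨hxs, h⟩)
    · intro h
      rcases mem_insert.1 h with h' | h'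
      · exact absurd h' hxf
      · exact (mem_erase.1 h').2
  -- new invariant for j ≠ i
  have hINVj : ∀ j, j ≠ i → ∀ x, Ut c σ' f j x = Ut c σ s j x := by
    intro j hj x
    rw [Ut, Ut]
    congr 1
    have hco := co_update_other σ i S' hj x
    rw [← hσ'def] at hco
    by_cases hxs : x = s
    · subst hxs
      rw [if_pos hsi, if_neg hsS'] at hco
      rw [if_neg (fun h : x = f => hfs h.symm), if_pos rfl]
      omega
    · by_cases hxf : x = f
      · subst hxf
        rw [if_neg hfS, if_pos hfS'] at hco
        rw [if_pos rfl, if_neg hxs]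
        omega
      · rw [if_neg hxf, if_neg hxs]
        by_cases hx : x ∈ σ i
        · rw [if_pos hx, if_pos ((hmemiff x hxs hxf).1 hx)] at hco
          omega
        · rw [if_neg hx, if_neg (fun h => hx ((hmemiff x hxs hxf).2 h))] at hco
          omega
  have hINV' : ∀ j, ∀ T' ∈ B j, ∑ x ∈ σ' j, Ut c σ' f j x ≤ ∑ x ∈ T', Ut c σ' f j x := by
    intro j T' hT'
    rcases eq_or_ne j i with rfl | hj
    · exact hINVi T' hT'
    · rw [hσ'j j hj]
      calc ∑ x ∈ σ j, Ut c σ' f j x = ∑ x ∈ σ j, Ut c σ s j x :=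
            Finset.sum_congr rfl (fun x _ => hINVj j hj x)
        _ ≤ ∑ x ∈ T', Ut c σ s j x := hINV j T' hT'
        _ = ∑ x ∈ T', Ut c σ' f j x :=
            Finset.sum_congr rfl (fun x _ => (hINVj j hj x).symm)
  -- the potential decreases
  have hnp : ∀ x, numPlayersOn σ' x + 1 - (if x = f then 1 else 0)
      = numPlayersOn σ x + 1 - (if x = s then 1 else 0) := by
    intro x
    have h1 := numPlayersOn_eq σ' i x
    have h2 := numPlayersOn_eq σ i x
    rw [hσ'i, hcoi x] at h1
    by_cases hxs : x = s
    · subst hxs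
      rw [if_pos hsi] at h2
      rw [if_neg hsS'] at h1
      rw [if_neg (fun h : x = f => hfs h.symm), if_pos rfl]
      omega
    · by_cases hxf : x = f
      · subst hxf
        rw [if_neg hfS] at h2
        rw [if_pos hfS'] at h1
        rw [if_pos rfl, if_neg hxs]
        omega
      · rw [if_neg hxf, if_neg hxs]
        by_cases hx : x ∈ σ i
        · rw [if_pos hx] at h2
          rw [if_pos ((hmemiff x hxs hxf).1 hx)] at h1
          omega
        · rw [if_neg hx] at h2
          rw [if_neg (fun h => hx ((hmemiff x hxs hxf).2 h))] at h1
          omega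
  have hPhi' : Phi c σ' f
      = ∑ j, ∑ x ∈ σ' j, c j x (numPlayersOn σ x + 1 - (if x = s then 1 else 0)) := by
    rw [Phi]
    exact Finset.sum_congr rfl (fun j _ => Finset.sum_congr rfl (fun x _ => by rw [hnp x]))
  have hGs : c i s (numPlayersOn σ s + 1 - (if s = s then 1 else 0)) = Wt c σ i s := by
    rw [Wt, if_pos rfl]
    congr 1
    have h2 := numPlayersOn_eq σ i s
    rw [if_pos hsi] at h2
    omega
  have hGf : c i f (numPlayersOn σ f + 1 - (if f = s then 1 else 0)) = Wt c σ i f := by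
    rw [Wt, if_neg hfs]
    congr 1
    have h2 := numPlayersOn_eq σ i f
    rw [if_neg hfS] at h2
    omega
  have hWlt : Wt c σ i f < Wt c σ i s := by
    have h5 : ∑ x ∈ S', Wt c σ i x < ∑ x ∈ σ i, Wt c σ i x := lt_of_le_of_lt (hfmin T hT) hlt
    rw [hS'def, Finset.sum_insert hfSe, ← Finset.add_sum_erase _ (Wt c σ i) hsi] at h5
    exact lt_of_add_lt_add_right h5
  have hkey : (∑ x ∈ σ' i, c i x (numPlayersOn σ x + 1 - (if x = s then 1 else 0)))
        + Wt c σ i s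
      = (∑ x ∈ σ i, c i x (numPlayersOn σ x + 1 - (if x = s then 1 else 0)))
        + Wt c σ i f := by
    rw [hσ'i, hS'def, Finset.sum_insert hfSe,
      ← Finset.add_sum_erase _ (fun x => c i x (numPlayersOn σ x + 1 - (if x = s then 1 else 0))) hsi]
    rw [hGs, hGf]
    ring
  have e1 : Phi c σ' f + Wt c σ i s = Phi c σ s + Wt c σ i f := by
    rw [hPhi', Phi]
    rw [← Finset.add_sum_erase _
        (fun j => ∑ x ∈ σ' j, c j x (numPlayersOn σ x + 1 - (if x = s then 1 else 0)))
        (mem_univ i),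
      ← Finset.add_sum_erase _
        (fun j => ∑ x ∈ σ j, c j x (numPlayersOn σ x + 1 - (if x = s then 1 else 0)))
        (mem_univ i)]
    have hrest : ∑ j ∈ univ.erase i,
          ∑ x ∈ σ' j, c j x (numPlayersOn σ x + 1 - (if x = s then 1 else 0))
        = ∑ j ∈ univ.erase i,
          ∑ x ∈ σ j, c j x (numPlayersOn σ x + 1 - (if x = s then 1 else 0)) :=
      Finset.sum_congr rfl (fun j hj => by rw [hσ'j j (mem_erase.1 hj).1])
    rw [hrest, add_right_comm, hkey, add_right_comm]
  have hPhilt : Phi c σ' f < Phi c σ s := by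
    have h6 : Phi c σ' f + Wt c σ i s < Phi c σ s + Wt c σ i s := by
      rw [e1]
      exact add_lt_add_right hWlt _
    exact lt_of_add_lt_add_right h6
  exact ih (meas c σ' f) (hk ▸ meas_lt c hPhilt) σ' f rfl hP1' hINV'

end Game

/-! ### Truncation of a matroid -/

lemma trunc_mem (hB : IsBaseFamily ℬ) {r : ℕ} (hr : ∀ S ∈ ℬ, S.card = r) {T : Finset E} :
    T ∈ ℬ.biUnion (fun S => S.image (fun e => S.erase e)) ↔ Ind ℬ T ∧ T.card + 1 = r := by
  constructor
  · intro h
    rw [mem_biUnion] at h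
    obtain ⟨S, hS, hT⟩ := h
    rw [mem_image] at hT
    obtain ⟨e, heS, rfl⟩ := hT
    refine ⟨ind_subset (erase_subset _ _) ⟨S, hS, Subset.rfl⟩, ?_⟩
    rw [card_erase_of_mem heS, hr S hS]
    have h1 : 0 < r := by
      rw [← hr S hS]
      exact card_pos.2 ⟨e, heS⟩
    omega
  · rintro ⟨⟨S, hS, hTS⟩, hcard⟩
    rw [mem_biUnion]
    refine ⟨S, hS, ?_⟩
    rw [mem_image]
    have hScard := hr S hS
    have hdiff : (S \ T).card = 1 := by
      rw [card_sdiff_of_subset hTS]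
      omega
    obtain ⟨e, he⟩ := card_eq_one.1 hdiff
    have heS : e ∈ S ∧ e ∉ T := by
      have : e ∈ S \ T := he ▸ mem_singleton_self e
      exact ⟨(mem_sdiff.1 this).1, (mem_sdiff.1 this).2⟩
    refine ⟨e, heS.1, ?_⟩
    ext x
    rw [mem_erase]
    constructor
    · rintro ⟨hxe, hxS⟩
      by_contra hxT
      have hx2 : x ∈ S \ T := mem_sdiff.2 ⟨hxS, hxT⟩
      rw [he, mem_singleton] at hx2
      exact hxe hx2
    · intro hxT
      exact ⟨fun hc => heS.2 (hc ▸ hxT), hTS hxT⟩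

lemma trunc_isBaseFamily (hB : IsBaseFamily ℬ) {r : ℕ} (hr : ∀ S ∈ ℬ, S.card = r)
    (hr1 : 1 ≤ r) : IsBaseFamily (ℬ.biUnion (fun S => S.image (fun e => S.erase e))) := by
  constructor
  · obtain ⟨S, hS⟩ := hB.1
    have hSne : S.Nonempty := card_pos.1 (by rw [hr S hS]; omega)
    obtain ⟨e, he⟩ := hSne
    exact ⟨S.erase e, mem_biUnion.2 ⟨S, hS, mem_image.2 ⟨e, he, rfl⟩⟩⟩
  · intro I hI I' hI' e he
    rw [trunc_mem hB hr] at hI hI'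
    obtain ⟨hIind, hIc⟩ := hI
    obtain ⟨hI'ind, hI'c⟩ := hI'
    rw [mem_sdiff] at he
    have h1 : Ind ℬ (I.erase e) := ind_subset (erase_subset _ _) hIind
    have heI : 1 ≤ I.card := card_pos.2 ⟨e, he.1⟩
    have hlt : (I.erase e).card < I'.card := by
      rw [card_erase_of_mem he.1]
      omega
    obtain ⟨f, hfI', hfIe, hf⟩ := ind_aug hB h1 hI'ind hlt
    have hfe : f ≠ e := fun hc => he.2 (hc ▸ hfI')
    have hfI : f ∉ I := fun hc => hfIe (mem_erase.2 ⟨hfe, hc⟩)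
    refine ⟨f, mem_sdiff.2 ⟨hfI', hfI⟩, ?_⟩
    rw [trunc_mem hB hr]
    refine ⟨hf, ?_⟩
    rw [card_insert_of_notMem hfIe, card_erase_of_mem he.1]
    omega

section Game2

variable {N : Type*} [Fintype N] [DecidableEq N] [Fintype E]

/-- Existence of PNE for player-specific matroid congestion games (sum objective),
by induction on the total rank. -/
lemma exists_PSM (c : N → E → ℕ → NNReal) (hc : ∀ i e, Monotone (c i e)) :
    ∀ (R : ℕ) (B : N → Finset (Finset E)), (∀ i, IsBaseFamily (B i)) →
    (∑ i, (B i).sup Finset.card) = R →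
    ∃ σ, (∀ i, σ i ∈ B i) ∧
      ∀ i, ∀ T ∈ B i, ∑ x ∈ σ i, Wt c σ i x ≤ ∑ x ∈ T, Wt c σ i x := by
  intro R
  induction R using Nat.strong_induction_on with
  | _ R ih =>
  intro B hB hR
  by_cases h0 : ∀ i, (B i).sup Finset.card = 0
  · choose σ hσ using fun i => (hB i).1
    refine ⟨σ, hσ, ?_⟩
    intro i T hT
    have hzero : σ i = ∅ := card_eq_zero.1
      (le_antisymm ((le_sup (f := Finset.card) (hσ i)).trans (le_of_eq (h0 i))) (zero_le))
    rw [hzero, Finset.sum_empty]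
    exact zero_le
  push_neg at h0
  obtain ⟨p, hp⟩ := h0
  obtain ⟨S₀, hS₀, hS₀c⟩ := Finset.exists_mem_eq_sup (B p) (hB p).1 Finset.card
  have hrall : ∀ S ∈ B p, S.card = S₀.card := fun S hS => base_card_eq (hB p) hS hS₀
  have hsupp : (B p).sup Finset.card = S₀.card := hS₀c
  have hr1 : 1 ≤ S₀.card := by
    rcases Nat.eq_zero_or_pos S₀.card with h | h
    · exact absurd (hsupp.trans h) hp
    · exact h
  set Bt := (B p).biUnion (fun S => S.image (fun e => S.erase e)) with hBtdef
  have hBt_base : IsBaseFamily Bt := trunc_isBaseFamily (hB p) hrall hr1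
  have hBtcard : ∀ T ∈ Bt, T.card + 1 = S₀.card :=
    fun T hT => ((trunc_mem (hB p) hrall).1 hT).2
  set B' := Function.update B p Bt with hB'def
  have hB'p : B' p = Bt := Function.update_self p Bt B
  have hB'j : ∀ j, j ≠ p → B' j = B j := fun j hj => Function.update_of_ne hj Bt B
  have hB'fam : ∀ i, IsBaseFamily (B' i) := by
    intro i
    rcases eq_or_ne i p with rfl | hi
    · rw [hB'p]; exact hBt_base
    · rw [hB'j i hi]; exact hB i
  have hsup' : (B' p).sup Finset.card + 1 = S₀.card := by
    rw [hB'p]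
    obtain ⟨T, hT⟩ := hBt_base.1
    have h1 : Bt.sup Finset.card ≤ S₀.card - 1 := by
      refine Finset.sup_le (fun T' hT' => ?_)
      have := hBtcard T' hT'
      omega
    have h2 := le_sup (f := Finset.card) hT
    have h3 := hBtcard T hT
    omega
  have hRlt : ∑ i, (B' i).sup Finset.card < R := by
    rw [← hR]
    rw [← Finset.add_sum_erase _ (fun i => (B' i).sup Finset.card) (mem_univ p),
      ← Finset.add_sum_erase _ (fun i => (B i).sup Finset.card) (mem_univ p)]
    have hrest : ∑ i ∈ univ.erase p, (B' i).sup Finset.card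
        = ∑ i ∈ univ.erase p, (B i).sup Finset.card :=
      Finset.sum_congr rfl (fun i hi => by rw [hB'j i (mem_erase.1 hi).1])
    rw [hrest]
    have := hsupp
    omega
  obtain ⟨σ', hσ'mem, hσ'PNE⟩ := ih _ hRlt B' hB'fam rfl
  have hσ'p : σ' p ∈ Bt := hB'p ▸ hσ'mem p
  obtain ⟨hIndσ'p, hcardσ'p⟩ := (trunc_mem (hB p) hrall).1 hσ'p
  classical
  set F0 := univ.filter (fun x => x ∉ σ' p ∧ insert x (σ' p) ∈ B p) with hF0def
  have hF0ne : F0.Nonempty := by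
    have h := hσ'p
    rw [hBtdef, mem_biUnion] at h
    obtain ⟨S, hS, hT⟩ := h
    rw [mem_image] at hT
    obtain ⟨e, heS, heq⟩ := hT
    refine ⟨e, mem_filter.2 ⟨mem_univ _, ?_, ?_⟩⟩
    · rw [← heq]
      exact notMem_erase e S
    · rw [← heq, insert_erase heS]
      exact hS
  obtain ⟨t0, ht0F, ht0min⟩ := F0.exists_min_image (fun x => Wt c σ' p x) hF0ne
  rw [hF0def, mem_filter] at ht0F
  obtain ⟨-, ht0σ, ht0B⟩ := ht0F
  set σ0 := Function.update σ' p (insert t0 (σ' p)) with hσ0def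
  have hσ0p : σ0 p = insert t0 (σ' p) := Function.update_self p _ σ'
  have hσ0j : ∀ j, j ≠ p → σ0 j = σ' j := fun j hj => Function.update_of_ne hj _ σ'
  have hP1 : ∀ i, σ0 i ∈ B i := by
    intro i
    rcases eq_or_ne i p with rfl | hi
    · rw [hσ0p]; exact ht0B
    · rw [hσ0j i hi]
      have := hσ'mem i
      rw [hB'j i hi] at this
      exact this
  -- INV for j ≠ p
  have hUW0 : ∀ j, j ≠ p → ∀ x, Ut c σ0 t0 j x = Wt c σ' j x := by
    intro j hj x
    rw [Ut, Wt]
    congr 1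
    have hco := co_update_other σ' p (insert t0 (σ' p)) hj x
    rw [← hσ0def] at hco
    by_cases hxt : x = t0
    · subst hxt
      rw [if_neg ht0σ, if_pos (mem_insert_self x _)] at hco
      rw [if_pos rfl]
      omega
    · by_cases hx : x ∈ σ' p
      · rw [if_pos hx, if_pos (mem_insert_of_mem hx)] at hco
        rw [if_neg hxt]
        omega
      · rw [if_neg hx, if_neg (fun hc => by
          rcases mem_insert.1 hc with h | h
          · exact hxt h
          · exact hx h)] at hco
        rw [if_neg hxt]
        omega
  have hcop : ∀ x, co σ0 p x = co σ' p x := by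
    intro x
    rw [hσ0def]
    exact co_update_self σ' p _ x
  -- greedy extension is optimal for p
  have homega_min : ∀ T ∈ B p, ∑ x ∈ σ0 p, Wt c σ' p x ≤ ∑ x ∈ T, Wt c σ' p x := by
    intro T hT
    have hTcard : T.card = S₀.card := hrall T hT
    have hlt : (σ' p).card < T.card := by omega
    obtain ⟨y, hyT, hyσ, hy⟩ := ind_aug (hB p) hIndσ'p ⟨T, hT, Subset.rfl⟩ hlt
    have hybase : insert y (σ' p) ∈ B p := base_of_ind_card (hB p) hy hT
      (by rw [card_insert_of_notMem hyσ]; omega)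
    have hyF0 : y ∈ F0 := mem_filter.2 ⟨mem_univ _, hyσ, hybase⟩
    have ht0y := ht0min y hyF0
    have hTey : T.erase y ∈ Bt := (trunc_mem (hB p) hrall).2
      ⟨ind_subset (erase_subset _ _) ⟨T, hT, Subset.rfl⟩,
        by rw [card_erase_of_mem hyT]; omega⟩
    have hbase1 := hσ'PNE p (T.erase y) (by rw [hB'p]; exact hTey)
    rw [hσ0p, Finset.sum_insert ht0σ]
    calc Wt c σ' p t0 + ∑ x ∈ σ' p, Wt c σ' p x
        ≤ Wt c σ' p y + ∑ x ∈ T.erase y, Wt c σ' p x := add_le_add ht0y hbase1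
      _ = ∑ x ∈ T, Wt c σ' p x := Finset.add_sum_erase _ _ hyT
  have hINV0p : ∀ T ∈ B p, ∑ x ∈ σ0 p, Ut c σ0 t0 p x ≤ ∑ x ∈ T, Ut c σ0 t0 p x := by
    have hW : ∀ x ≠ t0, Ut c σ0 t0 p x = Wt c σ' p x := by
      intro x hx
      rw [Ut, Wt, if_neg hx, Nat.sub_zero, hcop]
    have hle : Ut c σ0 t0 p t0 ≤ Wt c σ' p t0 := by
      rw [Ut, Wt, if_pos rfl, hcop]
      exact hc p t0 (by omega)
    exact min_dec_member (ℬ := B p) hW hle (hσ0p ▸ mem_insert_self t0 (σ' p)) homega_min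
  have hINV0 : ∀ j, ∀ T ∈ B j, ∑ x ∈ σ0 j, Ut c σ0 t0 j x ≤ ∑ x ∈ T, Ut c σ0 t0 j x := by
    intro j T hT
    rcases eq_or_ne j p with rfl | hj
    · exact hINV0p T hT
    · rw [hσ0j j hj]
      calc ∑ x ∈ σ' j, Ut c σ0 t0 j x = ∑ x ∈ σ' j, Wt c σ' j x :=
            Finset.sum_congr rfl (fun x _ => hUW0 j hj x)
        _ ≤ ∑ x ∈ T, Wt c σ' j x := hσ'PNE j T (by rw [hB'j j hj]; exact hT)
        _ = ∑ x ∈ T, Ut c σ0 t0 j x :=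
            Finset.sum_congr rfl (fun x _ => (hUW0 j hj x).symm)
  exact cascade c hc B hB (meas c σ0 t0) σ0 t0 rfl hP1 hINV0

end Game2

end PNEProof

/-- Every matroid congestion game with mixed costs in which `α_i ∈ {0,1}` for each
player `i` has a pure Nash equilibrium. -/
theorem matroid_congestion_game_mixed_costs_zero_one_has_PNE
    {N E : Type*} [Fintype N] [DecidableEq N] [Fintype E] [DecidableEq E]
    (𝒮 : N → Finset (Finset E)) (hmatroid : ∀ i, IsBaseFamily (𝒮 i))
    (ℓ b : E → ℕ → NNReal) (hℓ : ∀ e, Monotone (ℓ e)) (hb : ∀ e, Monotone (b e))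
    (α : N → NNReal) (hα : ∀ i, α i = 0 ∨ α i = 1) :
    ∃ σ : N → Finset E, (∀ i, σ i ∈ 𝒮 i) ∧
      ∀ i : N, ∀ S' ∈ 𝒮 i,
        mixedCost ℓ b α σ i ≤ mixedCost ℓ b α (Function.update σ i S') i := by
  classical
  set n := Fintype.card N with hn
  set V : Finset NNReal := (Finset.univ ×ˢ Finset.range (n + 1)).image
    (fun p : E × ℕ => b p.1 p.2) with hVdef
  set rnk : NNReal → ℕ := fun v => (V.filter (fun w => w ≤ v)).card with hrnkdef
  have hrnk_mono : ∀ v w : NNReal, v ≤ w → rnk v ≤ rnk w := by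
    intro v w hvw
    refine Finset.card_le_card (fun u hu => ?_)
    rw [Finset.mem_filter] at hu ⊢
    exact ⟨hu.1, hu.2.trans hvw⟩
  have hrnk_lt : ∀ v w : NNReal, v ∈ V → w < v → rnk w < rnk v := by
    intro v w hv hwv
    refine Finset.card_lt_card ?_
    constructor
    · intro u hu
      rw [Finset.mem_filter] at hu ⊢
      exact ⟨hu.1, hu.2.trans hwv.le⟩
    · intro hsub
      have := hsub (Finset.mem_filter.2 ⟨hv, le_refl v⟩)
      rw [Finset.mem_filter] at this
      exact absurd this.2 (not_le.2 hwv)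
  set K : NNReal := ((Fintype.card E + 1 : ℕ) : NNReal) with hKdef
  have hK1 : 1 ≤ K := by
    rw [hKdef]
    exact_mod_cast Nat.succ_le_succ (Nat.zero_le _)
  set c : N → E → ℕ → NNReal :=
    fun i e k => if α i = 1 then ℓ e k else K ^ (rnk (b e (min k n))) with hcdef
  have hcmono : ∀ i e, Monotone (c i e) := by
    intro i e k1 k2 h
    rw [hcdef]
    dsimp only
    split
    · exact hℓ e h
    · exact pow_le_pow_right₀ hK1 (hrnk_mono _ _ (hb e (by omega)))
  obtain ⟨σ, hmem, hPNE⟩ := PNEProof.exists_PSM c hcmono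
    (∑ i, (𝒮 i).sup Finset.card) 𝒮 hmatroid rfl
  refine ⟨σ, hmem, ?_⟩
  intro i T hT
  have hnp_le : ∀ (τ : N → Finset E) (x : E), numPlayersOn τ x ≤ n := by
    intro τ x
    rw [numPlayersOn, hn]
    exact (Finset.card_filter_le _ _).trans (le_of_eq (Finset.card_univ))
  have hP := hPNE i T hT
  rw [← PNEProof.cost_self_eq c σ i, ← PNEProof.cost_update_eq c σ i T] at hP
  rcases hα i with h0 | h1
  · -- bottleneck player : α i = 0
    have hαi : ¬ (α i = 1) := by
      rw [h0]
      intro hc'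
      exact one_ne_zero hc'.symm
    rw [mixedCost, mixedCost, h0, Function.update_self]
    simp only [zero_mul, zero_add, tsub_zero, one_mul]
    set τ := Function.update σ i T with hτdef
    by_contra hcon
    push_neg at hcon
    -- hcon : T.sup (fun x => b x (numPlayersOn τ x)) < (σ i).sup (fun x => b x (numPlayersOn σ x))
    set M := T.sup (fun x => b x (numPlayersOn τ x)) with hMdef
    set M0 := (σ i).sup (fun x => b x (numPlayersOn σ x)) with hM0def
    have hσne : (σ i).Nonempty := by
      rcases (σ i).eq_empty_or_nonempty with he | hne
      · rw [hM0def, he, Finset.sup_empty] at hcon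
        exact absurd hcon (not_lt_of_ge (zero_le))
      · exact hne
    obtain ⟨x₀, hx₀, hx₀max⟩ := Finset.exists_mem_eq_sup (σ i) hσne
      (fun x => b x (numPlayersOn σ x))
    have hM0V : M0 ∈ V := by
      rw [hM0def, hx₀max, hVdef]
      refine Finset.mem_image.2 ⟨(x₀, numPlayersOn σ x₀), ?_, rfl⟩
      rw [Finset.mem_product]
      exact ⟨Finset.mem_univ _, Finset.mem_range.2 (by have := hnp_le σ x₀; omega)⟩
    have hrnklt : rnk M + 1 ≤ rnk M0 := hrnk_lt M0 M hM0V hcon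
    -- lower bound for the LHS of hP
    have hc0 : ∀ (τ' : N → Finset E) (x : E), c i x (numPlayersOn τ' x)
        = K ^ (rnk (b x (numPlayersOn τ' x))) := by
      intro τ' x
      rw [hcdef]
      dsimp only
      rw [if_neg hαi, min_eq_left (hnp_le τ' x)]
    have hLB : K ^ (rnk M0) ≤ ∑ x ∈ σ i, c i x (numPlayersOn σ x) := by
      have h1 : c i x₀ (numPlayersOn σ x₀) = K ^ (rnk M0) := by
        rw [hc0 σ x₀, hM0def, hx₀max]
      rw [← h1]
      exact Finset.single_le_sum (f := fun x => c i x (numPlayersOn σ x)) (fun x _ => zero_le) hx₀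
    have hUB : ∑ x ∈ T, c i x (numPlayersOn τ x) < K ^ (rnk M0) := by
      have hterm : ∀ x ∈ T, c i x (numPlayersOn τ x) ≤ K ^ (rnk M) := by
        intro x hx
        rw [hc0 τ x]
        refine pow_le_pow_right₀ hK1 (hrnk_mono _ _ ?_)
        rw [hMdef]
        exact Finset.le_sup (f := fun x => b x (numPlayersOn τ x)) hx
      calc ∑ x ∈ T, c i x (numPlayersOn τ x) ≤ T.card • (K ^ (rnk M)) :=
            Finset.sum_le_card_nsmul _ _ _ hterm
        _ = (T.card : NNReal) * K ^ (rnk M) := nsmul_eq_mul _ _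
        _ ≤ (Fintype.card E : NNReal) * K ^ (rnk M) := by
            refine mul_le_mul_of_nonneg_right ?_ (zero_le)
            exact_mod_cast Finset.card_le_univ T
        _ < K * K ^ (rnk M) := by
            refine mul_lt_mul_of_pos_right ?_ (pow_pos (lt_of_lt_of_le zero_lt_one hK1) _)
            rw [hKdef]
            exact_mod_cast Nat.lt_succ_self _
        _ = K ^ (rnk M + 1) := by rw [pow_succ, mul_comm]
        _ ≤ K ^ (rnk M0) := pow_le_pow_right₀ hK1 hrnklt
    rw [hτdef] at hUB
    exact absurd hP (not_le.2 (lt_of_lt_of_le hUB hLB))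
  · -- latency player : α i = 1
    rw [mixedCost, mixedCost, h1, Function.update_self]
    simp only [tsub_self, zero_mul, add_zero, one_mul]
    have hc1 : ∀ (τ' : N → Finset E) (x : E), c i x (numPlayersOn τ' x)
        = ℓ x (numPlayersOn τ' x) := by
      intro τ' x
      rw [hcdef]
      dsimp only
      rw [if_pos h1]
    calc ∑ x ∈ σ i, ℓ x (numPlayersOn σ x)
        = ∑ x ∈ σ i, c i x (numPlayersOn σ x) :=
          Finset.sum_congr rfl (fun x _ => (hc1 σ x).symm)
      _ ≤ ∑ x ∈ T, c i x (numPlayersOn (Function.update σ i T) x) := hP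
      _ = ∑ x ∈ T, ℓ x (numPlayersOn (Function.update σ i T) x) :=
          Finset.sum_congr rfl (fun x _ => hc1 _ x)
end

section
/- Every matroid congestion game with mixed costs whose cost functions have monotone dependence has a pure Nash equilibrium. -/
open Finset

/-- Every matroid congestion game with mixed costs whose cost functions have
monotone dependence (i.e. `b_e = d ∘ ℓ_e` for a common monotonically
nondecreasing `d`) has a pure Nash equilibrium. -/
theorem matroid_congestion_game_mixed_costs_monotone_dependence_has_PNE
    {N E : Type*} [Fintype N] [DecidableEq N] [Fintype E] [DecidableEq E]
    (𝒮 : N → Finset (Finset E)) (hmatroid : ∀ i, IsBaseFamily (𝒮 i))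
    (ℓ b : E → ℕ → NNReal) (hℓ : ∀ e, Monotone (ℓ e)) (hb : ∀ e, Monotone (b e))
    (α : N → NNReal) (hα : ∀ i, α i ≤ 1)
    (hdep : ∃ d : NNReal → NNReal, Monotone d ∧ ∀ e x, b e x = d (ℓ e x)) :
    ∃ σ : N → Finset E, (∀ i, σ i ∈ 𝒮 i) ∧
      ∀ i : N, ∀ S' ∈ 𝒮 i,
        mixedCost ℓ b α σ i ≤ mixedCost ℓ b α (Function.update σ i S') i := by
  classical
  obtain ⟨d, hd, hbd⟩ := hdep
  -- Rosenthal potential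
  set Φ : (N → Finset E) → NNReal :=
    fun σ => ∑ e, ∑ k ∈ Finset.range (numPlayersOn σ e), ℓ e (k + 1) with hΦ
  -- a profile minimizing Φ among valid profiles
  obtain ⟨σ, hσ, hmin⟩ :
      ∃ σ : N → Finset E, (∀ i, σ i ∈ 𝒮 i) ∧
        ∀ τ : N → Finset E, (∀ i, τ i ∈ 𝒮 i) → Φ σ ≤ Φ τ := by
    have hne : ∃ σ : N → Finset E, ∀ i, σ i ∈ 𝒮 i := by
      choose f hf using fun i => (hmatroid i).1
      exact ⟨f, hf⟩
    obtain ⟨σ₀, hσ₀⟩ := hne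
    obtain ⟨σ, hmem, hmin⟩ := Finset.exists_min_image
      (Finset.univ.filter (fun σ : N → Finset E => ∀ i, σ i ∈ 𝒮 i)) Φ
      ⟨σ₀, by simpa using hσ₀⟩
    exact ⟨σ, by simpa using hmem, fun τ hτ => hmin τ (by simpa using hτ)⟩
  refine ⟨σ, hσ, ?_⟩
  intro i S' hS'
  -- count of players other than i on `e`, and induced weight of each resource
  set c : E → ℕ := fun e => (Finset.univ.filter (fun j => j ≠ i ∧ e ∈ σ j)).card with hc
  set w : E → NNReal := fun e => ℓ e (c e + 1) with hw
  have hcount : ∀ (T : Finset E) (e : E),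
      numPlayersOn (Function.update σ i T) e = c e + (if e ∈ T then 1 else 0) := by
    intro T e
    unfold numPlayersOn
    by_cases h : e ∈ T
    · rw [if_pos h]
      have hset : Finset.univ.filter (fun j => e ∈ Function.update σ i T j)
          = insert i (Finset.univ.filter (fun j => j ≠ i ∧ e ∈ σ j)) := by
        ext j
        by_cases hj : j = i <;>
          simp [hj, Function.update_of_ne, h]
      rw [hset, Finset.card_insert_of_notMem (by simp)]
    · rw [if_neg h]
      have hset : Finset.univ.filter (fun j => e ∈ Function.update σ i T j)
          = Finset.univ.filter (fun j => j ≠ i ∧ e ∈ σ j) := by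
        ext j
        by_cases hj : j = i <;>
          simp [hj, Function.update_of_ne, h]
      rw [hset, Nat.add_zero]
  -- the potential of any unilateral deviation of player i
  have hΦT : ∀ T : Finset E,
      Φ (Function.update σ i T) =
        (∑ e, ∑ k ∈ Finset.range (c e), ℓ e (k + 1)) + ∑ e ∈ T, w e := by
    intro T
    have hsplit : ∀ e : E,
        ∑ k ∈ Finset.range (numPlayersOn (Function.update σ i T) e), ℓ e (k + 1)
          = (∑ k ∈ Finset.range (c e), ℓ e (k + 1)) + (if e ∈ T then w e else 0) := by
      intro e
      rw [hcount]
      by_cases h : e ∈ T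
      · simp [h, Finset.sum_range_succ, hw]
      · simp [h]
    rw [hΦ]
    simp only [hsplit]
    rw [Finset.sum_add_distrib]
    congr 1
    simp [Finset.sum_ite_mem]
  -- the cost of any unilateral deviation of player i, in terms of w
  have hcostT : ∀ T : Finset E,
      mixedCost ℓ b α (Function.update σ i T) i =
        α i * (∑ e ∈ T, w e) + (1 - α i) * T.sup (fun e => d (w e)) := by
    intro T
    unfold mixedCost
    rw [Function.update_self]
    congr 1
    · congr 1
      refine Finset.sum_congr rfl fun e he => ?_
      rw [hcount, if_pos he]
    · congr 1
      refine Finset.sup_congr rfl fun e he => ?_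
      rw [hcount, if_pos he, hbd, hw]
  have hupd : Function.update σ i (σ i) = σ := Function.update_eq_self i σ
  have hvalid : ∀ T ∈ 𝒮 i, ∀ j, (Function.update σ i T) j ∈ 𝒮 j := by
    intro T hT j
    by_cases hj : j = i
    · subst hj; simpa using hT
    · simpa [Function.update_of_ne hj] using hσ j
  have hΦσ : Φ σ = (∑ e, ∑ k ∈ Finset.range (c e), ℓ e (k + 1)) + ∑ e ∈ σ i, w e := by
    conv_lhs => rw [← hupd]
    exact hΦT (σ i)
  -- sum part: optimality of the potential
  have hsum : ∑ e ∈ σ i, w e ≤ ∑ e ∈ S', w e := by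
    have h1 := hmin (Function.update σ i S') (hvalid S' hS')
    rw [hΦT S', hΦσ] at h1
    exact le_of_add_le_add_left h1
  -- bottleneck part: every element of σ i is dominated by an element of S'
  have hmax : (σ i).sup (fun e => d (w e)) ≤ S'.sup (fun e => d (w e)) := by
    refine Finset.sup_le fun e he => ?_
    by_cases heS' : e ∈ S'
    · exact Finset.le_sup (f := fun e => d (w e)) heS'
    · obtain ⟨f, hf, hbase⟩ :=
        (hmatroid i).2 (σ i) (hσ i) S' hS' e (Finset.mem_sdiff.mpr ⟨he, heS'⟩)
      obtain ⟨hfS', hfS⟩ := Finset.mem_sdiff.mp hf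
      have hwe : w e ≤ w f := by
        have h1 := hmin (Function.update σ i (insert f ((σ i).erase e)))
          (hvalid _ hbase)
        rw [hΦT, hΦσ] at h1
        have h3 := le_of_add_le_add_left h1
        rw [Finset.sum_insert (fun hmem => hfS (Finset.mem_of_mem_erase hmem)),
          ← Finset.add_sum_erase (σ i) w he] at h3
        exact le_of_add_le_add_right h3
      exact le_trans (hd hwe) (Finset.le_sup (f := fun e => d (w e)) hfS')
  calc mixedCost ℓ b α σ i
      = α i * (∑ e ∈ σ i, w e) + (1 - α i) * (σ i).sup (fun e => d (w e)) := by
        conv_lhs => rw [← hupd]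
        exact hcostT (σ i)
    _ ≤ α i * (∑ e ∈ S', w e) + (1 - α i) * S'.sup (fun e => d (w e)) :=
        add_le_add (mul_le_mul_right hsum _) (mul_le_mul_right hmax _)
    _ = mixedCost ℓ b α (Function.update σ i S') i := (hcostT S').symm
end
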